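/- arXiv:2403.05866 — 4 statements merged into one kernel-verified Lean document; each statement's English description precedes it below -/
import Mathlib

section
/- For every nonnegative integer n, the sum over all integers k of (-1)^k · p̄ₒ(n - k(3k+1)/2) equals (-1)^⌈m/2⌉ if n = m(3m+1)/2 for some integer m, and equals 0 otherwise. Here p̄ₒ(x) = 0 whenever x is negative. -/
/-- Number of overpartitions of `n` into odd parts: a partition of `n` into odd parts
together with a choice of a set of part sizes whose first occurrence is overlined. -/
noncomputable def pbarOdd (n : ℕ) : ℕ :=
  Nat.card {x : Nat.Partition n × Finset ℕ //
    (∀ i ∈ x.1.parts, Odd i) ∧ x.2 ⊆ x.1.parts.toFinset}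
/-- Extension of a function `ℕ → ℕ` to `ℤ`, vanishing at negative arguments. -/
def intExt (f : ℕ → ℕ) (x : ℤ) : ℤ := if 0 ≤ x then f x.toNat else 0

open Finset

attribute [local instance] Classical.propDecidable

/-- pentagonal number as integer -/
def gzaux (k : ℤ) : ℤ := k * (3 * k + 1) / 2

lemma two_gz (k : ℤ) : 2 * gzaux k = k * (3 * k + 1) := by
  have h : (2:ℤ) ∣ k * (3 * k + 1) := by
    rcases Int.even_or_odd k with ⟨t, ht⟩ | ⟨t, ht⟩
    · exact Dvd.dvd.mul_right ⟨t, by omega⟩ _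
    · exact Dvd.dvd.mul_left ⟨3*t+2, by rw [ht]; ring⟩ _
  rw [gzaux, Int.mul_ediv_cancel' h]

lemma gz_nonneg (k : ℤ) : 0 ≤ gzaux k := by
  have h := two_gz k
  nlinarith [sq_nonneg k, sq_nonneg (k+1), sq_nonneg (3*k+1)]

lemma natAbs_le_gz (k : ℤ) : (k.natAbs : ℤ) ≤ gzaux k := by
  have h := two_gz k
  rcases le_or_gt 0 k with hk | hk
  · rw [Int.natAbs_of_nonneg hk]; nlinarith [mul_nonneg hk hk]
  · rw [Int.ofNat_natAbs_of_nonpos (le_of_lt hk)]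
    nlinarith [mul_nonneg (by linarith : (0:ℤ) ≤ -k) (by linarith : (0:ℤ) ≤ -(k+1))]

lemma gz_inj : Function.Injective gzaux := by
  intro j k h
  have h2 : j * (3*j+1) = k * (3*k+1) := by rw [← two_gz, ← two_gz, h]
  have h3 : (j - k) * (3*(j+k) + 1) = 0 := by linear_combination h2
  rcases mul_eq_zero.mp h3 with h4 | h4 <;> omega

def distF (a : ℕ) : Finset (Finset ℕ) :=
  (Finset.range (a+1)).powerset.filter (fun A => A.sum id = a ∧ 0 ∉ A)

lemma mem_distF {a : ℕ} {A : Finset ℕ} : A ∈ distF a ↔ A.sum id = a ∧ 0 ∉ A := by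
  constructor
  · intro h; exact (Finset.mem_filter.mp h).2
  · intro h
    refine Finset.mem_filter.mpr ⟨Finset.mem_powerset.mpr (fun x hx => ?_), h⟩
    have : x ≤ A.sum id := Finset.single_le_sum (fun i _ => Nat.zero_le i) hx
    rw [h.1] at this; exact Finset.mem_range.mpr (by omega)

def oddDistF (c : ℕ) : Finset (Finset ℕ) :=
  (Finset.range (c+1)).powerset.filter (fun A => A.sum id = c ∧ ∀ i ∈ A, Odd i)

lemma mem_oddDistF {c : ℕ} {A : Finset ℕ} :
    A ∈ oddDistF c ↔ A.sum id = c ∧ ∀ i ∈ A, Odd i := by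
  constructor
  · intro h; exact (Finset.mem_filter.mp h).2
  · intro h
    refine Finset.mem_filter.mpr ⟨Finset.mem_powerset.mpr (fun x hx => ?_), h⟩
    have : x ≤ A.sum id := Finset.single_le_sum (fun i _ => Nat.zero_le i) hx
    rw [h.1] at this; exact Finset.mem_range.mpr (by omega)

def msets (d : ℕ) : Finset (Multiset ℕ) :=
  Finset.image Nat.Partition.parts (Finset.univ : Finset (Nat.Partition d))

lemma mem_msets {d : ℕ} {m : Multiset ℕ} :
    m ∈ msets d ↔ m.sum = d ∧ ∀ i ∈ m, 0 < i := by
  constructor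
  · intro h
    obtain ⟨p, -, rfl⟩ := Finset.mem_image.mp h
    exact ⟨p.parts_sum, fun i hi => p.parts_pos hi⟩
  · intro h
    exact Finset.mem_image.mpr ⟨⟨m, fun {i} hi => h.2 i hi, h.1⟩, Finset.mem_univ _, rfl⟩

def oddMs (d : ℕ) : Finset (Multiset ℕ) := (msets d).filter (fun m => ∀ i ∈ m, Odd i)

lemma mem_oddMs {d : ℕ} {m : Multiset ℕ} :
    m ∈ oddMs d ↔ m.sum = d ∧ ∀ i ∈ m, Odd i := by
  rw [oddMs, Finset.mem_filter, mem_msets]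
  constructor
  · rintro ⟨⟨h1, -⟩, h2⟩; exact ⟨h1, h2⟩
  · rintro ⟨h1, h2⟩; exact ⟨⟨h1, fun i hi => (h2 i hi).pos⟩, h2⟩

def pb2 (b : ℕ) : Finset (Finset ℕ × Multiset ℕ) :=
  (Finset.range (b+1)).biUnion (fun c => oddDistF c ×ˢ oddMs (b - c))

lemma mem_pb2 {b : ℕ} {O : Finset ℕ} {M : Multiset ℕ} :
    (O, M) ∈ pb2 b ↔ (∀ i ∈ O, Odd i) ∧ (∀ i ∈ M, Odd i) ∧ O.sum id + M.sum = b := by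
  rw [pb2, Finset.mem_biUnion]
  constructor
  · rintro ⟨c, hc, h⟩
    rw [Finset.mem_product] at h
    obtain ⟨h1, h2⟩ := h
    rw [mem_oddDistF] at h1; rw [mem_oddMs] at h2
    have e1 : O.sum id = c := h1.1
    have e2 : M.sum = b - c := h2.1
    have hc' := Finset.mem_range.mp hc
    exact ⟨h1.2, h2.2, by omega⟩
  · rintro ⟨h1, h2, h3⟩
    refine ⟨O.sum id, Finset.mem_range.mpr (by omega), Finset.mem_product.mpr ⟨?_, ?_⟩⟩
    · exact mem_oddDistF.mpr ⟨rfl, h1⟩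
    · exact mem_oddMs.mpr ⟨show M.sum = b - O.sum id by omega, h2⟩


-- real content below
lemma mem_pb2' {b : ℕ} {y : Finset ℕ × Multiset ℕ} :
    y ∈ pb2 b ↔ (∀ i ∈ y.1, Odd i) ∧ (∀ i ∈ y.2, Odd i) ∧ y.1.sum id + y.2.sum = b := by
  obtain ⟨O, M⟩ := y; exact mem_pb2

lemma val_le_of_subset {S : Finset ℕ} {m : Multiset ℕ} (h : S ⊆ m.toFinset) : S.val ≤ m := by
  rw [Multiset.le_iff_count]
  intro a
  by_cases ha : a ∈ S
  · rw [Multiset.count_eq_one_of_mem S.nodup (Finset.mem_val.mpr ha)]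
    have := h ha; rw [Multiset.mem_toFinset] at this
    exact Multiset.one_le_count_iff_mem.mpr this
  · rw [Multiset.count_eq_zero_of_notMem (fun hc => ha (Finset.mem_val.mp hc))]
    exact Nat.zero_le _

lemma pbarOdd_eq (b : ℕ) : pbarOdd b = (pb2 b).card := by
  rw [pbarOdd, ← Nat.card_eq_finsetCard]
  apply Nat.card_congr
  exact
    { toFun := fun x =>
        ⟨(x.1.2, x.1.1.parts - x.1.2.val), by
          obtain ⟨⟨p, S⟩, hodd, hsub⟩ := x
          have hle : S.val ≤ p.parts := val_le_of_subset hsub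
          refine mem_pb2.mpr ⟨?_, ?_, ?_⟩
          · intro i hi
            exact hodd i (by have := hsub hi; rwa [Multiset.mem_toFinset] at this)
          · intro i hi
            exact hodd i (Multiset.mem_of_le (Multiset.sub_le_self _ _) hi)
          · have h1 : S.val + (p.parts - S.val) = p.parts := add_tsub_cancel_of_le hle
            have h2 := congrArg Multiset.sum h1
            rw [Multiset.sum_add, p.parts_sum] at h2
            rw [← Finset.sum_val]
            exact h2⟩,
      invFun := fun y =>
        ⟨(⟨y.1.1.val + y.1.2, by
            intro i hi
            have hy := mem_pb2'.mp y.2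
            rcases Multiset.mem_add.mp hi with h | h
            · exact (hy.1 i (Finset.mem_val.mp h)).pos
            · exact (hy.2.1 i h).pos, by
            have hy := mem_pb2'.mp y.2
            rw [Multiset.sum_add, Finset.sum_val]
            exact hy.2.2⟩, y.1.1), by
          have hy := mem_pb2'.mp y.2
          constructor
          · intro i hi
            rcases Multiset.mem_add.mp hi with h | h
            · exact hy.1 i (Finset.mem_val.mp h)
            · exact hy.2.1 i h
          · intro a ha
            rw [Multiset.mem_toFinset]
            exact Multiset.mem_add.mpr (Or.inl (Finset.mem_val.mpr ha))⟩,
      left_inv := by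
        rintro ⟨⟨p, S⟩, hodd, hsub⟩
        apply Subtype.ext
        refine Prod.ext ?_ rfl
        apply Nat.Partition.ext
        exact add_tsub_cancel_of_le (val_le_of_subset hsub),
      right_inv := by
        rintro ⟨⟨O, M⟩, hy⟩
        apply Subtype.ext
        refine Prod.ext rfl ?_
        exact add_tsub_cancel_left _ _ }

def wt (A : Finset ℕ) : ℤ := (-1) ^ A.card
noncomputable def dsum (a : ℕ) : ℤ := ∑ A ∈ distF a, wt A

-- max/min helpers
def mx (A : Finset ℕ) : ℕ := WithBot.unbotD 0 A.max
def mn (A : Finset ℕ) : ℕ := WithTop.untopD 0 A.min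

lemma mx_eq_max' {A : Finset ℕ} (h : A.Nonempty) : mx A = A.max' h := by
  rw [mx, ← Finset.coe_max' h]; rfl

lemma mn_eq_min' {A : Finset ℕ} (h : A.Nonempty) : mn A = A.min' h := by
  rw [mn, ← Finset.coe_min' h]; rfl

lemma mx_mem {A : Finset ℕ} (h : A.Nonempty) : mx A ∈ A := by
  rw [mx_eq_max' h]; exact A.max'_mem h

lemma mn_mem {A : Finset ℕ} (h : A.Nonempty) : mn A ∈ A := by
  rw [mn_eq_min' h]; exact A.min'_mem h

lemma le_mx {A : Finset ℕ} {x : ℕ} (hx : x ∈ A) : x ≤ mx A := by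
  rw [mx_eq_max' ⟨x, hx⟩]; exact A.le_max' x hx

lemma mn_le {A : Finset ℕ} {x : ℕ} (hx : x ∈ A) : mn A ≤ x := by
  rw [mn_eq_min' ⟨x, hx⟩]; exact A.min'_le x hx

lemma mx_eq {A : Finset ℕ} {b : ℕ} (hb : b ∈ A) (hub : ∀ x ∈ A, x ≤ b) : mx A = b :=
  le_antisymm (hub _ (mx_mem ⟨b, hb⟩)) (le_mx hb)

lemma mn_eq {A : Finset ℕ} {b : ℕ} (hb : b ∈ A) (hlb : ∀ x ∈ A, b ≤ x) : mn A = b :=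
  le_antisymm (mn_le hb) (hlb _ (mn_mem ⟨b, hb⟩))

-- triples
def T3 (n : ℕ) : Finset (Finset ℕ × Finset ℕ × Multiset ℕ) :=
  (Finset.range (n+1)).biUnion fun a => distF a ×ˢ pb2 (n - a)

lemma mem_T3 {n : ℕ} {t : Finset ℕ × Finset ℕ × Multiset ℕ} :
    t ∈ T3 n ↔ 0 ∉ t.1 ∧ (∀ i ∈ t.2.1, Odd i) ∧ (∀ i ∈ t.2.2, Odd i) ∧
      t.1.sum id + t.2.1.sum id + t.2.2.sum = n := by
  rw [T3, Finset.mem_biUnion]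
  constructor
  · rintro ⟨a, ha, h⟩
    rw [Finset.mem_product] at h
    have h1 := mem_distF.mp h.1
    have h2 := mem_pb2'.mp h.2
    have ha' := Finset.mem_range.mp ha
    exact ⟨h1.2, h2.1, h2.2.1, by omega⟩
  · rintro ⟨h0, h1, h2, h3⟩
    refine ⟨t.1.sum id, Finset.mem_range.mpr (by omega), Finset.mem_product.mpr ⟨?_, ?_⟩⟩
    · exact mem_distF.mpr ⟨rfl, h0⟩
    · exact mem_pb2'.mpr ⟨h1, h2, by omega⟩

lemma conv_eq_T3 (n : ℕ) :
    ∑ a ∈ Finset.range (n+1), dsum a * ((pb2 (n-a)).card : ℤ) = ∑ t ∈ T3 n, wt t.1 := by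
  rw [T3, Finset.sum_biUnion ?disj]
  case disj =>
    intro a ha b hb hab
    rw [Function.onFun, Finset.disjoint_left]
    intro t ht ht'
    rw [Finset.mem_product] at ht ht'
    have h1 := (mem_distF.mp ht.1).1
    have h2 := (mem_distF.mp ht'.1).1
    exact hab (by omega)
  refine Finset.sum_congr rfl fun a _ => ?_
  rw [Finset.sum_product]
  have : ∀ A ∈ distF a, (∑ _y ∈ pb2 (n-a), wt A) = ((pb2 (n-a)).card : ℤ) * wt A := by
    intro A _
    rw [Finset.sum_const, nsmul_eq_mul]
  rw [Finset.sum_congr rfl this, ← Finset.mul_sum, mul_comm]; rfl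

-- sign cancellation helpers
lemma sign_cancel_pred {c : ℕ} (hc : 0 < c) : (-1:ℤ)^(c-1) + (-1)^c = 0 := by
  obtain ⟨k, rfl⟩ := Nat.exists_eq_add_of_lt hc
  simp only [Nat.add_sub_cancel, zero_add]
  rw [pow_succ]
  ring

lemma sign_cancel_succ (c : ℕ) : (-1:ℤ)^(c+1) + (-1)^c = 0 := by
  rw [pow_succ]; ring

def umax (t : Finset ℕ × Finset ℕ × Multiset ℕ) : ℕ :=
  mx ((t.1.filter (fun i => Odd i)) ∪ t.2.2.toFinset)

noncomputable def tog (t : Finset ℕ × Finset ℕ × Multiset ℕ) :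
    Finset ℕ × Finset ℕ × Multiset ℕ :=
  if umax t ∈ t.1 then (t.1.erase (umax t), t.2.1, umax t ::ₘ t.2.2)
  else (insert (umax t) t.1, t.2.1, t.2.2.erase (umax t))

lemma T3_invol (n : ℕ) : ∑ t ∈ T3 n, wt t.1 =
    ∑ t ∈ (T3 n).filter (fun t => t.1.filter (fun i => Odd i) = ∅ ∧ t.2.2 = 0), wt t.1 := by
  rw [← Finset.sum_filter_add_sum_filter_not (T3 n)
    (fun t => t.1.filter (fun i => Odd i) = ∅ ∧ t.2.2 = 0) (fun t => wt t.1)]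
  have key : ∀ t ∈ (T3 n).filter (fun t => ¬(t.1.filter (fun i => Odd i) = ∅ ∧ t.2.2 = 0)),
      (t ∈ T3 n ∧ ¬(t.1.filter (fun i => Odd i) = ∅ ∧ t.2.2 = 0)) := by
    intro t ht; exact Finset.mem_filter.mp ht
  -- basic facts about umax on the relevant set
  have hU : ∀ (δ O : Finset ℕ) (M : Multiset ℕ), (δ, O, M) ∈ T3 n →
      ¬(δ.filter (fun i => Odd i) = ∅ ∧ M = 0) →
      (umax (δ, O, M) ∈ δ.filter (fun i => Odd i) ∪ M.toFinset ∧
       (∀ x ∈ δ.filter (fun i => Odd i) ∪ M.toFinset, x ≤ umax (δ, O, M)) ∧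
       Odd (umax (δ, O, M))) := by
    intro δ O M hmem hne
    have hmem' := mem_T3.mp hmem
    have hnon : ((δ.filter (fun i => Odd i)) ∪ M.toFinset).Nonempty := by
      rcases Finset.eq_empty_or_nonempty (δ.filter (fun i => Odd i)) with h | h
      · have hM : M ≠ 0 := fun h0 => hne ⟨h, h0⟩
        obtain ⟨x, hx⟩ := Multiset.toFinset_nonempty.mpr hM
        exact ⟨x, Finset.mem_union_right _ hx⟩
      · obtain ⟨x, hx⟩ := h
        exact ⟨x, Finset.mem_union_left _ hx⟩
    have h1 : umax (δ, O, M) ∈ (δ.filter (fun i => Odd i)) ∪ M.toFinset := mx_mem hnon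
    refine ⟨h1, fun x hx => le_mx hx, ?_⟩
    rcases Finset.mem_union.mp h1 with h | h
    · exact (Finset.mem_filter.mp h).2
    · exact hmem'.2.2.1 _ (Multiset.mem_toFinset.mp h)
  have h0 : ∑ t ∈ (T3 n).filter (fun t => ¬(t.1.filter (fun i => Odd i) = ∅ ∧ t.2.2 = 0)), wt t.1 = 0 := by
    refine Finset.sum_involution (fun t _ => tog t) ?cancel ?gne ?gmem ?ginv
    case cancel =>
      rintro ⟨δ, O, M⟩ ht
      obtain ⟨hmem, hne⟩ := key _ ht
      simp only [tog]
      by_cases hu : umax (δ, O, M) ∈ δ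
      · rw [if_pos hu]
        have hc : 0 < δ.card := Finset.card_pos.mpr ⟨_, hu⟩
        simp only [wt, Finset.card_erase_of_mem hu]
        rw [add_comm]
        exact sign_cancel_pred hc
      · rw [if_neg hu]
        simp only [wt, Finset.card_insert_of_notMem hu]
        rw [add_comm]
        exact sign_cancel_succ _
    case gne =>
      rintro ⟨δ, O, M⟩ ht -
      obtain ⟨hmem, hne⟩ := key _ ht
      simp only [tog]
      by_cases hu : umax (δ, O, M) ∈ δ
      · rw [if_pos hu]
        intro heq
        have h1 : δ.erase (umax (δ, O, M)) = δ := congrArg Prod.fst heq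
        exact absurd (show umax (δ, O, M) ∈ δ.erase (umax (δ, O, M)) by rw [h1]; exact hu)
          (Finset.notMem_erase _ _)
      · rw [if_neg hu]
        intro heq
        have h1 : insert (umax (δ, O, M)) δ = δ := congrArg Prod.fst heq
        exact absurd (congrArg Finset.card h1)
          (by rw [Finset.card_insert_of_notMem hu]; omega)
    case gmem =>
      rintro ⟨δ, O, M⟩ ht
      obtain ⟨hmem, hne⟩ := key _ ht
      obtain ⟨hm1, hm2, hm3⟩ := hU δ O M hmem hne
      have hmem' := mem_T3.mp hmem
      simp only [tog]
      by_cases hu : umax (δ, O, M) ∈ δ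
      · rw [if_pos hu]
        refine Finset.mem_filter.mpr ⟨mem_T3.mpr ⟨?_, hmem'.2.1, ?_, ?_⟩, ?_⟩
        · exact fun h => hmem'.1 (Finset.mem_of_mem_erase h)
        · intro i hi
          rcases Multiset.mem_cons.mp hi with rfl | h
          · exact hm3
          · exact hmem'.2.2.1 i h
        · have e1 : (δ.erase (umax (δ, O, M))).sum id + umax (δ, O, M) = δ.sum id :=
            Finset.sum_erase_add _ _ hu
          have e2 : (umax (δ, O, M) ::ₘ M).sum = umax (δ, O, M) + M.sum := Multiset.sum_cons _ _
          have hsum : δ.sum id + O.sum id + M.sum = n := hmem'.2.2.2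
          show (δ.erase (umax (δ, O, M))).sum id + O.sum id + (umax (δ, O, M) ::ₘ M).sum = n
          omega
        · simp only
          intro hcontra
          exact Multiset.cons_ne_zero hcontra.2
      · rw [if_neg hu]
        have huM : umax (δ, O, M) ∈ M := by
          rcases Finset.mem_union.mp hm1 with h | h
          · exact absurd (Finset.mem_of_mem_filter _ h) hu
          · exact Multiset.mem_toFinset.mp h
        refine Finset.mem_filter.mpr ⟨mem_T3.mpr ⟨?_, hmem'.2.1, ?_, ?_⟩, ?_⟩
        · intro h
          rcases Finset.mem_insert.mp h with h | h
          · rw [← h] at hm3; exact absurd hm3 (by decide)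
          · exact hmem'.1 h
        · exact fun i hi => hmem'.2.2.1 i (Multiset.mem_of_mem_erase hi)
        · have e1 : (insert (umax (δ, O, M)) δ).sum id = umax (δ, O, M) + δ.sum id :=
            Finset.sum_insert hu
          have e2 : (umax (δ, O, M) ::ₘ M.erase (umax (δ, O, M))).sum = M.sum := by
            rw [Multiset.cons_erase huM]
          rw [Multiset.sum_cons] at e2
          have hsum : δ.sum id + O.sum id + M.sum = n := hmem'.2.2.2
          show (insert (umax (δ, O, M)) δ).sum id + O.sum id + (M.erase (umax (δ, O, M))).sum = n
          omega
        · simp only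
          intro hcontra
          have : umax (δ, O, M) ∈ (insert (umax (δ, O, M)) δ).filter (fun i => Odd i) :=
            Finset.mem_filter.mpr ⟨Finset.mem_insert_self _ _, hm3⟩
          rw [hcontra.1] at this
          exact absurd this (Finset.notMem_empty _)
    case ginv =>
      rintro ⟨δ, O, M⟩ ht
      obtain ⟨hmem, hne⟩ := key _ ht
      obtain ⟨hm1, hm2, hm3⟩ := hU δ O M hmem hne
      simp only [tog]
      by_cases hu : umax (δ, O, M) ∈ δ
      · rw [if_pos hu]
        set u := umax (δ, O, M) with hudef
        -- new umax equals u
        have hnewmax : umax (δ.erase u, O, u ::ₘ M) = u := by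
          rw [umax]
          apply mx_eq
          · exact Finset.mem_union_right _ (Multiset.mem_toFinset.mpr (Multiset.mem_cons_self _ _))
          · intro x hx
            rcases Finset.mem_union.mp hx with h | h
            · have : x ∈ δ.filter (fun i => Odd i) := by
                rw [Finset.filter_erase] at h
                exact Finset.mem_of_mem_erase h
              exact hm2 x (Finset.mem_union_left _ this)
            · rcases Multiset.mem_cons.mp (Multiset.mem_toFinset.mp h) with rfl | h'
              · exact le_refl _
              · exact hm2 x (Finset.mem_union_right _ (Multiset.mem_toFinset.mpr h'))
        simp only [tog, hnewmax]
        rw [if_neg (Finset.notMem_erase _ _)]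
        rw [Finset.insert_erase hu, Multiset.erase_cons_head]
      · rw [if_neg hu]
        set u := umax (δ, O, M) with hudef
        have huM : u ∈ M := by
          rcases Finset.mem_union.mp hm1 with h | h
          · exact absurd (Finset.mem_of_mem_filter _ h) hu
          · exact Multiset.mem_toFinset.mp h
        have hnewmax : umax (insert u δ, O, M.erase u) = u := by
          rw [umax]
          apply mx_eq
          · refine Finset.mem_union_left _ (Finset.mem_filter.mpr ⟨Finset.mem_insert_self _ _, hm3⟩)
          · intro x hx
            rcases Finset.mem_union.mp hx with h | h
            · rw [Finset.filter_insert, if_pos hm3] at h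
              rcases Finset.mem_insert.mp h with rfl | h'
              · exact le_refl _
              · exact hm2 x (Finset.mem_union_left _ h')
            · exact hm2 x (Finset.mem_union_right _
                (Multiset.mem_toFinset.mpr (Multiset.mem_of_mem_erase (Multiset.mem_toFinset.mp h))))
        simp only [tog, hnewmax]
        rw [if_pos (Finset.mem_insert_self _ _)]
        rw [Finset.erase_insert hu, Multiset.cons_erase huM]
  rw [h0, add_zero]

lemma pow_neg_one_par {a b : ℕ} (h : a % 2 = b % 2) : (-1:ℤ)^a = (-1)^b := by
  rcases Nat.even_or_odd a with ha | ha
  · have hb : Even b := by rw [Nat.even_iff] at *; omega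
    rw [ha.neg_one_pow, hb.neg_one_pow]
  · have hb : Odd b := by rw [Nat.odd_iff] at *; omega
    rw [ha.neg_one_pow, hb.neg_one_pow]

lemma fix_eq (n : ℕ) :
    ∑ t ∈ (T3 n).filter (fun t => t.1.filter (fun i => Odd i) = ∅ ∧ t.2.2 = 0), wt t.1 =
    ∑ A ∈ distF n, (-1 : ℤ)^((A.filter (fun i => ¬ Odd i)).card) := by
  refine Finset.sum_nbij' (fun t => t.1 ∪ t.2.1)
    (fun A => (A.filter (fun i => ¬ Odd i), A.filter (fun i => Odd i), (0 : Multiset ℕ)))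
    ?hi ?hj ?hji ?hij ?hwt
  case hi =>
    rintro ⟨δ, O, M⟩ ht
    obtain ⟨hmem, hfix⟩ := Finset.mem_filter.mp ht
    have hmem' := mem_T3.mp hmem
    have hδ : ∀ i ∈ δ, ¬ Odd i := by
      intro i hi hodd
      have : i ∈ δ.filter (fun i => Odd i) := Finset.mem_filter.mpr ⟨hi, hodd⟩
      rw [hfix.1] at this
      exact absurd this (Finset.notMem_empty _)
    have hdisj : Disjoint δ O := by
      rw [Finset.disjoint_left]
      intro i hi hi'
      exact hδ i hi (hmem'.2.1 i hi')
    refine mem_distF.mpr ⟨?_, ?_⟩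
    · rw [Finset.sum_union hdisj]
      have hsum : δ.sum id + O.sum id + M.sum = n := hmem'.2.2.2
      have hM : M = 0 := hfix.2
      rw [hM] at hsum
      simpa using hsum
    · intro h
      rcases Finset.mem_union.mp h with h | h
      · exact hmem'.1 h
      · exact absurd (hmem'.2.1 0 h) (by decide)
  case hj =>
    intro A hA
    obtain ⟨hsum, h0⟩ := mem_distF.mp hA
    refine Finset.mem_filter.mpr ⟨mem_T3.mpr ⟨?_, ?_, ?_, ?_⟩, ?_, rfl⟩
    · exact fun h => h0 (Finset.mem_of_mem_filter _ h)
    · exact fun i hi => (Finset.mem_filter.mp hi).2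
    · intro i hi; exact absurd hi (Multiset.notMem_zero _)
    · show (A.filter (fun i => ¬ Odd i)).sum id + (A.filter (fun i => Odd i)).sum id
        + (0 : Multiset ℕ).sum = n
      have := Finset.sum_union (f := id) (Finset.disjoint_filter_filter_not A A (fun i => Odd i))
      rw [Finset.filter_union_filter_not_eq (fun i => Odd i) A] at this
      rw [Multiset.sum_zero, add_zero, add_comm, ← this, hsum]
    · show (A.filter (fun i => ¬ Odd i)).filter (fun i => Odd i) = ∅
      rw [Finset.filter_filter]
      apply Finset.filter_eq_empty_iff.mpr
      intro x _
      tauto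
  case hji =>
    rintro ⟨δ, O, M⟩ ht
    obtain ⟨hmem, hfix⟩ := Finset.mem_filter.mp ht
    have hmem' := mem_T3.mp hmem
    have hδ : ∀ i ∈ δ, ¬ Odd i := by
      intro i hi hodd
      have : i ∈ δ.filter (fun i => Odd i) := Finset.mem_filter.mpr ⟨hi, hodd⟩
      rw [hfix.1] at this
      exact absurd this (Finset.notMem_empty _)
    have e1 : (δ ∪ O).filter (fun i => ¬ Odd i) = δ := by
      rw [Finset.filter_union, Finset.filter_eq_self.mpr hδ,
        Finset.filter_eq_empty_iff.mpr (fun x hx h => h (hmem'.2.1 x hx)), Finset.union_empty]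
    have e2 : (δ ∪ O).filter (fun i => Odd i) = O := by
      rw [Finset.filter_union, Finset.filter_eq_empty_iff.mpr (fun x hx => hδ x hx),
        Finset.filter_eq_self.mpr hmem'.2.1, Finset.empty_union]
    have e3 : M = 0 := hfix.2
    simp only [e1, e2, e3]
  case hij =>
    intro A hA
    simp only
    rw [Finset.union_comm, Finset.filter_union_filter_not_eq (fun i => Odd i) A]
  case hwt =>
    rintro ⟨δ, O, M⟩ ht
    obtain ⟨hmem, hfix⟩ := Finset.mem_filter.mp ht
    have hmem' := mem_T3.mp hmem
    have hδ : ∀ i ∈ δ, ¬ Odd i := by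
      intro i hi hodd
      have : i ∈ δ.filter (fun i => Odd i) := Finset.mem_filter.mpr ⟨hi, hodd⟩
      rw [hfix.1] at this
      exact absurd this (Finset.notMem_empty _)
    have e1 : (δ ∪ O).filter (fun i => ¬ Odd i) = δ := by
      rw [Finset.filter_union, Finset.filter_eq_self.mpr hδ,
        Finset.filter_eq_empty_iff.mpr (fun x hx h => h (hmem'.2.1 x hx)), Finset.union_empty]
    show wt δ = (-1 : ℤ)^(((δ ∪ O).filter (fun i => ¬ Odd i)).card)
    rw [e1]; rfl

lemma parity_step (n : ℕ) :
    ∑ A ∈ distF n, (-1 : ℤ)^((A.filter (fun i => ¬ Odd i)).card) = (-1)^n * dsum n := by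
  rw [dsum, Finset.mul_sum]
  refine Finset.sum_congr rfl fun A hA => ?_
  obtain ⟨hsum, h0⟩ := mem_distF.mp hA
  have hcard : (A.filter (fun i => Odd i)).card + (A.filter (fun i => ¬ Odd i)).card = A.card :=
    Finset.card_filter_add_card_filter_not _
  have hpar : n % 2 = (A.filter (fun i => Odd i)).card % 2 := by
    have h1 : A.sum id % 2 = (∑ i ∈ A, i % 2) % 2 := by
      rw [Finset.sum_nat_mod]; rfl
    have h2 : ∑ i ∈ A, i % 2 = (A.filter (fun i => Odd i)).card := by
      rw [← Finset.sum_filter_add_sum_filter_not A (fun i => Odd i) (fun i => i % 2)]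
      have e1 : ∑ i ∈ A.filter (fun i => Odd i), i % 2 = (A.filter (fun i => Odd i)).card := by
        rw [Finset.sum_congr rfl (fun i hi => Nat.odd_iff.mp (Finset.mem_filter.mp hi).2)]
        simp
      have e2 : ∑ i ∈ A.filter (fun i => ¬ Odd i), i % 2 = 0 := by
        rw [Finset.sum_congr rfl (fun i hi =>
          Nat.even_iff.mp (Nat.not_odd_iff_even.mp (Finset.mem_filter.mp hi).2))]
        simp
      rw [e1, e2, add_zero]
    rw [← hsum, h1, h2]
  show (-1:ℤ)^((A.filter (fun i => ¬ Odd i)).card) = (-1)^n * (-1)^A.card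
  rw [← pow_add]
  exact pow_neg_one_par (by omega)

-- ============ Franklin's involution ============

noncomputable def sig (A : Finset ℕ) : ℕ :=
  Nat.find (p := fun t => mx A - t ∉ A ∨ mx A < t) ⟨mx A + 1, Or.inr (Nat.lt_succ_self _)⟩

noncomputable def fr (A : Finset ℕ) : Finset ℕ :=
  if mn A ≤ sig A then insert (mx A + 1) ((A.erase (mn A)).erase (mx A - mn A + 1))
  else insert (sig A) (insert (mx A - sig A) (A.erase (mx A)))

def isStair (A : Finset ℕ) : Prop :=
  ∃ ℓ : ℕ, A = Finset.Ico ℓ (2*ℓ) ∨ A = Finset.Ico (ℓ+1) (2*ℓ+1)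

noncomputable def stairF (n : ℕ) : Finset (Finset ℕ) := (distF n).filter isStair

lemma sig_eq {A : Finset ℕ} {t : ℕ} (h1 : mx A - t ∉ A ∨ mx A < t)
    (h2 : ∀ i < t, mx A - i ∈ A ∧ ¬ (mx A < i)) : sig A = t := by
  rw [sig]
  exact (Nat.find_eq_iff _).mpr ⟨h1, fun i hi hor => hor.elim (fun h => h (h2 i hi).1)
    (fun h => (h2 i hi).2 h)⟩

lemma le_sig {A : Finset ℕ} {t : ℕ} (h : ∀ i < t, mx A - i ∈ A ∧ ¬ (mx A < i)) : t ≤ sig A := by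
  rw [sig]
  exact (Nat.le_find_iff _ _).mpr fun i hi hor => hor.elim (fun h' => h' (h i hi).1)
    (fun h' => (h i hi).2 h')

lemma sig_le_mx {A : Finset ℕ} (h0 : 0 ∉ A) : sig A ≤ mx A :=
  Nat.find_le (Or.inl (by rw [Nat.sub_self]; exact h0))

lemma sig_stair {A : Finset ℕ} (h0 : 0 ∉ A) {i : ℕ} (hi : i < sig A) : mx A - i ∈ A := by
  have hmin : ¬ (mx A - i ∉ A ∨ mx A < i) := Nat.find_min (p := fun t => mx A - t ∉ A ∨ mx A < t)
    ⟨mx A + 1, Or.inr (Nat.lt_succ_self _)⟩ (show i < sig A from hi)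
  push_neg at hmin
  exact hmin.1

lemma sig_not {A : Finset ℕ} (h0 : 0 ∉ A) : mx A - sig A ∉ A := by
  have hspec : mx A - sig A ∉ A ∨ mx A < sig A := Nat.find_spec (p := fun t => mx A - t ∉ A ∨ mx A < t)
    ⟨mx A + 1, Or.inr (Nat.lt_succ_self _)⟩
  rcases hspec with h | h
  · exact h
  · exact absurd h (by have := sig_le_mx h0; omega)

lemma sig_pos {A : Finset ℕ} (hne : A.Nonempty) (h0 : 0 ∉ A) : 0 < sig A := by
  rcases Nat.eq_zero_or_pos (sig A) with h | h
  · have := sig_not h0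
    rw [h, Nat.sub_zero] at this
    exact absurd (mx_mem hne) this
  · exact h

lemma mx_Ico {a b : ℕ} (h : a < b) : mx (Finset.Ico a b) = b - 1 :=
  mx_eq (Finset.mem_Ico.mpr ⟨by omega, by omega⟩)
    (fun x hx => by have := Finset.mem_Ico.mp hx; omega)

lemma mn_Ico {a b : ℕ} (h : a < b) : mn (Finset.Ico a b) = a :=
  mn_eq (Finset.mem_Ico.mpr ⟨by omega, by omega⟩)
    (fun x hx => by have := Finset.mem_Ico.mp hx; omega)

lemma sig_Ico1 {ℓ : ℕ} (h : 0 < ℓ) : sig (Finset.Ico ℓ (2*ℓ)) = ℓ := by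
  have hmx : mx (Finset.Ico ℓ (2*ℓ)) = 2*ℓ - 1 := mx_Ico (by omega)
  refine sig_eq (Or.inl ?_) ?_
  · rw [hmx]
    intro hmem
    have := Finset.mem_Ico.mp hmem
    omega
  · intro i hi
    rw [hmx]
    exact ⟨Finset.mem_Ico.mpr ⟨by omega, by omega⟩, by omega⟩

lemma sig_Ico2 {ℓ : ℕ} (h : 0 < ℓ) : sig (Finset.Ico (ℓ+1) (2*ℓ+1)) = ℓ := by
  have hmx : mx (Finset.Ico (ℓ+1) (2*ℓ+1)) = 2*ℓ := by
    have := mx_Ico (a := ℓ+1) (b := 2*ℓ+1) (by omega)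
    omega
  refine sig_eq (Or.inl ?_) ?_
  · rw [hmx]
    intro hmem
    have := Finset.mem_Ico.mp hmem
    omega
  · intro i hi
    rw [hmx]
    exact ⟨Finset.mem_Ico.mpr ⟨by omega, by omega⟩, by omega⟩

lemma case1_main {A : Finset ℕ} (hne : A.Nonempty) (h0 : 0 ∉ A)
    (hc : mn A ≤ sig A) (hns : ¬ isStair A) :
    0 ∉ fr A ∧ (fr A).sum id = A.sum id ∧ (fr A).card + 1 = A.card ∧ ¬ isStair (fr A) ∧
      fr (fr A) = A := by
  have hsM : mn A ≤ mx A := mn_le (mx_mem hne)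
  have hs1 : 0 < mn A := Nat.pos_of_ne_zero (fun h => h0 (h ▸ mn_mem hne))
  have hσM : sig A ≤ mx A := sig_le_mx h0
  have hsmem : mn A ∈ A := mn_mem hne
  have hMmem : mx A ∈ A := mx_mem hne
  have hKmem : mx A - mn A + 1 ∈ A := by
    have h1 : mn A - 1 < sig A := by omega
    have h2 := sig_stair h0 h1
    have h3 : mx A - (mn A - 1) = mx A - mn A + 1 := by omega
    rwa [h3] at h2
  have hsK : mn A ≤ mx A - mn A + 1 := mn_le hKmem
  have hstair : mn A = mx A - mn A + 1 → A = Finset.Ico (mn A) (2 * mn A) := by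
    intro heq
    apply Finset.ext
    intro x
    rw [Finset.mem_Ico]
    constructor
    · intro hx
      have h1 := mn_le hx
      have h2 := le_mx hx
      constructor
      · exact h1
      · omega
    · intro hx
      have hi : mx A - x < sig A := by omega
      have h2 := sig_stair h0 hi
      have h3 : mx A - (mx A - x) = x := by omega
      rwa [h3] at h2
  have hsKne : mn A ≠ mx A - mn A + 1 := fun h => hns ⟨mn A, Or.inl (hstair h)⟩
  have hsKlt : mn A < mx A - mn A + 1 := lt_of_le_of_ne hsK hsKne
  have hMA : mx A + 1 ∉ A := fun h => by have := le_mx h; omega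
  have hBdef : fr A = insert (mx A + 1) ((A.erase (mn A)).erase (mx A - mn A + 1)) := by
    rw [fr, if_pos hc]
  set M := mx A with hMdef
  set s := mn A with hsdef
  set K := M - s + 1 with hKdef
  set B := insert (M + 1) ((A.erase s).erase K) with hB
  have hKes : K ∈ A.erase s := Finset.mem_erase.mpr ⟨Ne.symm hsKne, hKmem⟩
  have hM1notin : (M+1) ∉ (A.erase s).erase K :=
    fun h => hMA (Finset.mem_of_mem_erase (Finset.mem_of_mem_erase h))
  have hmemB : ∀ x, x ∈ B ↔ x = M + 1 ∨ (x ∈ A ∧ x ≠ s ∧ x ≠ K) := by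
    intro x
    rw [hB]
    simp only [Finset.mem_insert, Finset.mem_erase]
    tauto
  have h0B : 0 ∉ B := by
    intro h
    rcases (hmemB 0).mp h with h | h
    · omega
    · exact h0 h.1
  have hsumB : B.sum id = A.sum id := by
    have e1 : B.sum id = (M+1) + ((A.erase s).erase K).sum id := Finset.sum_insert hM1notin
    have e2 : ((A.erase s).erase K).sum id + K = (A.erase s).sum id :=
      Finset.sum_erase_add _ _ hKes
    have e3 : (A.erase s).sum id + s = A.sum id := Finset.sum_erase_add _ _ hsmem
    have : M + 1 = s + K := by omega
    omega
  have hcard2 : 1 < A.card := Finset.one_lt_card.mpr ⟨s, hsmem, K, hKmem, hsKne⟩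
  have hcardB : B.card + 1 = A.card := by
    rw [hB, Finset.card_insert_of_notMem hM1notin, Finset.card_erase_of_mem hKes,
      Finset.card_erase_of_mem hsmem]
    omega
  have hBne : B.Nonempty := ⟨M+1, Finset.mem_insert_self _ _⟩
  have hmxB : mx B = M + 1 := by
    apply mx_eq (Finset.mem_insert_self _ _)
    intro x hx
    rcases (hmemB x).mp hx with h | h
    · omega
    · have := le_mx h.1; omega
  have hltB : ∀ x ∈ B, s < x := by
    intro x hx
    rcases (hmemB x).mp hx with h | h
    · omega
    · have := mn_le h.1
      rcases h with ⟨_, h2, _⟩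
      omega
  have hmnB : s < mn B := hltB _ (mn_mem hBne)
  have hsigB : sig B = s := by
    apply sig_eq
    · left
      rw [hmxB]
      have hKM : M + 1 - s = K := by omega
      rw [hKM]
      intro h
      rcases (hmemB K).mp h with h | h
      · omega
      · exact h.2.2 rfl
    · intro i hi
      rw [hmxB]
      refine ⟨?_, by omega⟩
      rcases Nat.eq_zero_or_pos i with rfl | hipos
      · rw [Nat.sub_zero]; exact Finset.mem_insert_self _ _
      · have h1 : i - 1 < sig A := by omega
        have h2 := sig_stair h0 h1
        have h3 : M - (i - 1) = M + 1 - i := by omega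
        rw [h3] at h2
        refine (hmemB _).mpr (Or.inr ⟨h2, by omega, by omega⟩)
  have hfrB : fr B = A := by
    rw [fr, if_neg (by omega)]
    rw [hsigB, hmxB]
    have e1 : M + 1 - s = K := by omega
    rw [e1]
    rw [Finset.erase_insert hM1notin, Finset.insert_erase hKes, Finset.insert_erase hsmem]
  have hnsB : ¬ isStair B := by
    rintro ⟨ℓ, h1 | h2⟩
    · have hM1 : M + 1 ∈ Finset.Ico ℓ (2*ℓ) := h1 ▸ Finset.mem_insert_self _ _
      have hℓpos : 0 < ℓ := by have := Finset.mem_Ico.mp hM1; omega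
      have e1 : sig B = ℓ := by rw [h1]; exact sig_Ico1 hℓpos
      have e2 : mn B = ℓ := by rw [h1]; exact mn_Ico (by omega)
      omega
    · have hM1 : M + 1 ∈ Finset.Ico (ℓ+1) (2*ℓ+1) := h2 ▸ Finset.mem_insert_self _ _
      have hℓpos : 0 < ℓ := by have := Finset.mem_Ico.mp hM1; omega
      have e1 : sig B = ℓ := by rw [h2]; exact sig_Ico2 hℓpos
      have e2 : mx B = 2*ℓ := by rw [h2]; have := mx_Ico (a := ℓ+1) (b := 2*ℓ+1) (by omega); omega
      omega
  rw [hBdef]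
  exact ⟨h0B, hsumB, hcardB, hnsB, hfrB⟩

lemma case2_main {A : Finset ℕ} (hne : A.Nonempty) (h0 : 0 ∉ A)
    (hc : sig A < mn A) (hns : ¬ isStair A) :
    0 ∉ fr A ∧ (fr A).sum id = A.sum id ∧ A.card + 1 = (fr A).card ∧ ¬ isStair (fr A) ∧
      fr (fr A) = A := by
  have hsM : mn A ≤ mx A := mn_le (mx_mem hne)
  have hs1 : 0 < mn A := Nat.pos_of_ne_zero (fun h => h0 (h ▸ mn_mem hne))
  have hσM : sig A ≤ mx A := sig_le_mx h0
  have hσpos : 0 < sig A := sig_pos hne h0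
  have hMmem : mx A ∈ A := mx_mem hne
  have hlb : mn A ≤ mx A - sig A + 1 := by
    have h1 : sig A - 1 < sig A := by omega
    have h2 := sig_stair h0 h1
    have h3 := mn_le h2
    omega
  have h2σ : 2 * sig A ≤ mx A := by omega
  have hstair : mx A = 2 * sig A → A = Finset.Ico (sig A + 1) (2 * sig A + 1) := by
    intro heq
    apply Finset.ext
    intro x
    rw [Finset.mem_Ico]
    constructor
    · intro hx
      have h1 := mn_le hx
      have h2 := le_mx hx
      omega
    · intro hx
      have hi : mx A - x < sig A := by omega
      have h2 := sig_stair h0 hi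
      have h3 : mx A - (mx A - x) = x := by omega
      rwa [h3] at h2
  have hM2σ : mx A ≠ 2 * sig A := fun h => hns ⟨sig A, Or.inr (hstair h)⟩
  have h2σ1 : 2 * sig A + 1 ≤ mx A := by omega
  have hσnotmem : sig A ∉ A := fun h => by have := mn_le h; omega
  have hMσnot : mx A - sig A ∉ A := sig_not h0
  have hBdef : fr A = insert (sig A) (insert (mx A - sig A) (A.erase (mx A))) := by
    rw [fr, if_neg (by omega)]
  set M := mx A with hMdef
  set s := mn A with hsdef
  set σ := sig A with hσdef
  set B := insert σ (insert (M - σ) (A.erase M)) with hB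
  have hMσnotin : M - σ ∉ A.erase M := fun h => hMσnot (Finset.mem_of_mem_erase h)
  have hσnotins : σ ∉ insert (M - σ) (A.erase M) := by
    intro h
    rcases Finset.mem_insert.mp h with h | h
    · omega
    · exact hσnotmem (Finset.mem_of_mem_erase h)
  have hmemB : ∀ x, x ∈ B ↔ x = σ ∨ x = M - σ ∨ (x ∈ A ∧ x ≠ M) := by
    intro x
    rw [hB]
    simp only [Finset.mem_insert, Finset.mem_erase]
    tauto
  have h0B : 0 ∉ B := by
    intro h
    rcases (hmemB 0).mp h with h | h | h
    · omega
    · omega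
    · exact h0 h.1
  have hsumB : B.sum id = A.sum id := by
    have e1 : B.sum id = σ + (insert (M - σ) (A.erase M)).sum id := Finset.sum_insert hσnotins
    have e2 : (insert (M - σ) (A.erase M)).sum id = (M - σ) + (A.erase M).sum id :=
      Finset.sum_insert hMσnotin
    have e3 : (A.erase M).sum id + M = A.sum id := Finset.sum_erase_add _ _ hMmem
    omega
  have hcardB : A.card + 1 = B.card := by
    rw [hB, Finset.card_insert_of_notMem hσnotins, Finset.card_insert_of_notMem hMσnotin,
      Finset.card_erase_of_mem hMmem]
    have : 0 < A.card := Finset.card_pos.mpr hne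
    omega
  have hBne : B.Nonempty := ⟨σ, Finset.mem_insert_self _ _⟩
  have hmxB : mx B = M - 1 := by
    apply mx_eq
    · rcases Nat.eq_zero_or_pos (σ - 1) with h | h
      · exact (hmemB (M-1)).mpr (Or.inr (Or.inl (by omega)))
      · have h1 : (1 : ℕ) < σ := by omega
        have h2 := sig_stair h0 (show 1 < sig A from h1)
        exact (hmemB (M-1)).mpr (Or.inr (Or.inr ⟨h2, by omega⟩))
    · intro x hx
      rcases (hmemB x).mp hx with h | h | h
      · omega
      · omega
      · have := le_mx h.1
        rcases h with ⟨-, h2⟩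
        omega
  have hmnB : mn B = σ := by
    apply mn_eq (Finset.mem_insert_self _ _)
    intro x hx
    rcases (hmemB x).mp hx with h | h | h
    · omega
    · omega
    · have := mn_le h.1; omega
  have hsigBge : σ ≤ sig B := by
    apply le_sig
    intro i hi
    rw [hmxB]
    refine ⟨?_, by omega⟩
    rcases Nat.lt_or_ge (i+1) σ with h | h
    · have h2 := sig_stair h0 (show i + 1 < sig A from h)
      have h3 : M - (i+1) = M - 1 - i := by omega
      rw [h3] at h2
      exact (hmemB _).mpr (Or.inr (Or.inr ⟨h2, by omega⟩))
    · have hiσ : i + 1 = σ := by omega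
      have h3 : M - 1 - i = M - σ := by omega
      rw [h3]
      exact (hmemB _).mpr (Or.inr (Or.inl rfl))
  have hfrB : fr B = A := by
    rw [fr, hmnB, hmxB]
    rw [if_pos hsigBge]
    have e1 : M - 1 + 1 = M := by omega
    have e2 : M - 1 - σ + 1 = M - σ := by omega
    rw [e1, e2]
    rw [hB, Finset.erase_insert hσnotins, Finset.erase_insert hMσnotin,
      Finset.insert_erase hMmem]
  have hnsB : ¬ isStair B := by
    rintro ⟨ℓ, h1 | h2⟩
    · have hσB : σ ∈ Finset.Ico ℓ (2*ℓ) := h1 ▸ Finset.mem_insert_self _ _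
      have hℓpos : 0 < ℓ := by have := Finset.mem_Ico.mp hσB; omega
      have e1 : mn B = ℓ := by rw [h1]; exact mn_Ico (by omega)
      have e2 : mx B = 2*ℓ - 1 := by rw [h1]; exact mx_Ico (by omega)
      omega
    · have hσB : σ ∈ Finset.Ico (ℓ+1) (2*ℓ+1) := h2 ▸ Finset.mem_insert_self _ _
      have hℓpos : 0 < ℓ := by have := Finset.mem_Ico.mp hσB; omega
      have e1 : mn B = ℓ + 1 := by rw [h2]; exact mn_Ico (by omega)
      have e2 : mx B = 2*ℓ := by
        rw [h2]; have := mx_Ico (a := ℓ+1) (b := 2*ℓ+1) (by omega); omega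
      omega
  rw [hBdef]
  exact ⟨h0B, hsumB, hcardB, hnsB, hfrB⟩

lemma franklin (n : ℕ) : dsum n = ∑ A ∈ stairF n, wt A := by
  rw [dsum, stairF, ← Finset.sum_filter_add_sum_filter_not (distF n) isStair wt]
  have h0 : ∑ A ∈ (distF n).filter (fun A => ¬ isStair A), wt A = 0 := by
    refine Finset.sum_involution (fun A _ => fr A) ?hcan ?hgne ?hgmem ?hginv
    case hcan =>
      intro A hA
      obtain ⟨hAd, hns⟩ := Finset.mem_filter.mp hA
      obtain ⟨hsum, h0A⟩ := mem_distF.mp hAd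
      have hne : A.Nonempty := by
        rw [Finset.nonempty_iff_ne_empty]
        rintro rfl
        exact hns ⟨0, Or.inl (by simp)⟩
      rcases le_or_gt (mn A) (sig A) with hc | hc
      · obtain ⟨-, -, hcard, -, -⟩ := case1_main hne h0A hc hns
        rw [wt, wt, ← hcard, pow_succ]
        ring
      · obtain ⟨-, -, hcard, -, -⟩ := case2_main hne h0A hc hns
        rw [wt, wt, ← hcard, pow_succ]
        ring
    case hgne =>
      rintro A hA -
      obtain ⟨hAd, hns⟩ := Finset.mem_filter.mp hA
      obtain ⟨hsum, h0A⟩ := mem_distF.mp hAd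
      have hne : A.Nonempty := by
        rw [Finset.nonempty_iff_ne_empty]
        rintro rfl
        exact hns ⟨0, Or.inl (by simp)⟩
      rcases le_or_gt (mn A) (sig A) with hc | hc
      · obtain ⟨-, -, hcard, -, -⟩ := case1_main hne h0A hc hns
        intro h
        have h2 : (fr A).card = A.card := congrArg Finset.card h
        omega
      · obtain ⟨-, -, hcard, -, -⟩ := case2_main hne h0A hc hns
        intro h
        have h2 : (fr A).card = A.card := congrArg Finset.card h
        omega
    case hgmem =>
      intro A hA
      obtain ⟨hAd, hns⟩ := Finset.mem_filter.mp hA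
      obtain ⟨hsum, h0A⟩ := mem_distF.mp hAd
      have hne : A.Nonempty := by
        rw [Finset.nonempty_iff_ne_empty]
        rintro rfl
        exact hns ⟨0, Or.inl (by simp)⟩
      rcases le_or_gt (mn A) (sig A) with hc | hc
      · obtain ⟨h1, h2, -, h4, -⟩ := case1_main hne h0A hc hns
        exact Finset.mem_filter.mpr ⟨mem_distF.mpr ⟨by rw [h2, hsum], h1⟩, h4⟩
      · obtain ⟨h1, h2, -, h4, -⟩ := case2_main hne h0A hc hns
        exact Finset.mem_filter.mpr ⟨mem_distF.mpr ⟨by rw [h2, hsum], h1⟩, h4⟩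
    case hginv =>
      intro A hA
      obtain ⟨hAd, hns⟩ := Finset.mem_filter.mp hA
      obtain ⟨hsum, h0A⟩ := mem_distF.mp hAd
      have hne : A.Nonempty := by
        rw [Finset.nonempty_iff_ne_empty]
        rintro rfl
        exact hns ⟨0, Or.inl (by simp)⟩
      rcases le_or_gt (mn A) (sig A) with hc | hc
      · exact (case1_main hne h0A hc hns).2.2.2.2
      · exact (case2_main hne h0A hc hns).2.2.2.2
  rw [h0, add_zero]

-- ============ staircase pentagonal arithmetic ============

lemma gauss_eq (t : ℕ) : 2 * (∑ i ∈ Finset.range t, i) + t = t * t := by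
  induction t with
  | zero => simp
  | succ k ih =>
    have h : (k+1)*(k+1) = k*k + 2*k + 1 := by ring
    rw [Finset.sum_range_succ]
    omega

lemma sum_Ico1' (ℓ : ℕ) : (Finset.Ico ℓ (2*ℓ)).sum id * 2 + ℓ = 3*ℓ*ℓ := by
  have h1 : (Finset.Ico ℓ (2*ℓ)).sum id = ∑ i ∈ Finset.range (2*ℓ - ℓ), id (ℓ + i) :=
    Finset.sum_Ico_eq_sum_range id ℓ (2*ℓ)
  have h2 : 2*ℓ - ℓ = ℓ := by omega
  rw [h2] at h1
  have h3 : ∑ i ∈ Finset.range ℓ, id (ℓ + i) = ℓ * ℓ + ∑ i ∈ Finset.range ℓ, i := by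
    simp only [id]
    rw [Finset.sum_add_distrib, Finset.sum_const, Finset.card_range, smul_eq_mul]
  have h4 := gauss_eq ℓ
  have h5 : 3*ℓ*ℓ = 3*(ℓ*ℓ) := by ring
  omega

lemma sum_Ico2' (ℓ : ℕ) : (Finset.Ico (ℓ+1) (2*ℓ+1)).sum id * 2 = 3*ℓ*ℓ + ℓ := by
  have h1 : (Finset.Ico (ℓ+1) (2*ℓ+1)).sum id
      = ∑ i ∈ Finset.range (2*ℓ+1 - (ℓ+1)), id (ℓ+1+i) :=
    Finset.sum_Ico_eq_sum_range id (ℓ+1) (2*ℓ+1)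
  have h2 : 2*ℓ+1 - (ℓ+1) = ℓ := by omega
  rw [h2] at h1
  have h3 : ∑ i ∈ Finset.range ℓ, id (ℓ+1+i) = ℓ * ℓ + ℓ + ∑ i ∈ Finset.range ℓ, i := by
    simp only [id]
    rw [Finset.sum_add_distrib, Finset.sum_const, Finset.card_range, smul_eq_mul]
    ring_nf
  have h4 := gauss_eq ℓ
  have h5 : 3*ℓ*ℓ = 3*(ℓ*ℓ) := by ring
  omega

def toStair (m : ℤ) : Finset ℕ :=
  if 0 ≤ m then Finset.Ico (m.toNat + 1) (2 * m.toNat + 1)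
  else Finset.Ico m.natAbs (2 * m.natAbs)

lemma toStair_card (m : ℤ) : (toStair m).card = m.natAbs := by
  rw [toStair]
  split_ifs with h
  · rw [Nat.card_Ico]; omega
  · rw [Nat.card_Ico]; omega

lemma toStair_isStair (m : ℤ) : isStair (toStair m) := by
  rw [toStair]
  split_ifs with h
  · exact ⟨m.toNat, Or.inr rfl⟩
  · exact ⟨m.natAbs, Or.inl rfl⟩

lemma toStair_zero_notmem (m : ℤ) : 0 ∉ toStair m := by
  rw [toStair]
  split_ifs with h <;> intro hc <;> have := Finset.mem_Ico.mp hc <;> omega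

lemma toStair_sum (m : ℤ) : (((toStair m).sum id : ℕ) : ℤ) = gzaux m := by
  have h2 := two_gz m
  rw [toStair]
  split_ifs with h
  · have hs := sum_Ico2' m.toNat
    have hm : (m.toNat : ℤ) = m := Int.toNat_of_nonneg h
    have hz : 2 * (((Finset.Ico (m.toNat + 1) (2 * m.toNat + 1)).sum id : ℕ) : ℤ)
        = 3 * (m.toNat:ℤ) * m.toNat + m.toNat := by exact_mod_cast by omega
    nlinarith [hz, hm]
  · have hs := sum_Ico1' m.natAbs
    have hm : (m.natAbs : ℤ) = -m := by omega
    have hz : 2 * (((Finset.Ico m.natAbs (2 * m.natAbs)).sum id : ℕ) : ℤ) + (m.natAbs:ℤ)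
        = 3 * (m.natAbs:ℤ) * m.natAbs := by exact_mod_cast by omega
    nlinarith [hz, hm]

lemma toStair_mem_stairF {n : ℕ} {m : ℤ} (h : (n:ℤ) = gzaux m) : toStair m ∈ stairF n := by
  refine Finset.mem_filter.mpr ⟨mem_distF.mpr ⟨?_, toStair_zero_notmem m⟩, toStair_isStair m⟩
  have h1 := toStair_sum m
  rw [← h] at h1
  exact_mod_cast h1

lemma mem_stairF {n : ℕ} {A : Finset ℕ} (h : A ∈ stairF n) :
    ∃ m : ℤ, (n:ℤ) = gzaux m ∧ A = toStair m := by
  obtain ⟨hd, ℓ, h1 | h2⟩ := Finset.mem_filter.mp h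
  · obtain ⟨hsum, -⟩ := mem_distF.mp hd
    refine ⟨-(ℓ:ℤ), ?_, ?_⟩
    · have hs := sum_Ico1' ℓ
      rw [h1] at hsum
      have h2g := two_gz (-(ℓ:ℤ))
      have hz : 2*(n:ℤ) + ℓ = 3*(ℓ:ℤ)*ℓ := by exact_mod_cast by omega
      nlinarith [h2g, hz]
    · rcases Nat.eq_zero_or_pos ℓ with rfl | hpos
      · rw [h1, toStair]
        norm_num
      · rw [h1, toStair, if_neg (by omega : ¬ (0:ℤ) ≤ -(ℓ:ℤ))]
        congr 1 <;> omega
  · obtain ⟨hsum, -⟩ := mem_distF.mp hd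
    refine ⟨(ℓ:ℤ), ?_, ?_⟩
    · have hs := sum_Ico2' ℓ
      rw [h2] at hsum
      have h2g := two_gz (ℓ:ℤ)
      have hz : 2*(n:ℤ) = 3*(ℓ:ℤ)*ℓ + ℓ := by exact_mod_cast by omega
      nlinarith [h2g, hz]
    · rw [h2, toStair, if_pos (by omega : (0:ℤ) ≤ (ℓ:ℤ))]
      congr 1 <;> omega

lemma stairF_eq {n : ℕ} {m : ℤ} (h : (n:ℤ) = gzaux m) : stairF n = {toStair m} := by
  apply Finset.ext
  intro A
  rw [Finset.mem_singleton]
  constructor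
  · intro hA
    obtain ⟨m', hm', rfl⟩ := mem_stairF hA
    have : m' = m := gz_inj (by rw [← hm', ← h])
    rw [this]
  · rintro rfl
    exact toStair_mem_stairF h

lemma stairF_empty {n : ℕ} (h : ∀ m : ℤ, (n:ℤ) ≠ gzaux m) : stairF n = ∅ := by
  rw [Finset.eq_empty_iff_forall_notMem]
  intro A hA
  obtain ⟨m, hm, -⟩ := mem_stairF hA
  exact h m hm


lemma master (n : ℕ) :
    ∑ᶠ k : ℤ, (-1 : ℤ) ^ k.natAbs * intExt pbarOdd ((n : ℤ) - k * (3 * k + 1) / 2) =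
      (-1)^n * dsum n := by
  set f : ℤ → ℤ := fun k => (-1 : ℤ) ^ k.natAbs * intExt pbarOdd ((n : ℤ) - k * (3 * k + 1) / 2)
    with hf
  have hgz : ∀ k : ℤ, (n : ℤ) - k * (3 * k + 1) / 2 = (n : ℤ) - gzaux k := fun k => rfl
  -- step A : reduce to finite sum
  have hsupp : Function.support f ⊆ ↑(Finset.Icc (-(n:ℤ)) (n:ℤ)) := by
    intro k hk
    rw [Function.mem_support] at hk
    have h1 : intExt pbarOdd ((n : ℤ) - k * (3 * k + 1) / 2) ≠ 0 := by
      intro h; apply hk; rw [hf]; simp [h]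
    rw [intExt] at h1
    by_cases h2 : (0:ℤ) ≤ (n : ℤ) - k * (3 * k + 1) / 2
    · have h3 : gzaux k ≤ n := by
        have := hgz k; omega
      have h4 := natAbs_le_gz k
      simp only [Finset.coe_Icc, Set.mem_Icc]
      omega
    · rw [if_neg h2] at h1; exact absurd rfl h1
  rw [finsum_eq_sum_of_support_subset f hsupp]
  -- step B : rewrite the summand
  have hterm : ∀ k : ℤ, f k = if gzaux k ≤ (n:ℤ)
      then (-1 : ℤ) ^ k.natAbs * ((pb2 (n - (gzaux k).toNat)).card : ℤ) else 0 := by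
    intro k
    rw [hf]
    simp only
    rw [intExt, hgz k]
    have hnn := gz_nonneg k
    by_cases h2 : gzaux k ≤ (n:ℤ)
    · rw [if_pos (by omega : (0:ℤ) ≤ (n:ℤ) - gzaux k), if_pos h2]
      have h3 : ((n:ℤ) - gzaux k).toNat = n - (gzaux k).toNat := by omega
      rw [h3]
      rw [pbarOdd_eq (n - (gzaux k).toNat)]
    · rw [if_neg (by omega : ¬ (0:ℤ) ≤ (n:ℤ) - gzaux k), if_neg h2, mul_zero]
  rw [Finset.sum_congr rfl (fun k _ => hterm k), ← Finset.sum_filter]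
  -- step D : fiberwise over a = (gzaux k).toNat
  have hmap : ∀ k ∈ (Finset.Icc (-(n:ℤ)) (n:ℤ)).filter (fun k => gzaux k ≤ (n:ℤ)),
      (gzaux k).toNat ∈ Finset.range (n+1) := by
    intro k hk
    have h1 := (Finset.mem_filter.mp hk).2
    have h2 := gz_nonneg k
    rw [Finset.mem_range]
    omega
  rw [← Finset.sum_fiberwise_of_maps_to hmap]
  -- step E : evaluate each fiber
  have hfiber : ∀ a ∈ Finset.range (n+1),
      ∑ k ∈ ((Finset.Icc (-(n:ℤ)) (n:ℤ)).filter (fun k => gzaux k ≤ (n:ℤ))).filter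
        (fun k => (gzaux k).toNat = a),
        (-1 : ℤ) ^ k.natAbs * ((pb2 (n - (gzaux k).toNat)).card : ℤ)
      = dsum a * ((pb2 (n - a)).card : ℤ) := by
    intro a ha
    have ha' : a ≤ n := by have := Finset.mem_range.mp ha; omega
    have hfib_mem : ∀ k : ℤ, (k ∈ ((Finset.Icc (-(n:ℤ)) (n:ℤ)).filter
        (fun k => gzaux k ≤ (n:ℤ))).filter (fun k => (gzaux k).toNat = a)) ↔ gzaux k = (a:ℤ) := by
      intro k
      rw [Finset.mem_filter, Finset.mem_filter, Finset.mem_Icc]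
      constructor
      · rintro ⟨⟨h1, h2⟩, h3⟩
        have := gz_nonneg k
        omega
      · intro h
        have h2 := natAbs_le_gz k
        have h3 := gz_nonneg k
        refine ⟨⟨by omega, by omega⟩, by omega⟩
    by_cases hp : ∃ m : ℤ, (a:ℤ) = gzaux m
    · obtain ⟨m, hm⟩ := hp
      have hsingle : ((Finset.Icc (-(n:ℤ)) (n:ℤ)).filter
          (fun k => gzaux k ≤ (n:ℤ))).filter (fun k => (gzaux k).toNat = a) = {m} := by
        apply Finset.ext
        intro k
        rw [Finset.mem_singleton, hfib_mem k]
        constructor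
        · intro h; exact gz_inj (by rw [h, hm])
        · rintro rfl; exact hm.symm
      rw [hsingle, Finset.sum_singleton]
      have htn : (gzaux m).toNat = a := by have := gz_nonneg m; omega
      rw [htn]
      have hd : dsum a = (-1 : ℤ) ^ m.natAbs := by
        rw [franklin, stairF_eq hm, Finset.sum_singleton, wt, toStair_card]
      rw [hd]
    · push_neg at hp
      have hempty : ((Finset.Icc (-(n:ℤ)) (n:ℤ)).filter
          (fun k => gzaux k ≤ (n:ℤ))).filter (fun k => (gzaux k).toNat = a) = ∅ := by
        rw [Finset.eq_empty_iff_forall_notMem]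
        intro k hk
        exact hp k ((hfib_mem k).mp hk).symm
      rw [hempty, Finset.sum_empty]
      have hd : dsum a = 0 := by
        rw [franklin, stairF_empty hp, Finset.sum_empty]
      rw [hd, zero_mul]
  rw [Finset.sum_congr rfl hfiber]
  -- step F : the convolution identity
  rw [conv_eq_T3, T3_invol, fix_eq, parity_step]

lemma sign_final {m : ℤ} {n : ℕ} (h : (n:ℤ) = gzaux m) :
    (-1:ℤ)^n * (-1)^(m.natAbs) = (-1)^(((m + 1)/2).natAbs) := by
  have h2 : 2*(n:ℤ) = m*(3*m+1) := by rw [h, two_gz]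
  obtain ⟨t, rfl | rfl⟩ := Int.eq_nat_or_neg m
  · have ht : 2*n = t*(3*t+1) := by exact_mod_cast h2
    have habs1 : ((t:ℤ)).natAbs = t := Int.natAbs_natCast t
    have habs2 : (((t:ℤ)+1)/2).natAbs = (t+1)/2 := by omega
    rw [habs1, habs2, ← pow_add]
    apply pow_neg_one_par
    rcases Nat.even_or_odd t with ⟨u, rfl⟩ | ⟨u, rfl⟩
    · have e : (u+u)*(3*(u+u)+1) = 12*(u*u) + 2*u := by ring
      omega
    · have e : (2*u+1)*(3*(2*u+1)+1) = 12*(u*u) + 14*u + 4 := by ring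
      omega
  · have hZ : 2*(n:ℤ) + t = 3*(t:ℤ)*t := by linear_combination h2
    have ht : 2*n + t = 3*t*t := by exact_mod_cast hZ
    have habs1 : ((-(t:ℤ))).natAbs = t := by omega
    have habs2 : ((-(t:ℤ)+1)/2).natAbs = t/2 := by omega
    rw [habs1, habs2, ← pow_add]
    apply pow_neg_one_par
    rcases Nat.even_or_odd t with ⟨u, rfl⟩ | ⟨u, rfl⟩
    · have e : 3*(u+u)*(u+u) = 12*(u*u) := by ring
      omega
    · have e : 3*(2*u+1)*(2*u+1) = 12*(u*u) + 12*u + 3 := by ring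
      omega


theorem stmt0 (n : ℕ) :
    (∀ m : ℤ, (n : ℤ) = m * (3 * m + 1) / 2 →
      ∑ᶠ k : ℤ, (-1 : ℤ) ^ k.natAbs * intExt pbarOdd ((n : ℤ) - k * (3 * k + 1) / 2) =
        (-1 : ℤ) ^ ((m + 1) / 2).natAbs) ∧
    ((∀ m : ℤ, (n : ℤ) ≠ m * (3 * m + 1) / 2) →
      ∑ᶠ k : ℤ, (-1 : ℤ) ^ k.natAbs * intExt pbarOdd ((n : ℤ) - k * (3 * k + 1) / 2) = 0) := by
  constructor
  · intro m hm
    have hg : (n:ℤ) = gzaux m := hm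
    rw [master, franklin, stairF_eq hg, Finset.sum_singleton, wt, toStair_card]
    exact sign_final hg
  · intro hn
    rw [master, franklin, stairF_empty (fun m => hn m), Finset.sum_empty, mul_zero]
end

section
/- For every positive integer n, the sum ∑_{k∈ℤ} (-1)^⌈k/2⌉ · p(n - k(3k+1)/2) is even, where p(x) = 0 for negative x. -/
/-!
Modulo 2 every sign in the sum is irrelevant, and the substitution `k ↦ -k` turns
`k(3k+1)/2` into the pentagonal number `k(3k-1)/2`. The sum is therefore congruent to
`∑ (-1)^k p(n - k(3k-1)/2)`, which vanishes for `n > 0` by Euler's pentagonal number theorem: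
the generating function `∑ p(n) Xⁿ = ∏ 1/(1 - Xⁱ)` times `∏ (1 - Xⁱ) = ∑ (-1)^k X^(k(3k-1)/2)`
is `1`.
-/

/-- The unrestricted partition function. -/
noncomputable def partitionCount (n : ℕ) : ℕ := Nat.card (Nat.Partition n)
open PowerSeries PowerSeries.WithPiTopology

theorem Int.even_finsum_sub_finsum {α : Type*} {f g : α → ℤ} (hf : f.HasFiniteSupport)
    (hg : g.HasFiniteSupport) (h : ∀ a, Even (f a - g a)) : Even (∑ᶠ a, f a - ∑ᶠ a, g a) := by
  rw [← finsum_sub_distrib hf hg]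
  exact finsum_induction Even .zero (fun _ _ ↦ Even.add) h

theorem intExt_natCast_sub_natCast (f : ℕ → ℕ) (n m : ℕ) :
    intExt f (n - m) = if m ≤ n then (f (n - m) : ℤ) else 0 := by
  unfold intExt
  split_ifs <;> first | omega | (congr; omega)

theorem hasFiniteSupport_mul_intExt_sub_pentagonal (c : ℤ → ℤ) (f : ℕ → ℕ) (n : ℕ) :
    Function.HasFiniteSupport fun k ↦ c k * intExt f (n - pentagonal k) := by
  refine ((Set.finite_Iic n).preimage pentagonal_injective.injOn).subset fun k hk ↦ ?_
  by_contra hlt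
  simp_all [intExt]

theorem hasProd_mk_partitionCount (R : Type*) [CommSemiring R] [TopologicalSpace R]
    [IsTopologicalSemiring R] [T2Space R] :
    HasProd (fun i ↦ ∑' j : ℕ, (X : R⟦X⟧) ^ ((i + 1) * j))
      (PowerSeries.mk fun n ↦ (partitionCount n : R)) := by
  simpa [Nat.Partition.restricted, partitionCount, Nat.card_eq_fintype_card] using
    Nat.Partition.hasProd_powerSeriesMk_card_restricted R (fun _ ↦ True)

theorem mk_partitionCount_mul_pentagonalSeries (R : Type*) [CommRing R] :
    PowerSeries.mk (fun n ↦ (partitionCount n : R)) * pentagonalSeries R = 1 := by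
  let _ : TopologicalSpace R := ⊥
  have _ : DiscreteTopology R := ⟨rfl⟩
  refine ((hasProd_mk_partitionCount R).mul (hasProd_one_sub_X_pow R)).unique ?_
  convert hasProd_one using 2 with i
  simp_rw [pow_mul]
  exact tsum_pow_mul_one_sub_of_constantCoeff_eq_zero (by simp)

theorem hasSum_partitionCount_sub_pentagonal {n : ℕ} (hn : n ≠ 0) :
    HasSum (fun k : ℤ ↦ (-1) ^ k.natAbs * intExt partitionCount (n - pentagonal k)) 0 := by
  have h := ((hasSum_pentagonalSeries ℤ).mul_left
    (PowerSeries.mk fun n ↦ (partitionCount n : ℤ))).map (coeff n) (continuous_coeff ℤ n)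
  rw [mk_partitionCount_mul_pentagonalSeries, Function.comp_def] at h
  convert h using 1
  · ext k
    rw [mul_left_comm, ← map_intCast (C (R := ℤ)), coeff_C_mul, coeff_mul_X_pow',
      intExt_natCast_sub_natCast]
    simp
  · simp [coeff_one, hn]

theorem finsum_partitionCount_sub_pentagonal {n : ℕ} (hn : n ≠ 0) :
    ∑ᶠ k : ℤ, (-1) ^ k.natAbs * intExt partitionCount (n - pentagonal k) = 0 := by
  rw [← (hasSum_partitionCount_sub_pentagonal hn).tsum_eq,
    tsum_eq_finsum (hasFiniteSupport_mul_intExt_sub_pentagonal _ _ n)]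

theorem stmt6 (n : ℕ) (hn : 0 < n) :
    Even (∑ᶠ k : ℤ, (-1 : ℤ) ^ ((k + 1) / 2).natAbs *
      intExt partitionCount ((n : ℤ) - k * (3 * k + 1) / 2)) := by
  have hpent (k : ℤ) : -k * (3 * -k + 1) / 2 = pentagonal k := by
    rw [natCast_pentagonal]; ring_nf
  have hsign (a b : ℕ) (x : ℤ) : Even ((-1) ^ a * x - (-1) ^ b * x) := by
    simp [← sub_mul, Int.even_sub, Int.even_pow]
  rw [← finsum_comp_equiv (Equiv.neg ℤ)]
  simp only [Equiv.neg_apply, hpent]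
  simpa [finsum_partitionCount_sub_pentagonal hn.ne'] using
    Int.even_finsum_sub_finsum (hasFiniteSupport_mul_intExt_sub_pentagonal _ partitionCount n)
      (hasFiniteSupport_mul_intExt_sub_pentagonal _ partitionCount n) (fun k ↦ hsign _ k.natAbs _)
end

section
/- For every nonnegative integer n, p̄ₒ(n) = ∑_{k≥0} P₂(n - k(k+1)/2), where the sum is over all k with k(k+1)/2 ≤ n. -/
/-- Number of partitions of `n` into parts not congruent to `2` modulo `4`. -/
noncomputable def P2 (n : ℕ) : ℕ :=
  Nat.card {μ : Nat.Partition n // ∀ i ∈ μ.parts, i % 4 ≠ 2}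

namespace Ov

def tri (k : ℕ) : ℕ := k * (k + 1) / 2

lemma tri_mul_two (k : ℕ) : tri k * 2 = k * (k + 1) := by
  have h : 2 ∣ k * (k + 1) := (Nat.even_mul_succ_self k).two_dvd
  simpa [tri] using Nat.div_mul_cancel h

lemma sum_range_id_eq_tri (k : ℕ) : (∑ i ∈ Finset.range (k + 1), i) = tri k := by
  apply Nat.eq_of_mul_eq_mul_right (show 0 < 2 by norm_num)
  rw [Finset.sum_range_id_mul_two, tri_mul_two]
  simp [Nat.add_sub_cancel, Nat.mul_comm]

lemma le_tri (k : ℕ) : k ≤ tri k := by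
  rw [tri, Nat.le_div_iff_mul_le (by norm_num)]
  cases k with
  | zero => simp
  | succ m => exact Nat.mul_le_mul_left _ (by omega)

lemma tri_even (c : ℕ) : tri (2 * c) = 2 * c * c + c := by
  have h := tri_mul_two (2 * c)
  nlinarith

lemma tri_odd (c : ℕ) (hc : 1 ≤ c) : tri (2 * c - 1) + c = 2 * c * c := by
  have h := tri_mul_two (2 * c - 1)
  have h2 : 2 * c - 1 + 1 = 2 * c := by omega
  rw [h2] at h
  nlinarith [Nat.sub_add_cancel (show 1 ≤ 2*c by omega)]

/-! ### Lists: beta sequences and parts -/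

def toPartsA : ℕ → List ℕ → List ℕ
  | _, [] => []
  | k, a :: s => (a - k) :: toPartsA (k + 1) s

def toBetaA : ℕ → List ℕ → List ℕ
  | _, [] => []
  | k, a :: s => (a + k) :: toBetaA (k + 1) s

lemma length_toPartsA (k : ℕ) (l : List ℕ) : (toPartsA k l).length = l.length := by
  induction l generalizing k with
  | nil => rfl
  | cons a s ih => simp [toPartsA, ih]

lemma length_toBetaA (k : ℕ) (l : List ℕ) : (toBetaA k l).length = l.length := by
  induction l generalizing k with
  | nil => rfl
  | cons a s ih => simp [toBetaA, ih]

lemma toPartsA_toBetaA (k : ℕ) (l : List ℕ) : toPartsA k (toBetaA k l) = l := by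
  induction l generalizing k with
  | nil => rfl
  | cons a s ih => simp [toBetaA, toPartsA, ih]

lemma toBetaA_toPartsA (k : ℕ) (l : List ℕ) (h : ∀ x ∈ l, k ≤ x) (hs : l.Pairwise (· < ·)) :
    toBetaA k (toPartsA k l) = l := by
  induction l generalizing k with
  | nil => rfl
  | cons a s ih =>
    have ha : k ≤ a := h a (by simp)
    rw [List.pairwise_cons] at hs
    rw [toPartsA, toBetaA, Nat.sub_add_cancel ha, ih (k+1) ?_ hs.2]
    intro x hx
    have := hs.1 x hx
    have := h a (by simp)
    omega

lemma sum_toBetaA (k : ℕ) (l : List ℕ) :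
    (toBetaA k l).sum = l.sum + ∑ i ∈ Finset.range l.length, (k + i) := by
  induction l generalizing k with
  | nil => simp [toBetaA]
  | cons a s ih =>
    rw [toBetaA, List.sum_cons, ih (k+1), List.sum_cons, List.length_cons,
      Finset.sum_range_succ' (fun i => k + i)]
    have hsum : ∑ x ∈ Finset.range s.length, (k + 1 + x)
        = ∑ x ∈ Finset.range s.length, (k + (x + 1)) :=
      Finset.sum_congr rfl (fun x _ => by omega)
    rw [hsum]
    omega

lemma mem_toBetaA_lower (k : ℕ) (l : List ℕ) (hp : ∀ x ∈ l, 0 < x) :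
    ∀ b ∈ toBetaA k l, k < b := by
  induction l generalizing k with
  | nil => simp [toBetaA]
  | cons a s ih =>
    intro b hb
    rw [toBetaA, List.mem_cons] at hb
    rcases hb with rfl | hb
    · have := hp a (by simp); omega
    · have := ih (k+1) (fun x hx => hp x (by simp [hx])) b hb; omega

lemma sorted_toBetaA (k : ℕ) (l : List ℕ) (hs : l.Pairwise (· ≤ ·)) :
    (toBetaA k l).Pairwise (· < ·) := by
  rw [← List.isChain_iff_pairwise]
  induction l generalizing k with
  | nil => simp [toBetaA]
  | cons a s ih =>
    rw [List.pairwise_cons] at hs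
    cases s with
    | nil => simp [toBetaA]
    | cons b t =>
      rw [toBetaA, toBetaA, List.isChain_cons_cons]
      constructor
      · have := hs.1 b (by simp); omega
      · rw [← toBetaA]
        exact ih (k+1) hs.2

lemma sorted_toPartsA (k : ℕ) (l : List ℕ) (hs : l.Pairwise (· < ·)) (h : ∀ x ∈ l, k ≤ x) :
    (toPartsA k l).Pairwise (· ≤ ·) := by
  rw [← List.isChain_iff_pairwise]
  induction l generalizing k with
  | nil => simp [toPartsA]
  | cons a s ih =>
    rw [List.pairwise_cons] at hs
    cases s with
    | nil => simp [toPartsA]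
    | cons b t =>
      rw [toPartsA, toPartsA, List.isChain_cons_cons]
      have hab : a < b := hs.1 b (by simp)
      have hka : k ≤ a := h a (by simp)
      constructor
      · omega
      · rw [← toPartsA]
        exact ih (k+1) hs.2 (fun x hx => by have := hs.1 x hx; omega)

lemma sum_toPartsA (k : ℕ) (l : List ℕ) (hs : l.Pairwise (· < ·)) (h : ∀ x ∈ l, k ≤ x) :
    (toPartsA k l).sum + ∑ i ∈ Finset.range l.length, (k + i) = l.sum := by
  conv_rhs => rw [← toBetaA_toPartsA k l h hs]
  rw [sum_toBetaA, length_toPartsA]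

/-- zeros of a sorted list form a prefix -/
lemma sorted_eq_replicate_append (l : List ℕ) (hs : l.Pairwise (· ≤ ·)) :
    l = List.replicate (l.length - (l.filter (· ≠ 0)).length) 0 ++ l.filter (· ≠ 0) := by
  induction l with
  | nil => rfl
  | cons a s ih =>
    rw [List.pairwise_cons] at hs
    by_cases ha : a = 0
    · subst ha
      have hfc : (0 :: s).filter (· ≠ 0) = s.filter (· ≠ 0) := by
        simp [List.filter_cons]
      have hlen : (s.filter (· ≠ 0)).length ≤ s.length := List.length_filter_le _ _
      rw [hfc, List.length_cons]
      have hstep : s.length + 1 - (s.filter (· ≠ 0)).length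
          = (s.length - (s.filter (· ≠ 0)).length) + 1 := by omega
      rw [hstep, List.replicate_succ, List.cons_append]
      congr 1
      exact ih hs.2
    · have hnz : ∀ x ∈ a :: s, x ≠ 0 := by
        intro x hx
        rcases List.mem_cons.mp hx with rfl | hx
        · exact ha
        · have := hs.1 x hx; omega
      rw [List.filter_eq_self.mpr (by intro x hx; simpa using hnz x hx)]
      simp


def dn (c : ℕ) (X : Finset ℕ) : Finset ℕ := (X.filter (fun x => c ≤ x)).image (· - c)

def up (c : ℕ) (A B : Finset ℕ) : Finset ℕ :=
  A.image (· + c) ∪ (Finset.range c).filter (fun t => (c - 1 - t) ∉ B)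

lemma mem_dn {c : ℕ} {X : Finset ℕ} {a : ℕ} : a ∈ dn c X ↔ a + c ∈ X := by
  simp only [dn, Finset.mem_image, Finset.mem_filter]
  constructor
  · rintro ⟨x, ⟨hx, hcx⟩, rfl⟩
    rwa [Nat.sub_add_cancel hcx]
  · intro h
    exact ⟨a + c, ⟨h, by omega⟩, by omega⟩

lemma mem_up {c : ℕ} {A B : Finset ℕ} {a : ℕ} :
    a ∈ up c A B ↔ ((c ≤ a ∧ a - c ∈ A) ∨ (a < c ∧ (c - 1 - a) ∉ B)) := by
  simp only [up, Finset.mem_union, Finset.mem_image, Finset.mem_filter, Finset.mem_range]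
  constructor
  · rintro (⟨x, hx, rfl⟩ | ⟨h1, h2⟩)
    · exact Or.inl ⟨by omega, by simpa [Nat.add_sub_cancel] using hx⟩
    · exact Or.inr ⟨h1, h2⟩
  · rintro (⟨h1, h2⟩ | ⟨h1, h2⟩)
    · exact Or.inl ⟨a - c, h2, by omega⟩
    · exact Or.inr ⟨h1, h2⟩

lemma dn_up (c : ℕ) (A B : Finset ℕ) : dn c (up c A B) = A := by
  ext a
  rw [mem_dn, mem_up]
  constructor
  · rintro (⟨_, h⟩ | ⟨h, _⟩)
    · simpa [Nat.add_sub_cancel] using h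
    · omega
  · intro h
    exact Or.inl ⟨by omega, by simpa [Nat.add_sub_cancel] using h⟩

lemma up_dn (c : ℕ) (P Q : Finset ℕ) : up c (dn c P) (up c Q P) = P := by
  ext a
  rw [mem_up]
  by_cases hca : c ≤ a
  · simp only [mem_dn, hca, true_and]
    have hs : a - c + c = a := by omega
    rw [hs]
    constructor
    · rintro (h | ⟨h, _⟩)
      · exact h
      · omega
    · exact fun h => Or.inl h
  · push_neg at hca
    have hc1 : c - 1 - a < c := by omega
    have heq : c - 1 - (c - 1 - a) = a := by omega
    have hkey : (c - 1 - a) ∈ up c Q P ↔ a ∉ P := by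
      rw [mem_up, heq]
      constructor
      · rintro (⟨h, _⟩ | ⟨_, h⟩)
        · omega
        · exact h
      · intro h
        exact Or.inr ⟨hc1, h⟩
    constructor
    · rintro (⟨h, _⟩ | ⟨_, h⟩)
      · omega
      · by_contra hna
        exact h (hkey.mpr hna)
    · intro h
      refine Or.inr ⟨hca, fun hmem => ?_⟩
      exact (hkey.mp hmem) h

lemma card_dn_add (c : ℕ) (X : Finset ℕ) :
    (dn c X).card + (X.filter (· < c)).card = X.card := by
  have h1 : (dn c X).card = (X.filter (fun x => c ≤ x)).card := by
    apply Finset.card_image_of_injOn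
    intro x hx y hy hxy
    simp only [Finset.coe_filter, Set.mem_setOf_eq] at hx hy
    dsimp only at hxy
    omega
  rw [h1]
  have := Finset.card_filter_add_card_filter_not (s := X) (p := fun x => c ≤ x)
  simpa [not_le] using this

lemma sum_dn_add (c : ℕ) (X : Finset ℕ) :
    (∑ x ∈ dn c X, x) + c * (dn c X).card + (∑ x ∈ X.filter (· < c), x) = ∑ x ∈ X, x := by
  have hinj : ∀ x ∈ X.filter (fun x => c ≤ x), ∀ y ∈ X.filter (fun x => c ≤ x),
      x - c = y - c → x = y := by
    intro x hx y hy hxy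
    simp only [Finset.mem_filter] at hx hy
    omega
  have h1 : (∑ x ∈ dn c X, x) = ∑ x ∈ X.filter (fun x => c ≤ x), (x - c) := by
    unfold dn
    rw [Finset.sum_image hinj]
  have h2 : (dn c X).card = (X.filter (fun x => c ≤ x)).card :=
    Finset.card_image_of_injOn (fun x hx y hy => hinj x (by simpa using hx) y (by simpa using hy))
  have h3 : (∑ x ∈ X.filter (fun x => c ≤ x), (x - c)) + c * (X.filter (fun x => c ≤ x)).card
      = ∑ x ∈ X.filter (fun x => c ≤ x), x := by
    rw [mul_comm, ← Finset.sum_const_nat (m := c) (fun x _ => rfl), ← Finset.sum_add_distrib]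
    · apply Finset.sum_congr rfl
      intro x hx
      simp only [Finset.mem_filter] at hx
      omega
  have h4 := Finset.sum_filter_add_sum_filter_not X (fun x => c ≤ x) (fun x => x)
  have h5 : X.filter (fun x => ¬ c ≤ x) = X.filter (· < c) := by
    apply Finset.filter_congr
    intro x _
    simp [not_le]
  rw [h5] at h4
  rw [h1, h2]
  omega

lemma card_up_add (c : ℕ) (A B : Finset ℕ) :
    (up c A B).card + (B.filter (· < c)).card = A.card + c := by
  have hdisj : Disjoint (A.image (· + c)) ((Finset.range c).filter (fun t => (c - 1 - t) ∉ B)) := by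
    rw [Finset.disjoint_left]
    intro a ha hb
    simp only [Finset.mem_image] at ha
    simp only [Finset.mem_filter, Finset.mem_range] at hb
    omega
  have h1 : (up c A B).card = A.card + ((Finset.range c).filter (fun t => (c - 1 - t) ∉ B)).card := by
    rw [up, Finset.card_union_of_disjoint hdisj,
      Finset.card_image_of_injective _ (fun x y h => by omega)]
  have h2 := Finset.card_filter_add_card_filter_not (s := Finset.range c)
    (p := fun t => (c - 1 - t) ∉ B)
  have h3 : ((Finset.range c).filter (fun t => ¬ (c - 1 - t) ∉ B)).card
      = (B.filter (· < c)).card := by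
    apply Finset.card_nbij' (i := fun t => c - 1 - t) (j := fun b => c - 1 - b)
    · intro t ht
      simp only [Finset.mem_coe, Finset.mem_filter, Finset.mem_range, not_not] at ht ⊢
      refine ⟨ht.2, by omega⟩
    · intro b hb
      simp only [Finset.mem_coe, Finset.mem_filter, Finset.mem_range, not_not] at hb ⊢
      constructor
      · omega
      · have : c - 1 - (c - 1 - b) = b := by omega
        rw [this]; exact hb.1
    · intro t ht
      simp only [Finset.mem_coe, Finset.mem_filter, Finset.mem_range] at ht
      dsimp only
      omega
    · intro b hb
      simp only [Finset.mem_coe, Finset.mem_filter] at hb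
      dsimp only
      omega
  rw [Finset.card_range] at h2
  omega

lemma sum_up_add (c : ℕ) (A B : Finset ℕ) :
    (∑ x ∈ up c A B, x) + c * (B.filter (· < c)).card
      = (∑ x ∈ A, x) + c * A.card + (∑ i ∈ Finset.range c, i)
        + (∑ x ∈ B.filter (· < c), x) + (B.filter (· < c)).card := by
  have hdisj : Disjoint (A.image (· + c)) ((Finset.range c).filter (fun t => (c - 1 - t) ∉ B)) := by
    rw [Finset.disjoint_left]
    intro a ha hb
    simp only [Finset.mem_image] at ha
    simp only [Finset.mem_filter, Finset.mem_range] at hb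
    omega
  have h1 : (∑ x ∈ up c A B, x)
      = (∑ x ∈ A.image (· + c), x) + ∑ x ∈ (Finset.range c).filter (fun t => (c - 1 - t) ∉ B), x :=
    Finset.sum_union hdisj
  have h2 : (∑ x ∈ A.image (· + c), x) = (∑ x ∈ A, x) + c * A.card := by
    rw [Finset.sum_image (fun x _ y _ h => by omega)]
    rw [Finset.sum_add_distrib]
    simp [mul_comm]
  have h4 := Finset.sum_filter_add_sum_filter_not (Finset.range c)
    (fun t => (c - 1 - t) ∉ B) (fun x => x)
  have h5 : (∑ x ∈ (Finset.range c).filter (fun t => ¬ (c - 1 - t) ∉ B), x)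
      = ∑ b ∈ B.filter (· < c), (c - 1 - b) := by
    apply Finset.sum_nbij' (i := fun t => c - 1 - t) (j := fun b => c - 1 - b)
    · intro t ht
      simp only [Finset.mem_filter, Finset.mem_range, not_not] at ht ⊢
      exact ⟨ht.2, by omega⟩
    · intro b hb
      simp only [Finset.mem_filter, Finset.mem_range, not_not] at hb ⊢
      constructor
      · omega
      · have : c - 1 - (c - 1 - b) = b := by omega
        rw [this]; exact hb.1
    · intro t ht
      simp only [Finset.mem_filter, Finset.mem_range] at ht
      omega
    · intro b hb
      simp only [Finset.mem_filter] at hb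
      omega
    · intro t ht
      simp only [Finset.mem_filter, Finset.mem_range] at ht
      omega
  have e1 : ∑ b ∈ B.filter (· < c), ((c - 1 - b) + b + 1) = ∑ _b ∈ B.filter (· < c), c :=
    Finset.sum_congr rfl (fun b hb => by
      simp only [Finset.mem_filter] at hb
      omega)
  rw [Finset.sum_add_distrib, Finset.sum_add_distrib] at e1
  simp only [Finset.sum_const, smul_eq_mul, mul_one] at e1
  have e2 : (∑ _b ∈ B.filter (· < c), c) = c * (B.filter (· < c)).card := by
    simp [Finset.sum_const, mul_comm]
  have hcomm : (B.filter (· < c)).card * c = c * (B.filter (· < c)).card := Nat.mul_comm _ _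
  omega

lemma gauss (c : ℕ) : 2 * (∑ i ∈ Finset.range c, i) + c = c * c := by
  cases c with
  | zero => simp
  | succ m =>
    have h := Finset.sum_range_id_mul_two (m + 1)
    simp only [Nat.add_sub_cancel] at h
    zify at h ⊢
    linear_combination h

lemma weight_odd (c : ℕ) (X Y : Finset ℕ) (hc : Y.card + c = X.card) :
    2*c*c + 4*((∑ x ∈ dn c X, x) + (∑ x ∈ up c Y X, x) + (dn c X).card)
      = 4*((∑ x ∈ X, x) + (∑ x ∈ Y, x)) + X.card + 3*Y.card + c := by
  have h1 := sum_dn_add c X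
  have h2 := card_dn_add c X
  have h3 := sum_up_add c Y X
  have h4 := gauss c
  zify at h1 h2 h3 h4 hc ⊢
  linear_combination (4:ℤ)*h1 + 4*h3 + 2*h4 + (4 - 4*(c:ℤ))*h2 + (4*(c:ℤ) - 3)*hc

lemma weight_even (c : ℕ) (X Y : Finset ℕ) (hc : X.card + c = Y.card) :
    2*c*c + c + 4*((∑ x ∈ up c X Y, x) + (∑ x ∈ dn c Y, x) + (up c X Y).card)
      = 4*((∑ x ∈ X, x) + (∑ x ∈ Y, x)) + X.card + 3*Y.card := by
  have h1 := sum_dn_add c Y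
  have h2 := card_dn_add c Y
  have h3 := sum_up_add c X Y
  have h4 := gauss c
  have h5 := card_up_add c X Y
  zify at h1 h2 h3 h4 h5 hc ⊢
  linear_combination (4:ℤ)*h1 + 4*h3 + 2*h4 + 4*h5 - 4*(c:ℤ)*h2 + (4*(c:ℤ) + 3)*hc

/-! ### The core transform -/

def kOf (X Y : Finset ℕ) : ℕ :=
  if X.card ≤ Y.card then 2 * (Y.card - X.card) else 2 * (X.card - Y.card) - 1

def midU (X Y : Finset ℕ) : Finset ℕ :=
  if X.card ≤ Y.card then up (Y.card - X.card) X Y else dn (X.card - Y.card) X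

def midV (X Y : Finset ℕ) : Finset ℕ :=
  if X.card ≤ Y.card then dn (Y.card - X.card) Y else up (X.card - Y.card) Y X

def fwdB (N : ℕ) (X Y : Finset ℕ) : Finset ℕ := up N (midU X Y) (midV X Y)

def bwdXY (N k : ℕ) (B : Finset ℕ) : Finset ℕ × Finset ℕ :=
  if k % 2 = 0 then (dn (k / 2) (dn N B), up (k / 2) (up N ∅ B) (dn N B))
  else (up ((k + 1) / 2) (dn N B) (up N ∅ B), dn ((k + 1) / 2) (up N ∅ B))

lemma dn_eq_empty {c : ℕ} {V : Finset ℕ} (h : ∀ v ∈ V, v < c) : dn c V = ∅ := by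
  ext a
  simp only [mem_dn, Finset.notMem_empty, iff_false]
  intro hmem
  have := h _ hmem
  omega

lemma midUV_card (X Y : Finset ℕ) : (midU X Y).card = (midV X Y).card := by
  by_cases h : X.card ≤ Y.card
  · have h1 := card_up_add (Y.card - X.card) X Y
    have h2 := card_dn_add (Y.card - X.card) Y
    simp only [midU, midV, if_pos h]
    omega
  · have h1 := card_dn_add (X.card - Y.card) X
    have h2 := card_up_add (X.card - Y.card) Y X
    simp only [midU, midV, if_neg h]
    omega

lemma weight_mid (X Y : Finset ℕ) :
    tri (kOf X Y) + 4 * ((∑ x ∈ midU X Y, x) + (∑ x ∈ midV X Y, x) + (midU X Y).card)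
      = 4 * ((∑ x ∈ X, x) + (∑ x ∈ Y, x)) + X.card + 3 * Y.card := by
  by_cases h : X.card ≤ Y.card
  · have hc : X.card + (Y.card - X.card) = Y.card := by omega
    have hw := weight_even (Y.card - X.card) X Y hc
    have ht := tri_even (Y.card - X.card)
    simp only [kOf, midU, midV, if_pos h]
    omega
  · have hc : Y.card + (X.card - Y.card) = X.card := by omega
    have hw := weight_odd (X.card - Y.card) X Y hc
    have ht := tri_odd (X.card - Y.card) (by omega)
    simp only [kOf, midU, midV, if_neg h]
    omega

lemma midV_bound {n : ℕ} (X Y : Finset ℕ)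
    (h : 4 * ((∑ x ∈ X, x) + (∑ x ∈ Y, x)) + X.card + 3 * Y.card ≤ n) :
    ∀ v ∈ midV X Y, v < n + 1 := by
  intro v hv
  have hsumY : ∀ y ∈ Y, y ≤ ∑ x ∈ Y, x := fun y hy =>
    Finset.single_le_sum (f := fun x => x) (fun _ _ => Nat.zero_le _) hy
  by_cases hb : X.card ≤ Y.card
  · simp only [midV, if_pos hb] at hv
    rw [mem_dn] at hv
    have := hsumY _ hv
    omega
  · simp only [midV, if_neg hb] at hv
    rw [mem_up] at hv
    rcases hv with ⟨h1, h2⟩ | ⟨h1, _⟩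
    · have := hsumY _ h2
      omega
    · omega

lemma fwdB_card {N : ℕ} (X Y : Finset ℕ) (hVb : ∀ v ∈ midV X Y, v < N) :
    (fwdB N X Y).card = N := by
  have h1 := card_up_add N (midU X Y) (midV X Y)
  have h2 : (midV X Y).filter (· < N) = midV X Y :=
    Finset.filter_true_of_mem hVb
  have h3 := midUV_card X Y
  rw [h2] at h1
  unfold fwdB
  omega

lemma fwdB_sum {n : ℕ} (X Y : Finset ℕ) (hVb : ∀ v ∈ midV X Y, v < n + 1) :
    (∑ x ∈ fwdB (n + 1) X Y, x)
      = (∑ x ∈ midU X Y, x) + (∑ x ∈ midV X Y, x) + (midU X Y).card + tri n := by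
  have h1 := sum_up_add (n + 1) (midU X Y) (midV X Y)
  have h2 : (midV X Y).filter (· < n + 1) = midV X Y :=
    Finset.filter_true_of_mem hVb
  have h3 := midUV_card X Y
  have h4 := sum_range_id_eq_tri n
  rw [h2] at h1
  have h5 : (n + 1) * (midV X Y).card = (n + 1) * (midU X Y).card := by rw [h3]
  unfold fwdB
  omega

lemma bwd_fwd {N : ℕ} (X Y : Finset ℕ) (hVb : ∀ v ∈ midV X Y, v < N) :
    bwdXY N (kOf X Y) (fwdB N X Y) = (X, Y) := by
  have hU' : dn N (fwdB N X Y) = midU X Y := dn_up N _ _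
  have hV' : up N ∅ (fwdB N X Y) = midV X Y := by
    have h := up_dn N (midV X Y) (midU X Y)
    rwa [dn_eq_empty hVb] at h
  by_cases h : X.card ≤ Y.card
  · have hk : kOf X Y = 2 * (Y.card - X.card) := by simp [kOf, h]
    have hmod : kOf X Y % 2 = 0 := by omega
    have hdiv : kOf X Y / 2 = Y.card - X.card := by omega
    rw [bwdXY, if_pos hmod, hdiv, hU', hV']
    simp only [midU, midV, if_pos h]
    rw [dn_up, up_dn]
  · have hc1 : 1 ≤ X.card - Y.card := by omega
    have hk : kOf X Y = 2 * (X.card - Y.card) - 1 := by simp [kOf, h]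
    have hmod : kOf X Y % 2 = 1 := by omega
    have hdiv : (kOf X Y + 1) / 2 = X.card - Y.card := by omega
    rw [bwdXY, if_neg (by omega), hdiv, hU', hV']
    simp only [midU, midV, if_neg h]
    rw [up_dn, dn_up]

lemma mid_bwd {N k : ℕ} (B : Finset ℕ) (hB : B.card = N) :
    midU (bwdXY N k B).1 (bwdXY N k B).2 = dn N B ∧
    midV (bwdXY N k B).1 (bwdXY N k B).2 = up N ∅ B ∧
    kOf (bwdXY N k B).1 (bwdXY N k B).2 = k := by
  have hcU := card_dn_add N B
  have hcV := card_up_add N ∅ B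
  have hUV : (dn N B).card = (up N ∅ B).card := by
    simp only [Finset.card_empty] at hcV
    omega
  by_cases hmod : k % 2 = 0
  · set c := k / 2 with hc
    have hbw : bwdXY N k B = (dn c (dn N B), up c (up N ∅ B) (dn N B)) := by
      rw [bwdXY, if_pos hmod]
    rw [hbw]
    have h1 := card_dn_add c (dn N B)
    have h2 := card_up_add c (up N ∅ B) (dn N B)
    have hle : (dn c (dn N B)).card ≤ (up c (up N ∅ B) (dn N B)).card := by omega
    have hdiff : (up c (up N ∅ B) (dn N B)).card - (dn c (dn N B)).card = c := by omega
    refine ⟨?_, ?_, ?_⟩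
    · simp only [midU, if_pos hle, hdiff]
      exact up_dn c (dn N B) (up N ∅ B)
    · simp only [midV, if_pos hle, hdiff]
      exact dn_up c _ _
    · simp only [kOf, if_pos hle, hdiff]
      omega
  · set c := (k + 1) / 2 with hc
    have hc1 : 1 ≤ c := by omega
    have hbw : bwdXY N k B = (up c (dn N B) (up N ∅ B), dn c (up N ∅ B)) := by
      rw [bwdXY, if_neg hmod]
    rw [hbw]
    have h1 := card_up_add c (dn N B) (up N ∅ B)
    have h2 := card_dn_add c (up N ∅ B)
    have hle : ¬ ((up c (dn N B) (up N ∅ B)).card ≤ (dn c (up N ∅ B)).card) := by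
      have hfle : ((up N ∅ B).filter (· < c)).card ≤ (up N ∅ B).card :=
        Finset.card_filter_le _ _
      omega
    have hdiff : (up c (dn N B) (up N ∅ B)).card - (dn c (up N ∅ B)).card = c := by
      have hfle : ((up N ∅ B).filter (· < c)).card ≤ (up N ∅ B).card :=
        Finset.card_filter_le _ _
      omega
    refine ⟨?_, ?_, ?_⟩
    · simp only [midU, if_neg hle, hdiff]
      exact dn_up c _ _
    · simp only [midV, if_neg hle, hdiff]
      exact up_dn c (up N ∅ B) (dn N B)
    · simp only [kOf, if_neg hle, hdiff]
      omega

lemma fwd_bwd {N k : ℕ} (B : Finset ℕ) (hB : B.card = N) :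
    kOf (bwdXY N k B).1 (bwdXY N k B).2 = k ∧
    fwdB N (bwdXY N k B).1 (bwdXY N k B).2 = B := by
  obtain ⟨h1, h2, h3⟩ := mid_bwd (N := N) (k := k) B hB
  refine ⟨h3, ?_⟩
  rw [fwdB, h1, h2]
  exact up_dn N B ∅

/-! ### beta sets and partition multisets -/

def padded (N : ℕ) (m : Multiset ℕ) : List ℕ :=
  List.replicate (N - Multiset.card m) 0 ++ m.sort (· ≤ ·)

lemma padded_sorted (N : ℕ) (m : Multiset ℕ) : (padded N m).Pairwise (· ≤ ·) := by
  rw [padded, List.pairwise_append]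
  refine ⟨?_, Multiset.pairwise_sort _ _, ?_⟩
  · rw [List.pairwise_replicate]
    right
    exact le_refl 0
  · intro a ha b hb
    have : a = 0 := List.eq_of_mem_replicate ha
    omega

lemma padded_length {N : ℕ} {m : Multiset ℕ} (hc : Multiset.card m ≤ N) :
    (padded N m).length = N := by
  simp only [padded, List.length_append, List.length_replicate, Multiset.length_sort]
  omega

lemma padded_sum (N : ℕ) (m : Multiset ℕ) : (padded N m).sum = m.sum := by
  rw [padded, List.sum_append]
  have h1 : (List.replicate (N - Multiset.card m) 0).sum = 0 := by
    simp [List.sum_replicate]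
  have h2 : (m.sort (· ≤ ·)).sum = m.sum := by
    conv_rhs => rw [← Multiset.sort_eq m (· ≤ ·)]
    rfl
  omega

def betaOf (N : ℕ) (m : Multiset ℕ) : Finset ℕ :=
  ⟨(toBetaA 0 (padded N m) : List ℕ),
    Multiset.coe_nodup.mpr (sorted_toBetaA 0 _ (padded_sorted N m)).nodup⟩

lemma betaOf_sort (N : ℕ) (m : Multiset ℕ) :
    (betaOf N m).sort (· ≤ ·) = toBetaA 0 (padded N m) := by
  refine (fun h1 h2 h3 => List.Perm.eq_of_pairwise' (r := (· ≤ ·)) h2 h3 h1) ?_ ?_ ?_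
  · rw [← Multiset.coe_eq_coe]
    rw [Finset.sort_eq]
    rfl
  · exact Finset.pairwise_sort _ _
  · exact (sorted_toBetaA 0 _ (padded_sorted N m)).imp le_of_lt

lemma betaOf_card {N : ℕ} {m : Multiset ℕ} (hc : Multiset.card m ≤ N) :
    (betaOf N m).card = N := by
  rw [Finset.card, betaOf]
  simp only [Multiset.coe_card, length_toBetaA]
  exact padded_length hc

lemma betaOf_sum {N : ℕ} {m : Multiset ℕ} (hc : Multiset.card m ≤ N) :
    (∑ x ∈ betaOf N m, x) = m.sum + ∑ i ∈ Finset.range N, i := by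
  have h1 : (∑ x ∈ betaOf N m, x) = (toBetaA 0 (padded N m)).sum := by
    rw [Finset.sum, betaOf]
    simp
  rw [h1, sum_toBetaA, padded_sum, padded_length hc]
  simp

def partsOf (B : Finset ℕ) : Multiset ℕ :=
  ↑((toPartsA 0 (B.sort (· ≤ ·))).filter (· ≠ 0))

lemma partsOf_pos (B : Finset ℕ) : ∀ i ∈ partsOf B, 0 < i := by
  intro i hi
  rw [partsOf, Multiset.mem_coe, List.mem_filter] at hi
  have := hi.2
  simp only [ne_eq, decide_not, Bool.not_eq_true', decide_eq_false_iff_not] at this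
  omega

lemma sort_all_nonneg (B : Finset ℕ) : ∀ x ∈ B.sort (· ≤ ·), 0 ≤ x := fun _ _ => Nat.zero_le _

lemma partsOf_sum {N : ℕ} {B : Finset ℕ} (hB : B.card = N) :
    (partsOf B).sum + ∑ i ∈ Finset.range N, i = ∑ x ∈ B, x := by
  have hsorted := (Finset.sortedLT_sort B).pairwise
  have hlen : (B.sort (· ≤ ·)).length = N := by
    rw [Finset.length_sort]; exact hB
  have h1 := sum_toPartsA 0 (B.sort (· ≤ ·)) hsorted (sort_all_nonneg B)
  have h2 : ((toPartsA 0 (B.sort (· ≤ ·))).filter (· ≠ 0)).sum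
      = (toPartsA 0 (B.sort (· ≤ ·))).sum := by
    conv_rhs => rw [sorted_eq_replicate_append _ (sorted_toPartsA 0 _ hsorted (sort_all_nonneg B))]
    rw [List.sum_append]
    simp [List.sum_replicate]
  have h3 : (B.sort (· ≤ ·)).sum = ∑ x ∈ B, x := by
    rw [Finset.sum, Multiset.map_id', ← Finset.sort_eq B (· ≤ ·)]
    rfl
  have h4 : (partsOf B).sum = ((toPartsA 0 (B.sort (· ≤ ·))).filter (· ≠ 0)).sum := by
    rw [partsOf]; simp
  rw [h4, h2, hlen] at *
  simp only [zero_add] at h1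
  omega

lemma partsOf_card_le {N : ℕ} {B : Finset ℕ} (hB : B.card = N) :
    Multiset.card (partsOf B) ≤ N := by
  rw [partsOf, Multiset.coe_card]
  calc ((toPartsA 0 (B.sort (· ≤ ·))).filter (· ≠ 0)).length
      ≤ (toPartsA 0 (B.sort (· ≤ ·))).length := List.length_filter_le _ _
    _ = N := by rw [length_toPartsA, Finset.length_sort]; exact hB

lemma partsOf_betaOf {N : ℕ} {m : Multiset ℕ} (hm : ∀ i ∈ m, 0 < i)
    (hc : Multiset.card m ≤ N) : partsOf (betaOf N m) = m := by
  rw [partsOf, betaOf_sort, toPartsA_toBetaA, padded, List.filter_append]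
  have h1 : (List.replicate (N - Multiset.card m) 0).filter (· ≠ 0) = [] := by
    rw [List.filter_eq_nil_iff]
    intro a ha
    have : a = 0 := List.eq_of_mem_replicate ha
    simp [this]
  have h2 : (m.sort (· ≤ ·)).filter (· ≠ 0) = m.sort (· ≤ ·) := by
    rw [List.filter_eq_self]
    intro a ha
    have : a ∈ m := by
      rw [← Multiset.mem_sort (· ≤ ·)]
      exact ha
    have := hm a this
    simp only [ne_eq, decide_not, Bool.not_eq_true', decide_eq_false_iff_not]
    omega
  rw [h1, h2, List.nil_append, Multiset.sort_eq]

lemma betaOf_partsOf {N : ℕ} {B : Finset ℕ} (hB : B.card = N) : betaOf N (partsOf B) = B := by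
  have hsorted := (Finset.sortedLT_sort B).pairwise
  have hfullsorted := sorted_toPartsA 0 _ hsorted (sort_all_nonneg B)
  have hlenfull : (toPartsA 0 (B.sort (· ≤ ·))).length = N := by
    rw [length_toPartsA, Finset.length_sort]; exact hB
  have hsortparts : (partsOf B).sort (· ≤ ·) = (toPartsA 0 (B.sort (· ≤ ·))).filter (· ≠ 0) := by
    refine (fun h1 h2 h3 => List.Perm.eq_of_pairwise' (r := (· ≤ ·)) h2 h3 h1) ?_ ?_ ?_
    · rw [← Multiset.coe_eq_coe, Multiset.sort_eq]
      rfl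
    · exact Multiset.pairwise_sort _ _
    · exact hfullsorted.filter _
  have hcardparts : Multiset.card (partsOf B) = ((toPartsA 0 (B.sort (· ≤ ·))).filter (· ≠ 0)).length := by
    rw [partsOf, Multiset.coe_card]
  have hpad : padded N (partsOf B) = toPartsA 0 (B.sort (· ≤ ·)) := by
    rw [padded, hsortparts, hcardparts, ← hlenfull]
    exact (sorted_eq_replicate_append _ hfullsorted).symm
  apply Finset.eq_of_veq
  rw [betaOf]
  show ((toBetaA 0 (padded N (partsOf B)) : List ℕ) : Multiset ℕ) = B.val
  rw [hpad, toBetaA_toPartsA 0 _ (sort_all_nonneg B) hsorted, Finset.sort_eq]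

/-! ### splitting odd numbers by residue mod 4 -/

def joinS (X Y : Finset ℕ) : Finset ℕ :=
  X.image (fun x => 4 * x + 1) ∪ Y.image (fun y => 4 * y + 3)

def splitX (S : Finset ℕ) : Finset ℕ := (S.filter (fun s => s % 4 = 1)).image (· / 4)
def splitY (S : Finset ℕ) : Finset ℕ := (S.filter (fun s => s % 4 = 3)).image (· / 4)

lemma mem_joinS {X Y : Finset ℕ} {a : ℕ} :
    a ∈ joinS X Y ↔ (a % 4 = 1 ∧ a / 4 ∈ X) ∨ (a % 4 = 3 ∧ a / 4 ∈ Y) := by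
  simp only [joinS, Finset.mem_union, Finset.mem_image]
  constructor
  · rintro (⟨x, hx, rfl⟩ | ⟨y, hy, rfl⟩)
    · exact Or.inl ⟨by omega, by rw [show (4*x+1)/4 = x by omega]; exact hx⟩
    · exact Or.inr ⟨by omega, by rw [show (4*y+3)/4 = y by omega]; exact hy⟩
  · rintro (⟨h1, h2⟩ | ⟨h1, h2⟩)
    · exact Or.inl ⟨a / 4, h2, by omega⟩
    · exact Or.inr ⟨a / 4, h2, by omega⟩

lemma joinS_odd (X Y : Finset ℕ) : ∀ i ∈ joinS X Y, Odd i := by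
  intro i hi
  rw [mem_joinS] at hi
  rw [Nat.odd_iff]
  omega

lemma joinS_split {S : Finset ℕ} (hS : ∀ i ∈ S, Odd i) :
    joinS (splitX S) (splitY S) = S := by
  ext a
  rw [mem_joinS]
  simp only [splitX, splitY, Finset.mem_image, Finset.mem_filter]
  constructor
  · rintro (⟨h1, s, ⟨hs, hs4⟩, hdiv⟩ | ⟨h1, s, ⟨hs, hs4⟩, hdiv⟩) <;>
    · have : s = a := by omega
      subst this; exact hs
  · intro ha
    have := hS a ha
    rw [Nat.odd_iff] at this
    have h4 : a % 4 = 1 ∨ a % 4 = 3 := by omega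
    rcases h4 with h4 | h4
    · exact Or.inl ⟨h4, a, ⟨ha, h4⟩, rfl⟩
    · exact Or.inr ⟨h4, a, ⟨ha, h4⟩, rfl⟩

lemma split_joinS (X Y : Finset ℕ) : splitX (joinS X Y) = X ∧ splitY (joinS X Y) = Y := by
  constructor <;>
  · ext a
    simp only [splitX, splitY, Finset.mem_image, Finset.mem_filter]
    constructor
    · rintro ⟨s, ⟨hs, hs4⟩, rfl⟩
      rw [mem_joinS] at hs
      rcases hs with ⟨h1, h2⟩ | ⟨h1, h2⟩ <;> first | exact h2 | omega
    · intro ha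
      first
      | exact ⟨4 * a + 1, ⟨mem_joinS.mpr (Or.inl ⟨by omega, by rw [show (4*a+1)/4 = a by omega]; exact ha⟩), by omega⟩, by omega⟩
      | exact ⟨4 * a + 3, ⟨mem_joinS.mpr (Or.inr ⟨by omega, by rw [show (4*a+3)/4 = a by omega]; exact ha⟩), by omega⟩, by omega⟩

lemma joinS_card (X Y : Finset ℕ) : (joinS X Y).card = X.card + Y.card := by
  rw [joinS, Finset.card_union_of_disjoint, Finset.card_image_of_injective _ (fun x y h => by omega),
    Finset.card_image_of_injective _ (fun x y h => by omega)]
  rw [Finset.disjoint_left]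
  rintro a ha hb
  simp only [Finset.mem_image] at ha hb
  obtain ⟨x, _, rfl⟩ := ha
  obtain ⟨y, _, hy⟩ := hb
  omega

lemma sum_affine (c d : ℕ) (X : Finset ℕ) :
    (∑ x ∈ X, (c * x + d)) = c * (∑ x ∈ X, x) + d * X.card := by
  rw [Finset.sum_add_distrib, ← Finset.mul_sum]
  simp only [Finset.sum_const, smul_eq_mul]
  ring

lemma joinS_sum (X Y : Finset ℕ) :
    (∑ x ∈ joinS X Y, x) = 4 * (∑ x ∈ X, x) + X.card + 4 * (∑ x ∈ Y, x) + 3 * Y.card := by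
  rw [joinS, Finset.sum_union]
  · rw [Finset.sum_image (fun x _ y _ h => by omega), Finset.sum_image (fun x _ y _ h => by omega),
      sum_affine, sum_affine]
    ring
  · rw [Finset.disjoint_left]
    rintro a ha hb
    simp only [Finset.mem_image] at ha hb
    obtain ⟨x, _, rfl⟩ := ha
    obtain ⟨y, _, hy⟩ := hb
    omega

/-! ### misc helpers -/

lemma odd_pos' {i : ℕ} (h : Odd i) : 0 < i := by
  rcases h with ⟨j, rfl⟩; omega

lemma val_le_of_subset_toFinset {S : Finset ℕ} {m : Multiset ℕ} (h : S ⊆ m.toFinset) :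
    S.val ≤ m := by
  rw [Multiset.le_iff_count]
  intro a
  have hcount : S.val.count a ≤ 1 := Multiset.nodup_iff_count_le_one.mp S.nodup a
  by_cases ha : a ∈ S
  · have h2 : a ∈ m := Multiset.mem_toFinset.mp (h ha)
    have h3 : 1 ≤ m.count a := Multiset.one_le_count_iff_mem.mpr h2
    omega
  · have : S.val.count a = 0 := by
      rw [Multiset.count_eq_zero]
      exact fun hc => ha hc
    omega

lemma multiset_card_le_sum {m : Multiset ℕ} (h : ∀ i ∈ m, 0 < i) :
    Multiset.card m ≤ m.sum := by
  induction m using Multiset.induction_on with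
  | empty => simp
  | cons a s ih =>
    simp only [Multiset.card_cons, Multiset.sum_cons]
    have ha := h a (Multiset.mem_cons_self a s)
    have := ih (fun i hi => h i (Multiset.mem_cons_of_mem hi))
    omega

lemma sum_map_four_mul (m : Multiset ℕ) : (m.map (fun x => 4 * x)).sum = 4 * m.sum := by
  induction m using Multiset.induction_on with
  | empty => simp
  | cons a s ih =>
    simp only [Multiset.map_cons, Multiset.sum_cons, ih]
    ring

lemma sum_map_div_four {m : Multiset ℕ} (h : ∀ i ∈ m, i % 4 = 0) :
    4 * (m.map (fun x => x / 4)).sum = m.sum := by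
  induction m using Multiset.induction_on with
  | empty => simp
  | cons a s ih =>
    simp only [Multiset.map_cons, Multiset.sum_cons]
    have ha := h a (Multiset.mem_cons_self a s)
    have := ih (fun i hi => h i (Multiset.mem_cons_of_mem hi))
    omega

lemma map_four_div_four {m : Multiset ℕ} (h : ∀ i ∈ m, i % 4 = 0) :
    (m.map (fun x => x / 4)).map (fun x => 4 * x) = m := by
  rw [Multiset.map_map]
  have : ∀ i ∈ m, ((fun x => 4 * x) ∘ (fun x => x / 4)) i = id i := by
    intro i hi
    have := h i hi
    simp only [id, Function.comp]
    omega
  rw [Multiset.map_congr rfl this, Multiset.map_id]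

lemma map_div_four_map (m : Multiset ℕ) :
    ((m.map (fun x => 4 * x)).map (fun x => x / 4)) = m := by
  rw [Multiset.map_map]
  have : ∀ i ∈ m, ((fun x => x / 4) ∘ (fun x => 4 * x)) i = id i := by
    intro i _
    simp only [id, Function.comp]
    omega
  rw [Multiset.map_congr rfl this, Multiset.map_id]

lemma fsum_eq (S : Finset ℕ) : (∑ x ∈ S, x) = S.val.sum := by
  rw [Finset.sum, Multiset.map_id']

/-! ### the types -/

abbrev TypeA (n : ℕ) := {x : Nat.Partition n × Finset ℕ //
    (∀ i ∈ x.1.parts, Odd i) ∧ x.2 ⊆ x.1.parts.toFinset}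

abbrev TypeB (n : ℕ) := {y : Finset ℕ × Multiset ℕ //
    (∀ i ∈ y.1, Odd i) ∧ (∀ i ∈ y.2, Odd i) ∧ (∑ x ∈ y.1, x) + y.2.sum = n}

abbrev TypeC (n : ℕ) := {z : (Finset ℕ × Finset ℕ) × Multiset ℕ //
    (∀ i ∈ z.2, Odd i) ∧
    4 * ((∑ x ∈ z.1.1, x) + (∑ x ∈ z.1.2, x)) + z.1.1.card + 3 * z.1.2.card + z.2.sum = n}

abbrev TypeD (n : ℕ) := {w : ℕ × Finset ℕ × Multiset ℕ //
    w.2.1.card = n + 1 ∧ (∀ i ∈ w.2.2, Odd i) ∧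
    tri w.1 + 4 * (∑ x ∈ w.2.1, x) + w.2.2.sum = n + 4 * tri n}

abbrev FibD (n : ℕ) (k : ℕ) := {w : Finset ℕ × Multiset ℕ //
    w.1.card = n + 1 ∧ (∀ i ∈ w.2, Odd i) ∧
    tri k + 4 * (∑ x ∈ w.1, x) + w.2.sum = n + 4 * tri n}

abbrev FibE (n : ℕ) (k : ℕ) := {μ : Nat.Partition (n - tri k) //
    tri k ≤ n ∧ ∀ i ∈ μ.parts, i % 4 ≠ 2}

/-! ### equivalence A ≃ B -/

def eAB (n : ℕ) : TypeA n ≃ TypeB n where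
  toFun := fun ⟨⟨μ, S⟩, hodd, hsub⟩ => ⟨(S, μ.parts - S.val), by
    have hle : S.val ≤ μ.parts := val_le_of_subset_toFinset hsub
    refine ⟨?_, ?_, ?_⟩
    · intro i hi
      exact hodd i (Multiset.mem_toFinset.mp (hsub hi))
    · intro i hi
      exact hodd i (Multiset.mem_of_le (Multiset.sub_le_self _ _) hi)
    · have h1 : (μ.parts - S.val) + S.val = μ.parts := tsub_add_cancel_of_le hle
      have h2 : ((μ.parts - S.val) + S.val).sum = μ.parts.sum := by rw [h1]
      rw [Multiset.sum_add] at h2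
      rw [fsum_eq]
      rw [μ.parts_sum] at h2
      dsimp only
      omega⟩
  invFun := fun ⟨⟨S, t⟩, hSodd, htodd, hsum⟩ => ⟨(⟨t + S.val, by
      intro i hi
      rcases Multiset.mem_add.mp hi with hi | hi
      · exact odd_pos' (htodd i hi)
      · exact odd_pos' (hSodd i hi), by
      rw [Multiset.sum_add]
      rw [fsum_eq] at hsum
      dsimp only at hsum ⊢
      omega⟩, S), by
    refine ⟨?_, ?_⟩
    · intro i hi
      rcases Multiset.mem_add.mp hi with hi | hi
      · exact htodd i hi
      · exact hSodd i hi
    · intro s hs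
      rw [Multiset.mem_toFinset]
      exact Multiset.mem_add.mpr (Or.inr hs)⟩
  left_inv := by
    rintro ⟨⟨μ, S⟩, hodd, hsub⟩
    have hle : S.val ≤ μ.parts := val_le_of_subset_toFinset hsub
    apply Subtype.ext
    apply Prod.ext
    · apply Nat.Partition.ext
      exact tsub_add_cancel_of_le hle
    · rfl
  right_inv := by
    rintro ⟨⟨S, t⟩, h1, h2, h3⟩
    apply Subtype.ext
    apply Prod.ext
    · rfl
    · exact add_tsub_cancel_right (α := Multiset ℕ) _ _

/-! ### equivalence B ≃ C -/

def eBC (n : ℕ) : TypeB n ≃ TypeC n where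
  toFun := fun ⟨⟨S, t⟩, hSodd, htodd, hsum⟩ => ⟨((splitX S, splitY S), t), by
    refine ⟨htodd, ?_⟩
    have hjoin : joinS (splitX S) (splitY S) = S := joinS_split hSodd
    have hs := joinS_sum (splitX S) (splitY S)
    have hc := joinS_card (splitX S) (splitY S)
    rw [hjoin] at hs hc
    dsimp only at hsum ⊢
    omega⟩
  invFun := fun ⟨⟨⟨X, Y⟩, t⟩, htodd, hsum⟩ => ⟨(joinS X Y, t), by
    refine ⟨joinS_odd X Y, htodd, ?_⟩
    have hs := joinS_sum X Y
    dsimp only at hsum ⊢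
    omega⟩
  left_inv := by
    rintro ⟨⟨S, t⟩, hSodd, htodd, hsum⟩
    apply Subtype.ext
    dsimp only
    rw [joinS_split hSodd]
  right_inv := by
    rintro ⟨⟨⟨X, Y⟩, t⟩, htodd, hsum⟩
    apply Subtype.ext
    dsimp only
    rw [(split_joinS X Y).1, (split_joinS X Y).2]

/-! ### equivalence C ≃ D -/

lemma up_empty_lt (N : ℕ) (B : Finset ℕ) : ∀ v ∈ up N ∅ B, v < N := by
  intro v hv
  rw [mem_up] at hv
  rcases hv with ⟨_, h⟩ | ⟨h, _⟩
  · exact absurd h (Finset.notMem_empty _)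
  · exact h

def eCD (n : ℕ) : TypeC n ≃ TypeD n where
  toFun z := ⟨(kOf z.1.1.1 z.1.1.2, fwdB (n + 1) z.1.1.1 z.1.1.2, z.1.2), by
    obtain ⟨⟨⟨X, Y⟩, t⟩, htodd, hsum⟩ := z
    have hsum : 4 * ((∑ x ∈ X, x) + ∑ x ∈ Y, x) + X.card + 3 * Y.card + t.sum = n := hsum
    dsimp only
    have hVb : ∀ v ∈ midV X Y, v < n + 1 := midV_bound X Y (by omega)
    have hcard := fwdB_card X Y hVb
    have hsumB := fwdB_sum X Y hVb
    have hw := weight_mid X Y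
    exact ⟨hcard, htodd, by omega⟩⟩
  invFun d := ⟨(bwdXY (n + 1) d.1.1 d.1.2.1, d.1.2.2), by
    obtain ⟨⟨k, B, t⟩, hB, htodd, hweight⟩ := d
    have hB : B.card = n + 1 := hB
    have htodd : ∀ i ∈ t, Odd i := htodd
    have hweight : tri k + 4 * (∑ x ∈ B, x) + t.sum = n + 4 * tri n := hweight
    dsimp only
    obtain ⟨hU, hV, hk⟩ := mid_bwd (N := n + 1) (k := k) B hB
    obtain ⟨_, hfb⟩ := fwd_bwd (N := n + 1) (k := k) B hB
    have hVb : ∀ v ∈ midV (bwdXY (n + 1) k B).1 (bwdXY (n + 1) k B).2, v < n + 1 := by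
      rw [hV]
      exact up_empty_lt (n + 1) B
    have hsumB := fwdB_sum (bwdXY (n + 1) k B).1 (bwdXY (n + 1) k B).2 hVb
    have hw := weight_mid (bwdXY (n + 1) k B).1 (bwdXY (n + 1) k B).2
    rw [hfb] at hsumB
    rw [hk] at hw
    exact ⟨htodd, by omega⟩⟩
  left_inv := by
    rintro ⟨⟨⟨X, Y⟩, t⟩, htodd, hsum⟩
    have hsum : 4 * ((∑ x ∈ X, x) + ∑ x ∈ Y, x) + X.card + 3 * Y.card + t.sum = n := hsum
    apply Subtype.ext
    dsimp only
    have hVb : ∀ v ∈ midV X Y, v < n + 1 := midV_bound X Y (by omega)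
    rw [bwd_fwd X Y hVb]
  right_inv := by
    rintro ⟨⟨k, B, t⟩, hB, htodd, hweight⟩
    apply Subtype.ext
    dsimp only
    obtain ⟨hk, hfb⟩ := fwd_bwd (N := n + 1) (k := k) B hB
    rw [hk, hfb]

/-! ### D as a sigma type, fiber equivalence -/

lemma sum_B_ge {n : ℕ} {B : Finset ℕ} (hB : B.card = n + 1) : tri n ≤ ∑ x ∈ B, x := by
  have h1 := partsOf_sum hB
  have h2 := sum_range_id_eq_tri n
  omega

def eDSig (n : ℕ) : TypeD n ≃ Σ k : Fin (n + 1), FibD n k where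
  toFun d := ⟨⟨d.1.1, by
      obtain ⟨⟨k, B, t⟩, hB, htodd, hweight⟩ := d
      have hB : B.card = n + 1 := hB
      have hweight : tri k + 4 * (∑ x ∈ B, x) + t.sum = n + 4 * tri n := hweight
      have h1 := sum_B_ge hB
      have h2 := le_tri k
      dsimp only
      omega⟩, ⟨d.1.2, d.2⟩⟩
  invFun e := ⟨((e.1 : ℕ), e.2.1), e.2.2⟩
  left_inv d := rfl
  right_inv e := rfl

def eFib (n k : ℕ) : FibD n k ≃ FibE n k where
  toFun w := ⟨⟨w.1.2 + (partsOf w.1.1).map (fun x => 4 * x), by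
      intro i hi
      rcases Multiset.mem_add.mp hi with hi | hi
      · exact odd_pos' (w.2.2.1 i hi)
      · obtain ⟨x, hx, rfl⟩ := Multiset.mem_map.mp hi
        have := partsOf_pos _ x hx
        omega, by
      obtain ⟨⟨B, t⟩, hB, htodd, hweight⟩ := w
      have hB : B.card = n + 1 := hB
      have hweight : tri k + 4 * (∑ x ∈ B, x) + t.sum = n + 4 * tri n := hweight
      have h1 := partsOf_sum hB
      have h2 := sum_range_id_eq_tri n
      have h3 := le_tri k
      dsimp only
      rw [Multiset.sum_add, sum_map_four_mul]
      omega⟩, by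
    constructor
    · obtain ⟨⟨B, t⟩, hB, htodd, hweight⟩ := w
      have hB : B.card = n + 1 := hB
      have hweight : tri k + 4 * (∑ x ∈ B, x) + t.sum = n + 4 * tri n := hweight
      have h1 := sum_B_ge hB
      omega
    · intro i hi
      rcases Multiset.mem_add.mp hi with hi | hi
      · have := w.2.2.1 i hi
        rw [Nat.odd_iff] at this
        omega
      · obtain ⟨x, hx, rfl⟩ := Multiset.mem_map.mp hi
        omega⟩
  invFun e := ⟨(betaOf (n + 1) ((e.1.parts.filter (fun i => i % 4 = 0)).map (· / 4)),
      e.1.parts.filter (fun i => ¬ i % 4 = 0)), by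
    obtain ⟨μ, hkn, hmod⟩ := e
    dsimp only
    have hpos : ∀ x ∈ (μ.parts.filter (fun i => i % 4 = 0)).map (· / 4), 0 < x := by
      intro x hx
      obtain ⟨i, hi, rfl⟩ := Multiset.mem_map.mp hx
      rw [Multiset.mem_filter] at hi
      have := μ.parts_pos hi.1
      have := hi.2
      omega
    have hcardle : Multiset.card ((μ.parts.filter (fun i => i % 4 = 0)).map (· / 4)) ≤ n + 1 := by
      rw [Multiset.card_map]
      calc Multiset.card (μ.parts.filter (fun i => i % 4 = 0))
          ≤ Multiset.card μ.parts := Multiset.card_le_card (Multiset.filter_le _ _)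
        _ ≤ μ.parts.sum := multiset_card_le_sum (fun i hi => μ.parts_pos hi)
        _ = n - tri k := μ.parts_sum
        _ ≤ n + 1 := by omega
    refine ⟨betaOf_card hcardle, ?_, ?_⟩
    · intro i hi
      rw [Multiset.mem_filter] at hi
      have := hmod i hi.1
      have h2 := hi.2
      rw [Nat.odd_iff]
      omega
    · have hsumB := betaOf_sum hcardle
      have htri := sum_range_id_eq_tri n
      have hdiv : 4 * (((μ.parts.filter (fun i => i % 4 = 0)).map (· / 4)).sum)
          = (μ.parts.filter (fun i => i % 4 = 0)).sum := by
        apply sum_map_div_four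
        intro i hi
        exact (Multiset.mem_filter.mp hi).2
      have hsplit := Multiset.sum_filter_add_sum_filter_not (s := μ.parts) (fun i => i % 4 = 0)
      have hps := μ.parts_sum
      omega⟩
  left_inv := by
    rintro ⟨⟨B, t⟩, hB, htodd, hweight⟩
    have hB : B.card = n + 1 := hB
    apply Subtype.ext
    dsimp only
    have hfilt : (t + (partsOf B).map (fun x => 4 * x)).filter (fun i => i % 4 = 0)
        = (partsOf B).map (fun x => 4 * x) := by
      rw [Multiset.filter_add]
      have h1 : t.filter (fun i => i % 4 = 0) = 0 := by
        rw [Multiset.filter_eq_nil]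
        intro a ha
        have := htodd a ha
        rw [Nat.odd_iff] at this
        omega
      have h2 : ((partsOf B).map (fun x => 4 * x)).filter (fun i => i % 4 = 0)
          = (partsOf B).map (fun x => 4 * x) := by
        rw [Multiset.filter_eq_self]
        intro a ha
        obtain ⟨x, _, rfl⟩ := Multiset.mem_map.mp ha
        omega
      rw [h1, h2, zero_add]
    have hfilt2 : (t + (partsOf B).map (fun x => 4 * x)).filter (fun i => ¬ i % 4 = 0) = t := by
      rw [Multiset.filter_add]
      have h1 : t.filter (fun i => ¬ i % 4 = 0) = t := by
        rw [Multiset.filter_eq_self]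
        intro a ha
        have := htodd a ha
        rw [Nat.odd_iff] at this
        omega
      have h2 : ((partsOf B).map (fun x => 4 * x)).filter (fun i => ¬ i % 4 = 0) = 0 := by
        rw [Multiset.filter_eq_nil]
        intro a ha
        obtain ⟨x, _, rfl⟩ := Multiset.mem_map.mp ha
        omega
      rw [h1, h2, add_zero]
    apply Prod.ext
    · dsimp only
      rw [hfilt, map_div_four_map, betaOf_partsOf hB]
    · dsimp only
      rw [hfilt2]
  right_inv := by
    rintro ⟨μ, hkn, hmod⟩
    apply Subtype.ext
    apply Nat.Partition.ext
    dsimp only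
    have hpos : ∀ x ∈ (μ.parts.filter (fun i => i % 4 = 0)).map (· / 4), 0 < x := by
      intro x hx
      obtain ⟨i, hi, rfl⟩ := Multiset.mem_map.mp hx
      rw [Multiset.mem_filter] at hi
      have := μ.parts_pos hi.1
      have := hi.2
      omega
    have hcardle : Multiset.card ((μ.parts.filter (fun i => i % 4 = 0)).map (· / 4)) ≤ n + 1 := by
      rw [Multiset.card_map]
      calc Multiset.card (μ.parts.filter (fun i => i % 4 = 0))
          ≤ Multiset.card μ.parts := Multiset.card_le_card (Multiset.filter_le _ _)
        _ ≤ μ.parts.sum := multiset_card_le_sum (fun i hi => μ.parts_pos hi)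
        _ = n - tri k := μ.parts_sum
        _ ≤ n + 1 := by omega
    rw [partsOf_betaOf hpos hcardle]
    have h4 : ((μ.parts.filter (fun i => i % 4 = 0)).map (· / 4)).map (fun x => 4 * x)
        = μ.parts.filter (fun i => i % 4 = 0) := by
      apply map_four_div_four
      intro i hi
      exact (Multiset.mem_filter.mp hi).2
    rw [h4]
    have := Multiset.filter_add_not (fun i => ¬ i % 4 = 0) μ.parts
    have hcongr : μ.parts.filter (fun i => ¬ ¬ i % 4 = 0) = μ.parts.filter (fun i => i % 4 = 0) := by
      apply Multiset.filter_congr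
      intro i _
      tauto
    rw [hcongr] at this
    exact this


lemma cardFibE (n k : ℕ) : Nat.card (FibE n k) = if tri k ≤ n then P2 (n - tri k) else 0 := by
  by_cases h : tri k ≤ n
  · rw [if_pos h]
    exact Nat.card_congr (Equiv.subtypeEquivRight fun μ => and_iff_right h)
  · rw [if_neg h]
    haveI : IsEmpty (FibE n k) := ⟨fun e => h e.2.1⟩
    exact Nat.card_of_isEmpty

end Ov

theorem stmt10 (n : ℕ) :
    pbarOdd n = ∑ᶠ k : ℕ, if k * (k + 1) / 2 ≤ n then P2 (n - k * (k + 1) / 2) else 0 := by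
  have hA : pbarOdd n = Nat.card (Ov.TypeA n) := rfl
  have e := (Ov.eAB n).trans ((Ov.eBC n).trans ((Ov.eCD n).trans ((Ov.eDSig n).trans
    (Equiv.sigmaCongrRight (fun k : Fin (n + 1) => Ov.eFib n k)))))
  rw [hA, Nat.card_congr e, Nat.card_eq_fintype_card, Fintype.card_sigma]
  have hfun : ∀ k : Fin (n + 1), Fintype.card (Ov.FibE n ↑k)
      = if (k : ℕ) * ((k : ℕ) + 1) / 2 ≤ n then P2 (n - (k : ℕ) * ((k : ℕ) + 1) / 2) else 0 := by
    intro k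
    rw [← Nat.card_eq_fintype_card]
    exact Ov.cardFibE n ↑k
  rw [Finset.sum_congr rfl (fun k _ => hfun k)]
  rw [Fin.sum_univ_eq_sum_range (fun k => if k * (k + 1) / 2 ≤ n then P2 (n - k * (k + 1) / 2) else 0) (n + 1)]
  symm
  apply finsum_eq_sum_of_support_subset
  intro k hk
  simp only [Function.mem_support, ne_eq] at hk
  simp only [Finset.coe_range, Set.mem_Iio]
  by_contra hkn
  push_neg at hkn
  apply hk
  rw [if_neg]
  have h1 := Ov.le_tri k
  unfold Ov.tri at h1
  omega
end

section
/- For every positive integer n, the sum ∑_{k≥0} P₂(n - k(k+1)/2) is even, where the sum runs over k with k(k+1)/2 ≤ n. -/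
open PowerSeries Finset

noncomputable section

namespace Stmt11Aux

/-- The base ring: power series over `ZMod 2`. -/
abbrev R : Type := PowerSeries (ZMod 2)

lemma R.two_eq_zero : (2 : R) = 0 := by
  have h : ((2 : ℕ) : R) = PowerSeries.C ((2 : ℕ) : ZMod 2) :=
    (map_natCast (PowerSeries.C (R := ZMod 2)) 2).symm
  have h2 : ((2 : ℕ) : ZMod 2) = 0 := by decide
  rw [h2, map_zero] at h
  simpa using h

lemma R.add_self (a : R) : a + a = 0 := by
  have : a + a = 2 * a := by ring
  rw [this, R.two_eq_zero, zero_mul]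

/-- Triangular numbers. -/
def tri : ℕ → ℕ
  | 0 => 0
  | k + 1 => tri k + (k + 1)

lemma two_tri (k : ℕ) : 2 * tri k = k * k + k := by
  induction k with
  | zero => simp [tri]
  | succ k ih =>
      have h : (k+1) * (k+1) = k * k + 2 * k + 1 := by ring
      simp only [tri]
      omega

lemma tri_eq (k : ℕ) : tri k = k * (k + 1) / 2 := by
  have h1 := two_tri k
  have h2 : k * (k + 1) = k * k + k := by ring
  omega

lemma le_tri (k : ℕ) : k ≤ tri k := by
  induction k with
  | zero => simp [tri]
  | succ k ih => simp only [tri]; omega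

lemma tri_mono {a b : ℕ} (h : a ≤ b) : tri a ≤ tri b := by
  induction b with
  | zero => simp_all
  | succ b ih =>
      rcases Nat.lt_or_ge a (b+1) with h' | h'
      · have := ih (by omega); simp only [tri]; omega
      · have : a = b + 1 := by omega
        simp [this]

lemma tri_add (a b : ℕ) : tri (a + b) = tri a + tri b + a * b := by
  induction b with
  | zero => simp [tri]
  | succ b ih =>
      have : a + (b+1) = (a+b) + 1 := by omega
      rw [this]
      simp only [tri]
      have h : a * (b+1) = a * b + a := by ring
      omega

end Stmt11Aux

namespace Stmt11Aux

/-- Gaussian binomial coefficients mod 2, as power series over `ZMod 2`,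
defined by the Pascal recurrence `[N+1, r+1] = [N, r+1] + X^(N-r) * [N, r]`. -/
def G : ℕ → ℕ → R
  | 0, 0 => 1
  | 0, _ + 1 => 0
  | _ + 1, 0 => 1
  | N + 1, r + 1 => G N (r + 1) + X ^ (N - r) * G N r

@[simp] lemma G_zero_zero : G 0 0 = 1 := rfl
@[simp] lemma G_zero_succ (r : ℕ) : G 0 (r + 1) = 0 := rfl
@[simp] lemma G_succ_zero (N : ℕ) : G (N + 1) 0 = 1 := rfl
lemma G_pascalA (N r : ℕ) : G (N + 1) (r + 1) = G N (r + 1) + X ^ (N - r) * G N r := rfl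

@[simp] lemma G_zero' (N : ℕ) : G N 0 = 1 := by cases N <;> rfl

lemma G_eq_zero {N r : ℕ} (h : N < r) : G N r = 0 := by
  induction N generalizing r with
  | zero => match r, h with | r + 1, _ => rfl
  | succ N ih =>
      match r, h with
      | r + 1, h =>
        rw [G_pascalA, ih (by omega), ih (by omega), mul_zero, add_zero]

lemma G_self (N : ℕ) : G N N = 1 := by
  induction N with
  | zero => rfl
  | succ N ih =>
      rw [G_pascalA, G_eq_zero (by omega), zero_add, Nat.sub_self, pow_zero, one_mul, ih]

/-- Absorption identity and the second Pascal recurrence, proved jointly. -/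
lemma G_absorb_and_pascalB (N : ℕ) :
    (∀ r, (1 + X ^ (r + 1)) * G N (r + 1) = (1 + X ^ (N - r)) * G N r) ∧
    (∀ r, G (N + 1) (r + 1) = X ^ (r + 1) * G N (r + 1) + G N r) := by
  induction N with
  | zero =>
      constructor
      · intro r
        rcases r with _ | r
        · simp [R.add_self (1 : R)]
        · simp
      · intro r
        rcases r with _ | r
        · simp [G_pascalA]
        · simp [G_pascalA, G_eq_zero (show (0:ℕ) < r + 2 by omega),
            G_eq_zero (show (0:ℕ) < r + 1 by omega)]
  | succ N ih =>
      obtain ⟨ihA, ihB⟩ := ih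
      have hA : ∀ r, (1 + X ^ (r + 1)) * G (N + 1) (r + 1) =
          (1 + X ^ (N + 1 - r)) * G (N + 1) r := by
        intro r
        by_cases hr : r ≤ N
        · have lhs_eq : (1 + X ^ (r + 1)) * G (N + 1) (r + 1) =
              (1 + X ^ (N + 1)) * G N r := by
            rw [G_pascalA, mul_add, ihA r]
            obtain ⟨d, hd2⟩ : ∃ d, N = r + d := ⟨N - r, by omega⟩
            subst hd2
            rw [show r + d - r = d by omega]
            ring_nf
            simp [R.two_eq_zero]
          rw [lhs_eq]
          rcases r with _ | r'
          · simp
          · symm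
            rw [ihB r']
            have habs := ihA r'
            have hsub : N + 1 - (r' + 1) = N - r' := by omega
            rw [hsub]
            obtain ⟨d, hd2⟩ : ∃ d, N = r' + 1 + d := ⟨N - (r'+1), by omega⟩
            subst hd2
            rw [show r' + 1 + d - r' = d + 1 by omega] at habs ⊢
            calc (1 + X ^ (d+1)) * (X ^ (r' + 1) * G (r'+1+d) (r' + 1) + G (r'+1+d) r')
                = X ^ (r'+1) * G (r'+1+d) (r'+1) + X ^ (d+1) * X ^ (r'+1) * G (r'+1+d) (r'+1)
                  + (1 + X ^ (d+1)) * G (r'+1+d) r' := by ring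
              _ = X ^ (r'+1) * G (r'+1+d) (r'+1) + X ^ (d+1) * X ^ (r'+1) * G (r'+1+d) (r'+1)
                  + (1 + X ^ (r'+1)) * G (r'+1+d) (r'+1) := by rw [habs]
              _ = (1 + X ^ (r'+1+d+1)) * G (r'+1+d) (r'+1)
                  + (X ^ (r'+1) * G (r'+1+d) (r'+1) + X ^ (r'+1) * G (r'+1+d) (r'+1)) := by
                    rw [show r'+1+d+1 = (d+1) + (r'+1) by omega, pow_add]; ring
              _ = (1 + X ^ (r'+1+d+1)) * G (r'+1+d) (r'+1) := by
                    rw [R.add_self, add_zero]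
        · rw [G_eq_zero (show N + 1 < r + 1 by omega), mul_zero]
          rcases Nat.lt_or_ge (N + 1) r with h' | h'
          · rw [G_eq_zero h', mul_zero]
          · have : r = N + 1 := by omega
            subst this
            rw [Nat.sub_self, pow_zero, G_self]
            simp [R.add_self (1 : R)]
      refine ⟨hA, ?_⟩
      intro r
      have h := hA r
      rw [G_pascalA]
      linear_combination h + (X ^ (N+1-r) * G (N+1) r - X ^ (r+1) * G (N+1) (r+1)) * R.two_eq_zero

lemma G_absorb (N r : ℕ) :
    (1 + X ^ (r + 1)) * G N (r + 1) = (1 + X ^ (N - r)) * G N r :=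
  (G_absorb_and_pascalB N).1 r

lemma G_pascalB (N r : ℕ) :
    G (N + 1) (r + 1) = X ^ (r + 1) * G N (r + 1) + G N r :=
  (G_absorb_and_pascalB N).2 r

end Stmt11Aux

namespace Stmt11Aux

/-- `e m k` is the triangular number `T_{k-m}` (as an integer index). -/
def e (m k : ℕ) : ℕ := tri k + tri m - (k * m + m)

lemma he (m k : ℕ) : e m k + (k * m + m) = tri k + tri m := by
  have h : k * m + m ≤ tri k + tri m := by
    rcases le_or_gt m k with h | h
    · obtain ⟨d, rfl⟩ : ∃ d, k = m + d := ⟨k - m, by omega⟩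
      have h1 := tri_add m d
      have h2 := two_tri m
      have h3 : (m + d) * m = m * m + d * m := by ring
      have h4 : m * d = d * m := by ring
      omega
    · obtain ⟨i, rfl⟩ : ∃ i, m = k + (i + 1) := ⟨m - k - 1, by omega⟩
      have h1 := tri_add k (i + 1)
      have h2 := two_tri k
      have h3 := le_tri (i + 1)
      have h4 : k * (k + (i+1)) = k * k + k * (i+1) := by ring
      omega
  unfold e
  omega

lemma e_right (m d : ℕ) : e m (m + d) = tri d := by
  have h1 := he m (m + d)
  have h2 := tri_add m d
  have h3 := two_tri m
  have h4 : (m + d) * m = m * m + d * m := by ring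
  have h5 : m * d = d * m := by ring
  omega

lemma e_left (m i : ℕ) (h : i + 1 ≤ m) : e m (m - (i + 1)) = tri i := by
  obtain ⟨k, rfl⟩ : ∃ k, m = k + (i + 1) := ⟨m - (i+1), by omega⟩
  have h1 := he (k + (i+1)) k
  have h2 := tri_add k (i + 1)
  have h3 := two_tri k
  have h4 : k * (k + (i+1)) = k * k + k * (i+1) := by ring
  have h5 : tri (i + 1) = tri i + (i + 1) := rfl
  rw [Nat.add_sub_cancel]
  unfold e at *
  omega

lemma E1 (m k : ℕ) : e (m + 1) (k + 1) = e m k := by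
  have h1 := he (m + 1) (k + 1)
  have h2 := he m k
  have h3 : tri (k+1) = tri k + (k+1) := rfl
  have h4 : tri (m+1) = tri m + (m+1) := rfl
  have h5 : (k+1) * (m+1) = k * m + k + m + 1 := by ring
  omega

lemma E2 (m k : ℕ) : e (m + 1) k + k = e m k + m := by
  have h1 := he (m + 1) k
  have h2 := he m k
  have h4 : tri (m+1) = tri m + (m+1) := rfl
  have h5 : k * (m+1) = k * m + k := by ring
  omega

lemma E3 (m k : ℕ) (h : k ≤ 2 * m) : e (m + 1) (k + 2) + (2 * m - k) = e m k + (m + 1) := by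
  have h1 := he (m + 1) (k + 2)
  have h2 := he m k
  have h3 : tri (k+2) = tri k + (k+1) + (k+2) := rfl
  have h4 : tri (m+1) = tri m + (m+1) := rfl
  have h5 : (k+2) * (m+1) = k * m + k + 2 * m + 2 := by ring
  omega

/-- The key three-term recurrence for central Gaussian binomials. -/
lemma G_step (m j : ℕ) :
    G (2*m+2) (j+2) =
      (1 + X ^ (2*m+1)) * G (2*m) (j+1) + X ^ (j+2) * G (2*m) (j+2)
        + X ^ (2*m - j) * G (2*m) j := by
  rcases Nat.lt_or_ge j (2*m) with hj | hj
  · -- main case j ≤ 2m - 1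
    obtain ⟨d, h2m⟩ : ∃ d, 2*m = j + (d + 1) := ⟨2*m - j - 1, by omega⟩
    have b1 : G (2*m+2) (j+2) = X ^ (j+2) * G (2*m+1) (j+2) + G (2*m+1) (j+1) :=
      G_pascalB (2*m+1) (j+1)
    have b2 : G (2*m+1) (j+2) = X ^ (j+2) * G (2*m) (j+2) + G (2*m) (j+1) :=
      G_pascalB (2*m) (j+1)
    have b3 : G (2*m+1) (j+1) = X ^ (j+1) * G (2*m) (j+1) + G (2*m) j :=
      G_pascalB (2*m) j
    have abs1 : (1 + X ^ (j+1)) * G (2*m) (j+1) = (1 + X ^ (d+1)) * G (2*m) j := by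
      have := G_absorb (2*m) j
      rwa [show 2*m - j = d + 1 by omega] at this
    have abs2 : (1 + X ^ (j+2)) * G (2*m) (j+2) = (1 + X ^ d) * G (2*m) (j+1) := by
      have := G_absorb (2*m) (j+1)
      rwa [show 2*m - (j+1) = d by omega] at this
    rw [b1, b2, b3, show 2*m - j = d + 1 by omega, show 2*m+1 = j + d + 2 by omega]
    linear_combination abs1 + X ^ (j+2) * abs2 +
      (-(X ^ (j+2) * G (2*m) (j+2)) + (X ^ (j+2) - 1) * G (2*m) (j+1) + G (2*m) j) *
        R.two_eq_zero
  · rcases Nat.eq_or_lt_of_le hj with hj' | hj'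
    · rw [← hj']
      rw [G_self, G_eq_zero (show 2*m < 2*m+1 by omega),
        G_eq_zero (show 2*m < 2*m+2 by omega), Nat.sub_self, pow_zero, G_self]
      simp
    · rw [G_eq_zero (show 2*m+2 < j+2 by omega), G_eq_zero (show 2*m < j+1 by omega),
        G_eq_zero (show 2*m < j+2 by omega), G_eq_zero (show 2*m < j by omega)]
      simp

lemma G_one_lemma (m : ℕ) :
    G (2*m+2) 1 = (1 + X ^ (2*m+1)) * G (2*m) 0 + X * G (2*m) 1 := by
  have b1 : G (2*m+2) 1 = X ^ 1 * G (2*m+1) 1 + G (2*m+1) 0 := G_pascalB (2*m+1) 0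
  have b2 : G (2*m+1) 1 = X ^ 1 * G (2*m) 1 + G (2*m) 0 := G_pascalB (2*m) 0
  have abs0 : (1 + X ^ 1) * G (2*m) 1 = (1 + X ^ (2*m)) * G (2*m) 0 := by
    have := G_absorb (2*m) 0
    rwa [Nat.sub_zero] at this
  simp only [G_zero'] at *
  rw [b1, b2]
  linear_combination X * abs0 + (X - X * G (2*m) 1) * R.two_eq_zero

end Stmt11Aux

namespace Stmt11Aux

open Polynomial in
/-- `y` is the image of the power series variable in polynomials. -/
def y : Polynomial R := Polynomial.C (PowerSeries.X : R)

/-- Partial product `∏ (1 + q^j z)`. -/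
def F1 (m : ℕ) : Polynomial R := ∏ j ∈ range m, (1 + y ^ (j+1) * Polynomial.X)

/-- Partial product `∏ (z + q^j)`. -/
def F2 (m : ℕ) : Polynomial R := ∏ j ∈ range m, (Polynomial.X + y ^ j)

/-- Right-hand side of the finite Jacobi triple product. -/
def Rm (m : ℕ) : Polynomial R :=
  ∑ k ∈ range (2*m+1), y ^ (e m k) * Polynomial.C (G (2*m) k) * Polynomial.X ^ k

lemma peel2 {M : Type*} [AddCommMonoid M] (f : ℕ → M) (c : ℕ) :
    ∑ k ∈ range (c+2), f k = (∑ j ∈ range c, f (j+2) + f 1) + f 0 := by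
  rw [Finset.sum_range_succ' f (c+1), Finset.sum_range_succ' (fun i => f (i+1)) c]

set_option maxHeartbeats 1600000 in
lemma Rm_mul_step (m : ℕ) :
    Rm m * ((1 + y ^ (m+1) * Polynomial.X) * (Polynomial.X + y ^ m)) = Rm (m+1) := by
  classical
  set Z : Polynomial R := Polynomial.X with hZ
  -- named summand families
  set gg : ℕ → Polynomial R :=
    fun k => y ^ (e m k) * ((1 + y ^ (2*m+1)) * Polynomial.C (G (2*m) k)) with hgg
  set hh : ℕ → Polynomial R :=
    fun k => y ^ (e m k + m) * Polynomial.C (G (2*m) k) with hhh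
  set tt : ℕ → Polynomial R :=
    fun k => y ^ (e m k + (m+1)) * Polynomial.C (G (2*m) k) with htt
  have hggz : gg (2*m+1) = 0 := by
    simp [hgg, G_eq_zero (show 2*m < 2*m+1 by omega)]
  have hhz1 : hh (2*m+1) = 0 := by
    simp [hhh, G_eq_zero (show 2*m < 2*m+1 by omega)]
  have hhz2 : hh (2*m+2) = 0 := by
    simp [hhh, G_eq_zero (show 2*m < 2*m+2 by omega)]
  -- Step 7 : expand the product
  have expand : Rm m * ((1 + y ^ (m+1) * Z) * (Z + y ^ m)) =
      (∑ k ∈ range (2*m+1), gg k * Z ^ (k+1)) +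
      (∑ k ∈ range (2*m+1), hh k * Z ^ k) +
      (∑ k ∈ range (2*m+1), tt k * Z ^ (k+2)) := by
    rw [Rm, Finset.sum_mul, ← Finset.sum_add_distrib, ← Finset.sum_add_distrib]
    refine Finset.sum_congr rfl fun k _ => ?_
    rw [hgg, hhh, htt]
    simp only [pow_add]
    ring
  rw [expand]
  -- decompose Rm (m+1)
  have hRm1 : Rm (m+1) =
      (∑ j ∈ range (2*m+1),
        y ^ (e (m+1) (j+2)) * Polynomial.C (G (2*(m+1)) (j+2)) * Z ^ (j+2)
        + y ^ (e (m+1) 1) * Polynomial.C (G (2*(m+1)) 1) * Z ^ 1)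
      + y ^ (e (m+1) 0) * Polynomial.C (G (2*(m+1)) 0) * Z ^ 0 := by
    rw [Rm, show 2*(m+1)+1 = (2*m+1)+2 by omega,
      peel2 (fun k => y ^ (e (m+1) k) * Polynomial.C (G (2*(m+1)) k) * Z ^ k) (2*m+1)]
  -- per-term rewriting of the generic term
  have hterm : ∀ j ∈ range (2*m+1),
      y ^ (e (m+1) (j+2)) * Polynomial.C (G (2*(m+1)) (j+2)) * Z ^ (j+2) =
        gg (j+1) * Z ^ (j+2) + hh (j+2) * Z ^ (j+2) + tt j * Z ^ (j+2) := by
    intro j hj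
    rw [Finset.mem_range] at hj
    have hj' : j ≤ 2*m := by omega
    have hC : Polynomial.C (G (2*(m+1)) (j+2)) =
        (1 + y ^ (2*m+1)) * Polynomial.C (G (2*m) (j+1))
        + y ^ (j+2) * Polynomial.C (G (2*m) (j+2))
        + y ^ (2*m - j) * Polynomial.C (G (2*m) j) := by
      rw [show 2*(m+1) = 2*m+2 by omega, G_step m j]
      simp only [map_add, map_mul, map_pow, map_one, y]
    rw [hC]
    have hE1 : e (m+1) (j+2) = e m (j+1) := E1 m (j+1)
    have h2 : e m (j+1) + (j+2) = e m (j+2) + m := by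
      have := E2 m (j+2); have := E1 m (j+1); omega
    have h3 : e m (j+1) + (2*m - j) = e m j + (m+1) := by
      have := E3 m j hj'; have := E1 m (j+1); omega
    rw [hE1]
    simp only [hgg, hhh, htt]
    rw [← h2, ← h3]
    simp only [pow_add]
    ring
  rw [Finset.sum_congr rfl hterm] at hRm1
  -- the k = 1 term
  have hone : y ^ (e (m+1) 1) * Polynomial.C (G (2*(m+1)) 1) * Z ^ 1 =
      gg 0 * Z ^ 1 + hh 1 * Z ^ 1 := by
    have hC : Polynomial.C (G (2*(m+1)) 1) =
        (1 + y ^ (2*m+1)) * Polynomial.C (G (2*m) 0) + y * Polynomial.C (G (2*m) 1) := by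
      rw [show 2*(m+1) = 2*m+2 by omega, G_one_lemma m]
      simp only [map_add, map_mul, map_pow, map_one, y]
    rw [hC]
    have hE1 : e (m+1) 1 = e m 0 := E1 m 0
    have h2 : e m 0 + 1 = e m 1 + m := by have := E2 m 1; have := E1 m 0; omega
    rw [hE1]
    simp only [hgg, hhh]
    rw [← h2]
    simp only [pow_add]
    ring
  rw [hone] at hRm1
  -- the k = 0 term
  have hzero : y ^ (e (m+1) 0) * Polynomial.C (G (2*(m+1)) 0) * Z ^ 0 = hh 0 := by
    have h2 : e (m+1) 0 = e m 0 + m := by have := E2 m 0; omega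
    rw [h2]
    simp only [hhh]
    simp [G_zero']
  rw [hzero] at hRm1
  -- reassemble the three sums
  have hS1 : ∑ k ∈ range (2*m+1), gg k * Z ^ (k+1) =
      (∑ j ∈ range (2*m+1), gg (j+1) * Z ^ (j+2)) + gg 0 * Z ^ 1 := by
    have hext : ∑ j ∈ range (2*m+1), gg (j+1) * Z ^ (j+2) =
        ∑ j ∈ range (2*m), gg (j+1) * Z ^ (j+2) := by
      rw [Finset.sum_range_succ, hggz, zero_mul, add_zero]
    rw [hext, Finset.sum_range_succ' (fun k => gg k * Z ^ (k+1)) (2*m)]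
  have hS2 : ∑ k ∈ range (2*m+1), hh k * Z ^ k =
      ((∑ j ∈ range (2*m+1), hh (j+2) * Z ^ (j+2)) + hh 1 * Z ^ 1) + hh 0 := by
    have hext : ∑ k ∈ range (2*m+3), hh k * Z ^ k = ∑ k ∈ range (2*m+1), hh k * Z ^ k := by
      rw [show 2*m+3 = (2*m+2)+1 by omega, Finset.sum_range_succ, hhz2, zero_mul, add_zero,
        Finset.sum_range_succ, hhz1, zero_mul, add_zero]
    rw [← hext, show 2*m+3 = (2*m+1)+2 by omega, peel2 (fun k => hh k * Z ^ k) (2*m+1)]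
    simp only [pow_zero, mul_one, pow_one]
  rw [hS1, hS2, hRm1, Finset.sum_add_distrib, Finset.sum_add_distrib]
  simp only [pow_zero, mul_one, pow_one]
  abel

/-- The finite Jacobi triple product, mod 2. -/
theorem JTP (m : ℕ) : F1 m * F2 m = Rm m := by
  induction m with
  | zero =>
      simp [F1, F2, Rm, show e 0 0 = 0 from rfl]
  | succ m ih =>
      rw [F1, F2, Finset.prod_range_succ, Finset.prod_range_succ, ← F1, ← F2,
        show F1 m * (1 + y ^ (m+1) * Polynomial.X) * (F2 m * (Polynomial.X + y ^ m))
          = F1 m * F2 m * ((1 + y ^ (m+1) * Polynomial.X) * (Polynomial.X + y ^ m)) by ring,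
        ih, Rm_mul_step]

end Stmt11Aux

namespace Stmt11Aux

/-- The partial product `∏_{j=1}^{m} (1 + q^j)`. -/
def psi (m : ℕ) : R := ∏ j ∈ range m, (1 + X ^ (j+1))

lemma eval_F1 (m : ℕ) : Polynomial.eval (1 : R) (F1 m) = psi m := by
  rw [F1, Polynomial.eval_prod, psi]
  refine Finset.prod_congr rfl fun j _ => ?_
  simp [y]

lemma eval_F2_v : ∀ m : ℕ, 1 ≤ m → Polynomial.eval (1 : R) (F2 m) = 0 := by
  intro m hm
  induction m with
  | zero => omega
  | succ m ih =>
      rw [F2, Finset.prod_range_succ, ← F2, Polynomial.eval_mul]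
      rcases Nat.eq_or_lt_of_le hm with h | h
      · have hm0 : m = 0 := by omega
        subst hm0
        simp [F2, y, R.add_self (1 : R)]
      · rw [ih (by omega), zero_mul]

lemma eval_deriv_F2 : ∀ m : ℕ, Polynomial.eval (1 : R) (Polynomial.derivative (F2 (m+1))) = psi m := by
  intro m
  induction m with
  | zero =>
      simp [F2, y, psi]
  | succ m ih =>
      rw [F2, Finset.prod_range_succ, ← F2, Polynomial.derivative_mul, Polynomial.eval_add,
        Polynomial.eval_mul, Polynomial.eval_mul, ih]
      have h1 : Polynomial.eval (1 : R) (Polynomial.X + y ^ (m+1)) = 1 + X ^ (m+1) := by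
        simp [y]
      have h2 : Polynomial.eval (1 : R)
          (Polynomial.derivative (Polynomial.X + y ^ (m+1) : Polynomial R)) = 1 := by
        have : Polynomial.derivative (Polynomial.X + y ^ (m+1) : Polynomial R) = 1 := by
          rw [Polynomial.derivative_add, Polynomial.derivative_X, y, ← Polynomial.C_pow,
            Polynomial.derivative_C, add_zero]
        rw [this, Polynomial.eval_one]
      rw [h1, h2, eval_F2_v (m+1) (by omega), zero_mul, add_zero]
      simp [psi, Finset.prod_range_succ]

/-- The key identity: `ψ_{m+1} ψ_m = Σ_k k q^{T(k-m-1)} [2m+2, k]` (mod 2). -/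
lemma key_identity (m : ℕ) :
    psi (m+1) * psi m =
      ∑ k ∈ range (2*(m+1)+1), (k : R) * (X ^ (e (m+1) k) * G (2*(m+1)) k) := by
  have h := congrArg (fun p => Polynomial.eval (1 : R) (Polynomial.derivative p)) (JTP (m+1))
  rw [Polynomial.derivative_mul, Polynomial.eval_add, Polynomial.eval_mul, Polynomial.eval_mul,
    eval_F2_v (m+1) (by omega), mul_zero, zero_add, eval_F1, eval_deriv_F2] at h
  rw [h, Rm, Polynomial.derivative_sum, Polynomial.eval_finset_sum]
  refine Finset.sum_congr rfl fun k _ => ?_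
  have hterm : (y ^ (e (m+1) k) * Polynomial.C (G (2*(m+1)) k) * Polynomial.X ^ k : Polynomial R)
      = Polynomial.C (X ^ (e (m+1) k) * G (2*(m+1)) k) * Polynomial.X ^ k := by
    rw [y, ← Polynomial.C_pow, ← Polynomial.C_mul]
  rw [hterm, Polynomial.derivative_C_mul_X_pow]
  simp only [Polynomial.eval_mul, Polynomial.eval_C, Polynomial.eval_pow, Polynomial.eval_X,
    one_pow, mul_one]
  ring

lemma cast_even_R {m : ℕ} (hm : Even m) : ((m : ℕ) : R) = 0 := by
  obtain ⟨t, rfl⟩ := hm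
  push_cast
  have : ((t : R) + (t : R)) = 0 := R.add_self _
  linear_combination this

/-- Exact evaluation of the weighted theta sum. -/
lemma Lstar (m : ℕ) (hm : Even m) :
    ∑ k ∈ range (2*m+1), (k : R) * X ^ (e m k) = ∑ i ∈ range m, X ^ (tri i) := by
  have hsplit : ∑ k ∈ range (2*m+1), (k : R) * X ^ (e m k)
      = (∑ k ∈ range (m+1), (k : R) * X ^ (e m k))
        + ∑ i ∈ range m, ((m+1+i : ℕ) : R) * X ^ (e m (m+1+i)) := by
    rw [show 2*m+1 = (m+1) + m by omega, Finset.sum_range_add]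
  have hupper : ∀ i ∈ range m, ((m+1+i : ℕ) : R) * X ^ (e m (m+1+i))
      = ((i+1 : ℕ) : R) * X ^ (tri (i+1)) := by
    intro i _
    rw [show m+1+i = m + (i+1) by omega, e_right m (i+1)]
    have hc : ((m + (i+1) : ℕ) : R) = ((i+1 : ℕ) : R) := by
      push_cast
      rw [cast_even_R hm]
      ring
    rw [hc]
  have hlower : ∑ k ∈ range (m+1), (k : R) * X ^ (e m k)
      = ∑ j ∈ range m, ((j+1 : ℕ) : R) * X ^ (tri j) := by
    rw [← Finset.sum_range_reflect (fun k => (k : R) * X ^ (e m k)) (m+1)]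
    simp only [Nat.add_sub_cancel]
    rw [Finset.sum_range_succ' (fun j => ((m - j : ℕ) : R) * X ^ (e m (m - j))) m]
    have htop : ((m - 0 : ℕ) : R) * X ^ (e m (m - 0)) = 0 := by
      rw [Nat.sub_zero, cast_even_R hm, zero_mul]
    rw [htop, add_zero]
    refine Finset.sum_congr rfl fun j hj => ?_
    rw [Finset.mem_range] at hj
    rw [e_left m j (by omega)]
    have hsum : (m - (j+1)) + (j+1) = m := by omega
    have h0 : ((m - (j+1) : ℕ) : R) + ((j+1 : ℕ) : R) = 0 := by
      rw [← Nat.cast_add, hsum, cast_even_R hm]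
    have hc : ((m - (j+1) : ℕ) : R) = ((j+1 : ℕ) : R) := by
      linear_combination h0 - R.add_self ((j+1 : ℕ) : R)
    rw [hc]
  have hshift : ∑ i ∈ range m, ((i+1 : ℕ) : R) * X ^ (tri (i+1))
      = ∑ i ∈ range m, ((i : ℕ) : R) * X ^ (tri i) := by
    have h1 := Finset.sum_range_succ' (fun k => ((k : ℕ) : R) * X ^ (tri k)) m
    have h2 := Finset.sum_range_succ (fun k => ((k : ℕ) : R) * X ^ (tri k)) m
    simp only [Nat.cast_zero, zero_mul, add_zero, cast_even_R hm] at h1 h2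
    rw [← h1, h2]
  rw [hsplit, Finset.sum_congr rfl hupper, hlower, hshift, ← Finset.sum_add_distrib]
  refine Finset.sum_congr rfl fun j _ => ?_
  have hc : ((j+1 : ℕ) : R) + ((j : ℕ) : R) = 1 := by
    push_cast
    linear_combination R.add_self ((j : ℕ) : R)
  calc ((j+1 : ℕ) : R) * X ^ (tri j) + ((j : ℕ) : R) * X ^ (tri j)
      = (((j+1 : ℕ) : R) + ((j : ℕ) : R)) * X ^ (tri j) := by ring
    _ = X ^ (tri j) := by rw [hc, one_mul]

end Stmt11Aux

namespace Stmt11Aux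

/-- Agreement of power series coefficients up to degree `n`. -/
def Apx (n : ℕ) (f g : R) : Prop :=
  ∀ p ≤ n, coeff p f = coeff p g

namespace Apx

variable {n : ℕ} {f g h k : R}

lemma refl (f : R) : Apx n f f := fun _ _ => rfl

lemma symm (hfg : Apx n f g) : Apx n g f := fun p hp => (hfg p hp).symm

lemma trans (h1 : Apx n f g) (h2 : Apx n g h) : Apx n f h :=
  fun p hp => (h1 p hp).trans (h2 p hp)

lemma add (h1 : Apx n f g) (h2 : Apx n h k) : Apx n (f + h) (g + k) := by
  intro p hp
  simp only [map_add, h1 p hp, h2 p hp]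

lemma mul_right (h1 : Apx n f g) : Apx n (f * h) (g * h) := by
  intro p hp
  rw [PowerSeries.coeff_mul, PowerSeries.coeff_mul]
  refine Finset.sum_congr rfl fun x hx => ?_
  rw [Finset.HasAntidiagonal.mem_antidiagonal] at hx
  rw [h1 x.1 (by omega)]

lemma mul (h1 : Apx n f g) (h2 : Apx n h k) : Apx n (f * h) (g * k) :=
  (h1.mul_right).trans (by rw [mul_comm g h, mul_comm g k]; exact h2.mul_right)

lemma of_eq (hfg : f = g) : Apx n f g := by subst hfg; exact refl f

end Apx

lemma Apx_X_pow_mul {n a : ℕ} (f : R) (ha : n < a) : Apx n (X ^ a * f) 0 := by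
  intro p hp
  rw [PowerSeries.coeff_X_pow_mul', if_neg (by omega), map_zero]

lemma Apx_one_add_X_pow {n a : ℕ} (ha : n < a) : Apx n (1 + X ^ a) 1 := by
  intro p hp
  rw [map_add, PowerSeries.coeff_X_pow, if_neg (by omega), add_zero]

lemma Apx_prod_one {n : ℕ} {ι : Type*} (s : Finset ι) (f : ι → R)
    (h : ∀ i ∈ s, Apx n (f i) 1) : Apx n (∏ i ∈ s, f i) 1 := by
  classical
  induction s using Finset.induction_on with
  | empty => simpa using Apx.refl (n := n) 1
  | @insert a s' hx ih =>
      rw [Finset.prod_insert hx]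
      have := (h a (Finset.mem_insert_self a s')).mul
        (ih fun i hi => h i (Finset.mem_insert_of_mem hi))
      rwa [one_mul] at this
  
lemma Apx_sum {n : ℕ} {ι : Type*} (s : Finset ι) (f g : ι → R)
    (h : ∀ i ∈ s, Apx n (f i) (g i)) : Apx n (∑ i ∈ s, f i) (∑ i ∈ s, g i) := by
  intro p hp
  rw [map_sum, map_sum]
  exact Finset.sum_congr rfl fun i hi => h i hi p hp

/-- Adjacent central Gaussian binomials agree up to degree `n`. -/
lemma G_adj {n N j : ℕ} (hj : n ≤ j) (hN : n + j ≤ N) :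
    Apx n (G (N+1) (j+1)) (G (N+1) j) := by
  have hA : Apx n (G (N+1) (j+1)) (G N j) := by
    rw [G_pascalB N j]
    have h1 : Apx n (X ^ (j+1) * G N (j+1)) 0 := Apx_X_pow_mul _ (by omega)
    have := h1.add (Apx.refl (n := n) (G N j))
    rwa [zero_add] at this
  have hB : Apx n (G (N+1) j) (G N j) := by
    rcases j with _ | r
    · simp only [G_zero']
      exact Apx.refl 1
    · rw [G_pascalA N r]
      have h1 : Apx n (X ^ (N - r) * G N r) 0 := Apx_X_pow_mul _ (by omega)
      have := (Apx.refl (n := n) (G N (r+1))).add h1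
      rwa [add_zero] at this
  exact hA.trans hB.symm

/-- All central Gaussian binomials at level `4n+4` agree with the one at position `n`. -/
lemma G_central {n : ℕ} : ∀ j, n ≤ j → j ≤ 3*n+3 → Apx n (G (4*n+4) j) (G (4*n+4) n) := by
  intro j hnj
  induction j, hnj using Nat.le_induction with
  | base => intro _; exact Apx.refl _
  | succ j hj ih =>
      intro hup
      have hstep : Apx n (G (4*n+4) (j+1)) (G (4*n+4) j) := by
        have : (4*n+4 : ℕ) = (4*n+3) + 1 := by omega
        rw [this]
        exact G_adj hj (by omega)
      exact hstep.trans (ih (by omega))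

/-- `ψ_m · [2m, m] ≈ 1`. -/
lemma psi_mul_central {n : ℕ} {m : ℕ} (hm : n < m) :
    ∀ r ≤ m, Apx n ((∏ j ∈ range r, (1 + X ^ (j+1))) * G (2*m) r) 1 := by
  intro r
  induction r with
  | zero => intro _; simp only [Finset.range_zero, Finset.prod_empty, G_zero', one_mul]
            exact Apx.refl 1
  | succ r ih =>
      intro hr
      have heq : (∏ j ∈ range (r+1), (1 + X ^ (j+1))) * G (2*m) (r+1)
          = (1 + X ^ (2*m - r)) * ((∏ j ∈ range r, (1 + X ^ (j+1))) * G (2*m) r) := by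
        rw [Finset.prod_range_succ]
        calc (∏ j ∈ range r, (1 + X ^ (j+1))) * (1 + X ^ (r+1)) * G (2*m) (r+1)
            = (∏ j ∈ range r, (1 + X ^ (j+1))) * ((1 + X ^ (r+1)) * G (2*m) (r+1)) := by ring
          _ = (∏ j ∈ range r, (1 + X ^ (j+1))) * ((1 + X ^ (2*m - r)) * G (2*m) r) := by
              rw [G_absorb]
          _ = _ := by ring
      rw [heq]
      have h1 : Apx n (1 + X ^ (2*m - r)) 1 := Apx_one_add_X_pow (by omega)
      have := h1.mul (ih (by omega))
      rwa [one_mul] at this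

end Stmt11Aux

namespace Stmt11Aux

def Oprod (a : ℕ) : R := ∏ j ∈ range a, (1 + X ^ (2*j+1))
def Qprod (b : ℕ) : R := ∏ j ∈ range b, (1 + X ^ (4*j+4))
def Ev (m : ℕ) : R := ∏ j ∈ range m, (1 + X ^ (2*j+2))
def Ttr (n : ℕ) : R := ∑ i ∈ range (n+1), X ^ (tri i)

lemma sq_fac (b : R) : (1 + b) * (1 + b) = 1 + b * b := by
  linear_combination b * R.two_eq_zero

lemma psi_sq (m : ℕ) : psi m * psi m = Ev m := by
  rw [psi, Ev, ← Finset.prod_mul_distrib]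
  refine Finset.prod_congr rfl fun j _ => ?_
  rw [sq_fac, ← pow_add, show (j+1) + (j+1) = 2*j+2 by omega]

lemma Ev_sq (m : ℕ) : Ev m * Ev m = Qprod m := by
  rw [Ev, Qprod, ← Finset.prod_mul_distrib]
  refine Finset.prod_congr rfl fun j _ => ?_
  rw [sq_fac, ← pow_add, show (2*j+2) + (2*j+2) = 4*j+4 by omega]

lemma psi_odd_split : ∀ u : ℕ, psi (2*u+1) = Oprod (u+1) * Ev u := by
  intro u
  induction u with
  | zero => simp [psi, Oprod, Ev]
  | succ u ih =>
      have h1 : 2*(u+1)+1 = (2*u+1) + 1 + 1 := by omega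
      rw [h1, psi, Finset.prod_range_succ, Finset.prod_range_succ, ← psi, ih,
        show Oprod (u+1+1) = Oprod (u+1) * (1 + X ^ (2*(u+1)+1)) from Finset.prod_range_succ _ (u+1),
        show Ev (u+1) = Ev u * (1 + X ^ (2*u+2)) from Finset.prod_range_succ _ u,
        show 2*u+1+1 = 2*u+2 by omega, show 2*u+1+1+1 = 2*(u+1)+1 by omega]
      ring

lemma psi_apx {n a b : ℕ} (hn : n ≤ a) (hab : a ≤ b) : Apx n (psi b) (psi a) := by
  obtain ⟨c, rfl⟩ : ∃ c, b = a + c := ⟨b - a, by omega⟩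
  rw [psi, Finset.prod_range_add, ← psi]
  have htail : Apx n (∏ i ∈ range c, (1 + X ^ (a+i+1))) 1 :=
    Apx_prod_one _ _ fun i _ => Apx_one_add_X_pow (by omega)
  have := (Apx.refl (n := n) (psi a)).mul htail
  rwa [mul_one] at this

lemma R2 (n : ℕ) :
    Apx n (psi (2*n+2) * psi (2*n+2) * psi (2*n+1)) (Oprod (n+1) * Qprod (n+1)) := by
  rw [psi_sq, psi_odd_split n]
  -- Ev (2n+2) * (Oprod (n+1) * Ev n)
  have hsplit : Ev (2*n+2) = Ev n * ∏ i ∈ range (n+2), (1 + X ^ (2*(n+i)+2)) := by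
    rw [Ev, show 2*n+2 = n + (n+2) by omega, Finset.prod_range_add, ← Ev]
  rw [hsplit]
  have heq : Ev n * (∏ i ∈ range (n+2), (1 + X ^ (2*(n+i)+2))) * (Oprod (n+1) * Ev n)
      = (Oprod (n+1) * Qprod n) * (∏ i ∈ range (n+2), (1 + X ^ (2*(n+i)+2))) := by
    rw [← Ev_sq]; ring
  rw [heq]
  have htail : Apx n (∏ i ∈ range (n+2), (1 + X ^ (2*(n+i)+2))) 1 :=
    Apx_prod_one _ _ fun i _ => Apx_one_add_X_pow (by omega)
  have h1 : Apx n ((Oprod (n+1) * Qprod n) * (∏ i ∈ range (n+2), (1 + X ^ (2*(n+i)+2))))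
      (Oprod (n+1) * Qprod n) := by
    have := (Apx.refl (n := n) (Oprod (n+1) * Qprod n)).mul htail
    rwa [mul_one] at this
  refine h1.trans ?_
  have hq : Qprod (n+1) = Qprod n * (1 + X ^ (4*n+4)) := by
    rw [Qprod, Finset.prod_range_succ, ← Qprod]
  rw [hq]
  have := (Apx.refl (n := n) (Oprod (n+1) * Qprod n)).mul
    (Apx_one_add_X_pow (n := n) (a := 4*n+4) (by omega)).symm
  rwa [mul_one, mul_assoc] at this

lemma e_bound {n k : ℕ} (h : e (2*n+2) k ≤ n) : n+1 ≤ k ∧ k ≤ 3*n+3 := by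
  rcases le_or_gt k (2*n+2) with hk | hk
  · constructor
    · by_contra hc
      push_neg at hc
      have hi : k = (2*n+2) - ((2*n+2-k-1) + 1) := by omega
      have he := e_left (2*n+2) (2*n+2-k-1) (by omega)
      rw [← hi] at he
      have := le_tri (2*n+2-k-1)
      omega
    · omega
  · obtain ⟨d, rfl⟩ : ∃ d, k = (2*n+2) + d := ⟨k - (2*n+2), by omega⟩
    have he := e_right (2*n+2) d
    have := le_tri d
    constructor
    · omega
    · omega

/-- The central truncated Gauss/Jacobi identity:
the theta series agrees with `∏ (1+q^odd) ∏ (1+q^{4k})` up to degree `n`. -/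
theorem Ttr_apx (n : ℕ) : Apx n (Ttr n) (Oprod (n+1) * Qprod (n+1)) := by
  set P : R := G (4*n+4) n with hP
  -- Step 1: the key identity at m = 2n+1
  have hK : psi (2*n+2) * psi (2*n+1) =
      ∑ k ∈ range (4*n+5), (k : R) * (X ^ (e (2*n+2) k) * G (4*n+4) k) := by
    have := key_identity (2*n+1)
    rw [show 2*n+1+1 = 2*n+2 by omega, show 2*(2*n+2)+1 = 4*n+5 by omega,
      show 2*(2*n+2) = 4*n+4 by omega] at this
    exact this
  -- Step 2: replace each binomial by the central one
  have hW : Apx n (∑ k ∈ range (4*n+5), (k : R) * (X ^ (e (2*n+2) k) * G (4*n+4) k))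
      (∑ k ∈ range (4*n+5), ((k : R) * X ^ (e (2*n+2) k)) * P) := by
    refine Apx_sum _ _ _ fun k hk => ?_
    rcases le_or_gt (e (2*n+2) k) n with he | he
    · obtain ⟨h1, h2⟩ := e_bound he
      have hcent : Apx n (G (4*n+4) k) P := G_central k (by omega) (by omega)
      have := (Apx.refl (n := n) ((k : R) * X ^ (e (2*n+2) k))).mul hcent
      refine Apx.trans (Apx.of_eq (by ring)) this
    · have hz1 : Apx n ((k : R) * (X ^ (e (2*n+2) k) * G (4*n+4) k)) 0 := by
        refine Apx.trans (Apx.of_eq (show _ = X ^ (e (2*n+2) k) * ((k:R) * G (4*n+4) k) by ring))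
          (Apx_X_pow_mul _ he)
      have hz2 : Apx n (((k : R) * X ^ (e (2*n+2) k)) * P) 0 := by
        refine Apx.trans (Apx.of_eq (show _ = X ^ (e (2*n+2) k) * ((k:R) * P) by ring))
          (Apx_X_pow_mul _ he)
      exact hz1.trans hz2.symm
  -- Step 3: evaluate the weight sum exactly
  have hL : ∑ k ∈ range (4*n+5), ((k : R) * X ^ (e (2*n+2) k)) * P
      = (∑ i ∈ range (2*n+2), X ^ (tri i)) * P := by
    rw [← Finset.sum_mul]
    congr 1
    have := Lstar (2*n+2) (by exact ⟨n+1, by omega⟩)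
    rw [show 2*(2*n+2)+1 = 4*n+5 by omega] at this
    exact this
  -- Step 4: truncate the theta sum
  have hT : Apx n ((∑ i ∈ range (2*n+2), X ^ (tri i)) * P) (Ttr n * P) := by
    refine Apx.mul_right ?_
    rw [show 2*n+2 = (n+1) + (n+1) by omega, Finset.sum_range_add, Ttr]
    have htail : Apx n (∑ i ∈ range (n+1), X ^ (tri (n+1+i))) 0 := by
      have h0 : Apx n (∑ i ∈ range (n+1), X ^ (tri (n+1+i)))
          (∑ _i ∈ range (n+1), (0 : R)) := by
        refine Apx_sum _ _ _ fun i _ => ?_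
        have ha : n < tri (n+1+i) := by
          have := le_tri (n+1+i); omega
        have := Apx_X_pow_mul (n := n) 1 ha
        rwa [mul_one] at this
      refine h0.trans (Apx.of_eq (by simp))
    have := (Apx.refl (n := n) (∑ i ∈ range (n+1), X ^ (tri i))).add htail
    rwa [add_zero] at this
  -- combine: Ttr * P ≈ psi (2n+2) * psi (2n+1)
  have hTP : Apx n (Ttr n * P) (psi (2*n+2) * psi (2*n+1)) :=
    ((hT.symm.trans (Apx.of_eq hL.symm)).trans hW.symm).trans (Apx.of_eq hK.symm)
  -- Step 5: Ttr ≈ Ttr * (psi n * P)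
  have hR1 : Apx n (psi n * P) 1 := by
    have := psi_mul_central (n := n) (m := 2*n+2) (by omega) n (by omega)
    rw [show 2*(2*n+2) = 4*n+4 by omega] at this
    exact this
  have hT1 : Apx n (Ttr n) (Ttr n * (psi n * P)) := by
    have := (Apx.refl (n := n) (Ttr n)).mul hR1
    rw [mul_one] at this
    exact this.symm
  -- Step 6: chain everything
  have hT2 : Apx n (Ttr n * (psi n * P)) ((psi (2*n+2) * psi (2*n+1)) * psi n) := by
    refine Apx.trans (Apx.of_eq (show Ttr n * (psi n * P) = (Ttr n * P) * psi n by ring)) ?_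
    exact hTP.mul_right
  have hT3 : Apx n ((psi (2*n+2) * psi (2*n+1)) * psi n)
      (psi (2*n+2) * psi (2*n+2) * psi (2*n+1)) := by
    have hps : Apx n (psi n) (psi (2*n+2)) := (psi_apx (le_refl n) (by omega)).symm
    have := (Apx.refl (n := n) (psi (2*n+2) * psi (2*n+1))).mul hps
    refine this.trans (Apx.of_eq (by ring))
  exact ((hT1.trans hT2).trans hT3).trans (R2 n)

end Stmt11Aux

namespace Stmt11Aux

open Finset.HasAntidiagonal

section Counting
open scoped Classical
variable {α : Type*}
universe u
variable {ι : Type u}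

/-- A convenience constructor for the power series whose coefficients indicate a subset. -/
def indicatorSeries (α : Type*) [Semiring α] (s : Set ℕ) : PowerSeries α :=
  PowerSeries.mk fun n => if n ∈ s then 1 else 0

theorem coeff_indicator (s : Set ℕ) [Semiring α] (n : ℕ) :
    coeff n (indicatorSeries α s) = if n ∈ s then 1 else 0 :=
  coeff_mk _ _

theorem coeff_indicator_pos (s : Set ℕ) [Semiring α] (n : ℕ) (h : n ∈ s) :
    coeff n (indicatorSeries α s) = 1 := by rw [coeff_indicator, if_pos h]

theorem coeff_indicator_neg (s : Set ℕ) [Semiring α] (n : ℕ) (h : n ∉ s) :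
    coeff n (indicatorSeries α s) = 0 := by rw [coeff_indicator, if_neg h]

theorem constantCoeff_indicator (s : Set ℕ) [Semiring α] :
    constantCoeff (indicatorSeries α s) = if 0 ∈ s then 1 else 0 :=
  rfl

theorem two_series (i : ℕ) [Semiring α] :
    1 + (X : PowerSeries α) ^ i.succ = indicatorSeries α {0, i.succ} := by
  ext n
  simp only [coeff_indicator, coeff_one, coeff_X_pow, Set.mem_insert_iff, Set.mem_singleton_iff,
    map_add]
  cases' n with d
  · simp [(Nat.succ_ne_zero i).symm]
  · simp [Nat.succ_ne_zero d]

theorem num_series' [Field α] (i : ℕ) :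
    (1 - (X : PowerSeries α) ^ (i + 1))⁻¹ = indicatorSeries α {k | i + 1 ∣ k} := by
  rw [PowerSeries.inv_eq_iff_mul_eq_one]
  · ext n
    cases n with
    | zero => simp [mul_sub, zero_pow, constantCoeff_indicator]
    | succ n =>
      simp only [coeff_one, if_false, mul_sub, mul_one, coeff_indicator,
        LinearMap.map_sub, reduceCtorEq]
      simp_rw [coeff_mul, coeff_X_pow, coeff_indicator, @boole_mul _ _ _ _]
      rw [@sum_ite _ _ _ _ _ (fun _ => Classical.propDecidable _), sum_ite]
      simp_rw [@filter_filter _ _ _ _ _, sum_const_zero, add_zero, sum_const, nsmul_eq_mul, mul_one,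
        sub_eq_iff_eq_add, zero_add]
      symm
      split_ifs with h
      · suffices #{a ∈ antidiagonal (n + 1) | i + 1 ∣ a.fst ∧ a.snd = i + 1} = 1 by
          simp only [Set.mem_setOf_eq]; convert congr_arg ((↑) : ℕ → α) this; norm_cast
        rw [card_eq_one]
        cases' h with p hp
        refine ⟨((i + 1) * (p - 1), i + 1), ?_⟩
        ext ⟨a₁, a₂⟩
        simp only [mem_filter, Prod.mk_inj, HasAntidiagonal.mem_antidiagonal, mem_singleton]
        constructor
        · rintro ⟨a_left, ⟨a, rfl⟩, rfl⟩
          refine ⟨?_, rfl⟩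
          rw [Nat.mul_sub_left_distrib, ← hp, ← a_left, mul_one, Nat.add_sub_cancel]
        · rintro ⟨rfl, rfl⟩
          match p with
          | 0 => rw [mul_zero] at hp; cases hp
          | p + 1 => rw [hp]; simp [mul_add]
      · suffices #{a ∈ antidiagonal (n + 1) | i + 1 ∣ a.fst ∧ a.snd = i + 1} = 0 by
          simp only [Set.mem_setOf_eq]; convert congr_arg ((↑) : ℕ → α) this; norm_cast
        rw [card_eq_zero]
        apply eq_empty_of_forall_notMem
        simp only [Prod.forall, mem_filter, not_and, HasAntidiagonal.mem_antidiagonal]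
        rintro _ h₁ h₂ ⟨a, rfl⟩ rfl
        apply h
        simp [← h₂]
  · simp [zero_pow]


-- The main workhorse of the partition theorem proof.
theorem partialGF_prop (α : Type*) [CommSemiring α] (n : ℕ) (s : Finset ℕ) (hs : ∀ i ∈ s, 0 < i)
    (c : ℕ → Set ℕ) (hc : ∀ i, i ∉ s → 0 ∈ c i) :
    #{p : n.Partition | (∀ j, p.parts.count j ∈ c j) ∧ ∀ j ∈ p.parts, j ∈ s} =
      coeff n (∏ i ∈ s, indicatorSeries α ((· * i) '' c i)) := by
  simp_rw [coeff_prod, coeff_indicator, prod_boole, sum_boole]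
  apply congr_arg
  simp only [mem_univ, forall_true_left, not_and, not_forall, exists_prop,
    Set.mem_image, not_exists]
  set φ : (a : Nat.Partition n) →
    a ∈ filter (fun p ↦ (∀ (j : ℕ), Multiset.count j p.parts ∈ c j) ∧ ∀ j ∈ p.parts, j ∈ s) univ →
    ℕ →₀ ℕ := fun p _ => {
      toFun := fun i => Multiset.count i p.parts • i
      support := Finset.filter (fun i => i ≠ 0) p.parts.toFinset
      mem_support_toFun := fun a => by
        simp only [smul_eq_mul, ne_eq, mul_eq_zero, Multiset.count_eq_zero]
        rw [not_or, not_not]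
        simp only [Multiset.mem_toFinset, not_not, mem_filter] }
  refine Finset.card_bij φ ?_ ?_ ?_
  · intro a ha
    simp only [φ, not_forall, not_exists, not_and, exists_prop, mem_filter]
    rw [mem_finsuppAntidiag]
    dsimp only [ne_eq, smul_eq_mul, id_eq, eq_mpr_eq_cast, le_eq_subset, Finsupp.coe_mk]
    simp only [mem_univ, forall_true_left, not_and, not_forall, exists_prop,
      mem_filter, true_and] at ha
    refine ⟨⟨?_, fun i ↦ ?_⟩, fun i _ ↦ ⟨a.parts.count i, ha.1 i, rfl⟩⟩
    · conv_rhs => simp [← a.parts_sum]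
      rw [sum_multiset_count_of_subset _ s]
      · simp only [smul_eq_mul]
      · intro i
        simp only [Multiset.mem_toFinset, not_not, mem_filter]
        apply ha.2
    · simp only [ne_eq, Multiset.mem_toFinset, not_not, mem_filter, and_imp]
      exact fun hi _ ↦ ha.2 i hi
  · intro p₁ hp₁ p₂ hp₂ h
    apply Nat.Partition.ext
    simp only [true_and, mem_univ, mem_filter] at hp₁ hp₂
    ext i
    simp only [φ, ne_eq, Multiset.mem_toFinset, not_not, smul_eq_mul, Finsupp.mk.injEq] at h
    by_cases hi : i = 0
    · rw [hi]
      rw [Multiset.count_eq_zero_of_notMem]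
      · rw [Multiset.count_eq_zero_of_notMem]
        intro a; exact Nat.lt_irrefl 0 (hs 0 (hp₂.2 0 a))
      intro a; exact Nat.lt_irrefl 0 (hs 0 (hp₁.2 0 a))
    · rw [← mul_left_inj' hi]
      rw [funext_iff] at h
      exact h.2 i
  · simp only [φ, mem_filter, mem_finsuppAntidiag, mem_univ, exists_prop, true_and, and_assoc]
    rintro f ⟨hf, hf₃, hf₄⟩
    have hf' : f ∈ finsuppAntidiag s n := mem_finsuppAntidiag.mpr ⟨hf, hf₃⟩
    simp only [mem_finsuppAntidiag] at hf'
    refine ⟨⟨∑ i ∈ s, Multiset.replicate (f i / i) i, ?_, ?_⟩, ?_, ?_, ?_⟩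
    · intro i hi
      simp only [exists_prop, Multiset.mem_sum, mem_map, Function.Embedding.coeFn_mk] at hi
      rcases hi with ⟨t, ht, z⟩
      apply hs
      rwa [Multiset.eq_of_mem_replicate z]
    · simp_rw [Multiset.sum_sum, Multiset.sum_replicate, Nat.nsmul_eq_mul]
      rw [← hf'.1]
      refine sum_congr rfl fun i hi => Nat.div_mul_cancel ?_
      rcases hf₄ i hi with ⟨w, _, hw₂⟩
      rw [← hw₂]
      exact dvd_mul_left _ _
    · intro i
      simp_rw [Multiset.count_sum', Multiset.count_replicate, sum_ite_eq']
      split_ifs with h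
      · rcases hf₄ i h with ⟨w, hw₁, hw₂⟩
        rwa [← hw₂, Nat.mul_div_cancel _ (hs i h)]
      · exact hc _ h
    · intro i hi
      rw [Multiset.mem_sum] at hi
      rcases hi with ⟨j, hj₁, hj₂⟩
      rwa [Multiset.eq_of_mem_replicate hj₂]
    · ext i
      simp_rw [Multiset.count_sum', Multiset.count_replicate, sum_ite_eq']
      simp only [ne_eq, Multiset.mem_toFinset, not_not, smul_eq_mul, ite_mul,
        zero_mul, Finsupp.coe_mk]
      split_ifs with h
      · apply Nat.div_mul_cancel
        rcases hf₄ i h with ⟨w, _, hw₂⟩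
        apply Dvd.intro_left _ hw₂
      · apply symm
        rw [← Finsupp.notMem_support_iff]
        exact notMem_mono hf'.2 h


end Counting

end Stmt11Aux

namespace Stmt11Aux

open scoped Classical

/-- The allowed parts (≢ 2 mod 4) up to roughly `n`: odds `2j+1` and multiples of four `4j+4`. -/
def partsSet (n : ℕ) : Finset ℕ :=
  ((range (n+1)).map ⟨fun j => 2*j+1, fun a b h => by simp only at h; omega⟩) ∪
  ((range (n+1)).map ⟨fun j => 4*j+4, fun a b h => by simp only at h; omega⟩)

lemma mem_partsSet {n i : ℕ} :
    i ∈ partsSet n ↔ (∃ j, j ≤ n ∧ i = 2*j+1) ∨ (∃ j, j ≤ n ∧ i = 4*j+4) := by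
  simp only [partsSet, Finset.mem_union, Finset.mem_map, Finset.mem_range,
    Function.Embedding.coeFn_mk, Nat.lt_succ_iff]
  constructor
  · rintro (⟨j, hj, rfl⟩ | ⟨j, hj, rfl⟩)
    · exact Or.inl ⟨j, hj, rfl⟩
    · exact Or.inr ⟨j, hj, rfl⟩
  · rintro (⟨j, hj, rfl⟩ | ⟨j, hj, rfl⟩)
    · exact Or.inl ⟨j, hj, rfl⟩
    · exact Or.inr ⟨j, hj, rfl⟩

lemma partsSet_pos {n : ℕ} : ∀ i ∈ partsSet n, 0 < i := by
  intro i hi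
  rw [mem_partsSet] at hi
  rcases hi with ⟨j, _, rfl⟩ | ⟨j, _, rfl⟩ <;> omega

lemma partsSet_mod {n i : ℕ} (hi : i ∈ partsSet n) : i % 4 ≠ 2 := by
  rw [mem_partsSet] at hi
  rcases hi with ⟨j, _, rfl⟩ | ⟨j, _, rfl⟩ <;> omega

lemma mem_partsSet_of {n i : ℕ} (h1 : 0 < i) (h2 : i ≤ n) (h3 : i % 4 ≠ 2) :
    i ∈ partsSet n := by
  rw [mem_partsSet]
  rcases Nat.even_or_odd i with he | ho
  · right
    obtain ⟨t, rfl⟩ := he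
    exact ⟨(t + t) / 4 - 1, by omega, by omega⟩
  · left
    obtain ⟨t, rfl⟩ := ho
    exact ⟨t, by omega, by omega⟩

/-- The generating function for partitions into parts from `partsSet n`. -/
def Fprod (n : ℕ) : R :=
  ∏ i ∈ partsSet n, indicatorSeries (ZMod 2) ((· * i) '' (Set.univ : Set ℕ))

lemma image_univ_eq (i : ℕ) : ((· * i) '' (Set.univ : Set ℕ)) = {k | i ∣ k} := by
  ext k
  simp only [Set.image_univ, Set.mem_range, Set.mem_setOf_eq]
  constructor
  · rintro ⟨c, rfl⟩
    exact Dvd.intro_left c rfl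
  · rintro ⟨c, rfl⟩
    exact ⟨c, mul_comm c i⟩

lemma zmod2_add_self (a : ZMod 2) : a + a = 0 := by
  fin_cases a <;> decide

lemma ind_inv {i : ℕ} (hi : 0 < i) :
    (1 + X ^ i) * indicatorSeries (ZMod 2) {k | i ∣ k} = 1 := by
  ext p
  rw [add_mul, one_mul, map_add, PowerSeries.coeff_X_pow_mul', coeff_indicator,
    PowerSeries.coeff_one]
  simp only [Set.mem_setOf_eq]
  by_cases hp0 : p = 0
  · subst hp0
    rw [if_pos (dvd_zero i), if_neg (show ¬ i ≤ 0 by omega), if_pos rfl, add_zero]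
  · rw [if_neg hp0]
    by_cases hip : i ≤ p
    · rw [if_pos hip, coeff_indicator]
      simp only [Set.mem_setOf_eq]
      have hdvd : (i ∣ p) ↔ (i ∣ p - i) := by
        constructor
        · exact fun h => Nat.dvd_sub h dvd_rfl
        · intro h
          have := Nat.dvd_add h (dvd_refl i)
          rwa [Nat.sub_add_cancel hip] at this
      by_cases hd : i ∣ p
      · rw [if_pos hd, if_pos (hdvd.mp hd)]
        exact zmod2_add_self 1
      · rw [if_neg hd, if_neg (fun h => hd (hdvd.mpr h)), add_zero]
    · rw [if_neg hip, add_zero, if_neg (fun hd => hip (Nat.le_of_dvd (by omega) hd))]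

lemma prod_parts_eq (n : ℕ) :
    ∏ i ∈ partsSet n, (1 + X ^ i) = Oprod (n+1) * Qprod (n+1) := by
  rw [partsSet, Finset.prod_union, Finset.prod_map, Finset.prod_map]
  · rfl
  · rw [Finset.disjoint_left]
    rintro a ha hb
    simp only [Finset.mem_map, Finset.mem_range, Function.Embedding.coeFn_mk] at ha hb
    obtain ⟨j, _, rfl⟩ := ha
    obtain ⟨j', _, h⟩ := hb
    change 4 * j' + 4 = 2 * j + 1 at h
    omega

lemma C_mul_F (n : ℕ) : (Oprod (n+1) * Qprod (n+1)) * Fprod n = 1 := by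
  rw [← prod_parts_eq, Fprod, ← Finset.prod_mul_distrib]
  rw [Finset.prod_congr rfl (fun i hi => ?_), Finset.prod_const_one]
  rw [image_univ_eq, ind_inv (partsSet_pos i hi)]

lemma coeff_Fprod {n N : ℕ} (hN : N ≤ n) :
    ((P2 N : ℕ) : ZMod 2) = coeff N (Fprod n) := by
  have hcount := partialGF_prop (ZMod 2) N (partsSet n) partsSet_pos
    (fun _ => (Set.univ : Set ℕ)) (fun _ _ => Set.mem_univ 0)
  have hF : (∏ i ∈ partsSet n, indicatorSeries (ZMod 2) ((· * i) '' (Set.univ : Set ℕ)))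
      = Fprod n := rfl
  rw [hF] at hcount
  rw [← hcount]
  congr 1
  rw [P2, Nat.card_eq_fintype_card, Fintype.card_subtype]
  congr 1
  refine Finset.filter_congr fun p _ => ?_
  constructor
  · intro hp
    refine ⟨fun _ => Set.mem_univ _, fun j hj => ?_⟩
    have hjpos : 0 < j := p.parts_pos hj
    have hjle : j ≤ N := by
      have := Multiset.single_le_sum (fun a (_ : a ∈ p.parts) => Nat.zero_le a) j hj
      rwa [p.parts_sum] at this
    exact mem_partsSet_of hjpos (by omega) (hp j hj)
  · intro hp j hj
    exact partsSet_mod (hp.2 j hj)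

end Stmt11Aux

open Stmt11Aux Finset PowerSeries in
theorem stmt11 (n : ℕ) (hn : 0 < n) :
    Even (∑ᶠ k : ℕ, if k * (k + 1) / 2 ≤ n then P2 (n - k * (k + 1) / 2) else 0) := by
  classical
  have hsupp : (Function.support fun k => if k * (k+1) / 2 ≤ n then P2 (n - k * (k+1) / 2) else 0)
      ⊆ ↑(range (n+1)) := by
    intro k hk
    simp only [Function.mem_support] at hk
    by_contra hk'
    simp only [Finset.coe_range, Set.mem_Iio, not_lt] at hk'
    have h1 := tri_eq k
    have h2 := le_tri k
    rw [if_neg (by omega)] at hk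
    exact hk rfl
  rw [finsum_eq_sum_of_support_subset _ hsupp]
  rw [even_iff_two_dvd, ← ZMod.natCast_eq_zero_iff]
  have hcast : ((∑ k ∈ range (n+1), if k * (k+1) / 2 ≤ n then P2 (n - k * (k+1) / 2) else 0 : ℕ) :
      ZMod 2) = coeff n (Ttr n * Fprod n) := by
    rw [Ttr, Finset.sum_mul, map_sum, Nat.cast_sum]
    refine Finset.sum_congr rfl fun k hk => ?_
    rw [PowerSeries.coeff_X_pow_mul']
    have htk := tri_eq k
    by_cases hle : tri k ≤ n
    · rw [if_pos (show k * (k+1) / 2 ≤ n by omega), if_pos hle,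
        show n - k * (k+1) / 2 = n - tri k by omega]
      exact coeff_Fprod (by omega)
    · rw [if_neg (show ¬ (k * (k+1) / 2 ≤ n) by omega), if_neg hle]
      simp
  rw [hcast]
  have happrox : Apx n (Ttr n * Fprod n) 1 :=
    ((Ttr_apx n).mul_right).trans (Apx.of_eq (C_mul_F n))
  rw [happrox n (le_refl n), PowerSeries.coeff_one, if_neg (by omega)]
end
end
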